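/- arXiv:1811.06141 — 12 statements merged into one kernel-verified Lean document; each statement's English description precedes it below -/
import Mathlib

section
/- Let A, φ : ℝ → ℝ be twice continuously differentiable with φ'(0) = −(3/4) A(0)², and suppose that u(t,x) = t^{-1/4} A(t^{-1/2} x) e^{i φ(t^{-1/2} x)} satisfies i ∂_t u + ∂_x² u + i ∂_x(|u|² u) = 0 at every point (t,x) with t ≥ 1 and x ∈ ℝ. Then the amplitude equation A''(y) + (y²/16) A(y) = (y/4) A(y)³ − (3/16) A(y)⁵ holds for every y ∈ ℝ. -/
set_option maxHeartbeats 1000000 in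
/-- If `A, φ : ℝ → ℝ` are twice continuously differentiable with
`φ'(0) = −(3/4) A(0)²`, and `u(t,x) = t^{-1/4} A(t^{-1/2}x) e^{i φ(t^{-1/2}x)}` is a
classical solution of the derivative nonlinear Schrödinger equation for `t ≥ 1`, then
the amplitude equation `A''(y) + (y²/16) A(y) = (y/4) A(y)³ − (3/16) A(y)⁵` holds for
every `y`. -/
theorem stmt_3 (A φ : ℝ → ℝ) (hA : ContDiff ℝ 2 A) (hφ : ContDiff ℝ 2 φ)
    (hφ0 : deriv φ 0 = -(3 / 4) * A 0 ^ 2)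
    (u : ℝ → ℝ → ℂ)
    (hu : ∀ t x : ℝ, u t x =
      ((t ^ (-(1 / 4) : ℝ) : ℝ) : ℂ) * (A (t ^ (-(1 / 2) : ℝ) * x) : ℂ)
        * Complex.exp (Complex.I * (φ (t ^ (-(1 / 2) : ℝ) * x) : ℂ)))
    (hPDE : ∀ t : ℝ, 1 ≤ t → ∀ x : ℝ,
      Complex.I * deriv (fun s : ℝ => u s x) t
        + deriv (deriv (fun z : ℝ => u t z)) x
        + Complex.I * deriv (fun z : ℝ => ((‖u t z‖ ^ 2 : ℝ) : ℂ) * u t z) x = 0) :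
    ∀ y : ℝ, deriv (deriv A) y + y ^ 2 / 16 * A y = y / 4 * A y ^ 3 - 3 / 16 * A y ^ 5 := by
  -- basic differentiability
  have hA1 : Differentiable ℝ A := hA.differentiable two_ne_zero
  have hφ1 : Differentiable ℝ φ := hφ.differentiable two_ne_zero
  have hA2 : Differentiable ℝ (deriv A) := by
    have h := (contDiff_succ_iff_deriv (n := 1)).mp (by exact_mod_cast hA)
    exact h.2.2.differentiable one_ne_zero
  have hφ2 : Differentiable ℝ (deriv φ) := by
    have h := (contDiff_succ_iff_deriv (n := 1)).mp (by exact_mod_cast hφ)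
    exact h.2.2.differentiable one_ne_zero
  -- exp factor
  have hexpz : ∀ z : ℝ, HasDerivAt (fun w : ℝ => Complex.exp (Complex.I * (φ w : ℂ)))
      (Complex.I * ((deriv φ z : ℝ) : ℂ) * Complex.exp (Complex.I * (φ z : ℂ))) z := by
    intro z
    have := (((hφ1 z).hasDerivAt).ofReal_comp.const_mul Complex.I).cexp
    convert this using 1; ring
  -- first x-derivative of the profile
  have hder1 : ∀ z : ℝ, HasDerivAt (fun w : ℝ => (A w : ℂ) * Complex.exp (Complex.I * (φ w : ℂ)))
      ((((deriv A z : ℝ) : ℂ) + Complex.I * ((deriv φ z : ℝ) : ℂ) * ((A z : ℝ) : ℂ))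
        * Complex.exp (Complex.I * (φ z : ℂ))) z := by
    intro z
    have h1 : HasDerivAt (fun w : ℝ => ((A w : ℝ) : ℂ)) ((deriv A z : ℝ) : ℂ) z :=
      ((hA1 z).hasDerivAt).ofReal_comp
    have := h1.fun_mul (hexpz z)
    refine this.congr_deriv (Eq.symm ?_); ring
  -- u at time 1
  have hu1 : (fun z : ℝ => u 1 z) = fun z : ℝ => (A z : ℂ) * Complex.exp (Complex.I * (φ z : ℂ)) := by
    funext z; rw [hu]; simp [Real.one_rpow]
  -- main pointwise real/imaginary equations
  have main : ∀ y : ℝ,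
      (deriv (deriv A) y - (deriv φ y) ^ 2 * A y + y / 2 * deriv φ y * A y
        - deriv φ y * A y ^ 3 = 0) ∧
      (-(1/4) * A y - y / 2 * deriv A y + 2 * deriv φ y * deriv A y
        + deriv (deriv φ) y * A y + 3 * A y ^ 2 * deriv A y = 0) := by
    intro y
    have eq := hPDE 1 le_rfl y
    have e1 : ((1:ℝ) ^ (-(1/2) : ℝ)) * y = y := by rw [Real.one_rpow, one_mul]
    -- time derivative
    have hut : (fun s : ℝ => u s y) = fun s : ℝ =>
        ((s ^ (-(1 / 4) : ℝ) : ℝ) : ℂ) * (A (s ^ (-(1 / 2) : ℝ) * y) : ℂ)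
          * Complex.exp (Complex.I * (φ (s ^ (-(1 / 2) : ℝ) * y) : ℂ)) :=
      funext fun s => hu s y
    have hct : HasDerivAt (fun s : ℝ => s ^ (-(1/4) : ℝ)) (-(1/4)) 1 := by
      simpa using Real.hasDerivAt_rpow_const (x := 1) (p := -(1/4)) (Or.inl one_ne_zero)
    have hgt : HasDerivAt (fun s : ℝ => s ^ (-(1/2) : ℝ) * y) (-(1/2) * y) 1 := by
      simpa using (Real.hasDerivAt_rpow_const (x := 1) (p := -(1/2)) (Or.inl one_ne_zero)).mul_const y
    have hAt : HasDerivAt (fun s : ℝ => A (s ^ (-(1/2) : ℝ) * y)) (deriv A y * (-(1/2) * y)) 1 := by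
      have := HasDerivAt.comp (1:ℝ) ((hA1 _).hasDerivAt (x := ((1:ℝ) ^ (-(1/2) : ℝ)) * y)) hgt
      rw [e1] at this
      simpa [Function.comp_def] using this
    have hφt : HasDerivAt (fun s : ℝ => φ (s ^ (-(1/2) : ℝ) * y)) (deriv φ y * (-(1/2) * y)) 1 := by
      have := HasDerivAt.comp (1:ℝ) ((hφ1 _).hasDerivAt (x := ((1:ℝ) ^ (-(1/2) : ℝ)) * y)) hgt
      rw [e1] at this
      simpa [Function.comp_def] using this
    have hexpt : HasDerivAt (fun s : ℝ => Complex.exp (Complex.I * (φ (s ^ (-(1/2) : ℝ) * y) : ℂ)))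
        (Complex.I * ((deriv φ y * (-(1/2) * y) : ℝ) : ℂ) * Complex.exp (Complex.I * (φ y : ℂ))) 1 := by
      have := (hφt.ofReal_comp.const_mul Complex.I).cexp
      rw [show ((1:ℝ) ^ (-(1/2) : ℝ)) * y = y from e1] at this
      convert this using 1; ring
    have hTt : HasDerivAt (fun s : ℝ => ((s ^ (-(1 / 4) : ℝ) : ℝ) : ℂ)
          * (A (s ^ (-(1 / 2) : ℝ) * y) : ℂ)
          * Complex.exp (Complex.I * (φ (s ^ (-(1 / 2) : ℝ) * y) : ℂ)))
        ((((-(1/4) * A y + deriv A y * (-(1/2) * y) : ℝ) : ℂ)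
            + Complex.I * ((deriv φ y * (-(1/2) * y) * A y : ℝ) : ℂ))
          * Complex.exp (Complex.I * (φ y : ℂ))) 1 := by
      have := (hct.ofReal_comp.fun_mul hAt.ofReal_comp).fun_mul hexpt
      rw [e1] at this
      refine this.congr_deriv (Eq.symm ?_)
      push_cast
      simp [Real.one_rpow]
      ring
    -- second x-derivative
    have hD1 : deriv (fun z : ℝ => (A z : ℂ) * Complex.exp (Complex.I * (φ z : ℂ)))
        = fun z : ℝ => (((deriv A z : ℝ) : ℂ) + Complex.I * ((deriv φ z : ℝ) : ℂ) * ((A z : ℝ) : ℂ))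
            * Complex.exp (Complex.I * (φ z : ℂ)) := by
      funext z; exact (hder1 z).deriv
    have hder2 : HasDerivAt (fun z : ℝ =>
          (((deriv A z : ℝ) : ℂ) + Complex.I * ((deriv φ z : ℝ) : ℂ) * ((A z : ℝ) : ℂ))
            * Complex.exp (Complex.I * (φ z : ℂ)))
        ((((deriv (deriv A) y : ℝ) : ℂ)
            + Complex.I * ((deriv (deriv φ) y : ℝ) : ℂ) * ((A y : ℝ) : ℂ)
            + Complex.I * ((deriv φ y : ℝ) : ℂ) * ((deriv A y : ℝ) : ℂ)
            + (((deriv A y : ℝ) : ℂ) + Complex.I * ((deriv φ y : ℝ) : ℂ) * ((A y : ℝ) : ℂ))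
              * (Complex.I * ((deriv φ y : ℝ) : ℂ)))
          * Complex.exp (Complex.I * (φ y : ℂ))) y := by
      have h1 : HasDerivAt (fun w : ℝ => ((deriv A w : ℝ) : ℂ)) ((deriv (deriv A) y : ℝ) : ℂ) y :=
        ((hA2 y).hasDerivAt).ofReal_comp
      have h2 : HasDerivAt (fun w : ℝ => ((deriv φ w : ℝ) : ℂ)) ((deriv (deriv φ) y : ℝ) : ℂ) y :=
        ((hφ2 y).hasDerivAt).ofReal_comp
      have h3 : HasDerivAt (fun w : ℝ => ((A w : ℝ) : ℂ)) ((deriv A y : ℝ) : ℂ) y :=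
        ((hA1 y).hasDerivAt).ofReal_comp
      have h4 := (h1.fun_add ((h2.const_mul Complex.I).fun_mul h3)).fun_mul (hexpz y)
      refine h4.congr_deriv (Eq.symm ?_)
      ring
    -- nonlinear term
    have hNL : (fun z : ℝ => ((‖u 1 z‖ ^ 2 : ℝ) : ℂ) * u 1 z)
        = fun z : ℝ => ((A z : ℝ) : ℂ) ^ 3 * Complex.exp (Complex.I * (φ z : ℂ)) := by
      funext z
      rw [hu 1 z]
      have h : ‖((A z : ℝ) : ℂ) * Complex.exp (Complex.I * ((φ z : ℝ) : ℂ))‖ ^ 2 = A z ^ 2 := by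
        rw [norm_mul]
        simp [Complex.norm_exp, mul_pow, _root_.sq_abs]
      simp only [Real.one_rpow, Complex.ofReal_one, one_mul]
      rw [h]
      push_cast
      ring
    have hder3 : HasDerivAt (fun z : ℝ => ((A z : ℝ) : ℂ) ^ 3 * Complex.exp (Complex.I * (φ z : ℂ)))
        ((3 * ((A y : ℝ) : ℂ) ^ 2 * ((deriv A y : ℝ) : ℂ)
            + Complex.I * ((deriv φ y : ℝ) : ℂ) * ((A y : ℝ) : ℂ) ^ 3)
          * Complex.exp (Complex.I * (φ y : ℂ))) y := by
      have h3 : HasDerivAt (fun w : ℝ => ((A w : ℝ) : ℂ)) ((deriv A y : ℝ) : ℂ) y :=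
        ((hA1 y).hasDerivAt).ofReal_comp
      have hp3 : HasDerivAt (fun w : ℝ => ((A w : ℝ) : ℂ) ^ 3)
          (3 * ((A y : ℝ) : ℂ) ^ 2 * ((deriv A y : ℝ) : ℂ)) y := by
        have h6 := (h3.fun_mul h3).fun_mul h3
        have h7 : (fun w : ℝ => ((A w : ℝ) : ℂ) * ((A w : ℝ) : ℂ) * ((A w : ℝ) : ℂ))
            = fun w : ℝ => ((A w : ℝ) : ℂ) ^ 3 := by
          funext w; ring
        rw [h7] at h6
        refine h6.congr_deriv (Eq.symm ?_)
        ring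
      have h5 := hp3.fun_mul (hexpz y)
      refine h5.congr_deriv (Eq.symm ?_)
      push_cast
      ring
    rw [hut, hu1, hNL, hTt.deriv, hD1, hder2.deriv, hder3.deriv] at eq
    -- factor out the exponential
    set E : ℂ := Complex.exp (Complex.I * (φ y : ℂ)) with hE
    have hEne : E ≠ 0 := Complex.exp_ne_zero _
    have hC : ((((deriv (deriv A) y - (deriv φ y) ^ 2 * A y + y / 2 * deriv φ y * A y
            - deriv φ y * A y ^ 3 : ℝ)) : ℂ)
          + (((-(1/4) * A y - y / 2 * deriv A y + 2 * deriv φ y * deriv A y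
            + deriv (deriv φ) y * A y + 3 * A y ^ 2 * deriv A y : ℝ)) : ℂ) * Complex.I) * E = 0 := by
      rw [← eq]
      push_cast
      linear_combination (((deriv φ y : ℝ) : ℂ) * ((A y : ℝ) : ℂ) * (y : ℂ) * E / 2
        - ((deriv φ y : ℝ) : ℂ) * ((A y : ℝ) : ℂ) ^ 3 * E
        - ((deriv φ y : ℝ) : ℂ) ^ 2 * ((A y : ℝ) : ℂ) * E) * Complex.I_sq
    have hC0 := (mul_eq_zero.mp hC).resolve_right hEne
    constructor
    · have := congrArg Complex.re hC0
      simpa [← Complex.ofReal_pow] using this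
    · have := congrArg Complex.im hC0
      simpa [← Complex.ofReal_pow] using this
  -- the conserved quantity
  have hGd : ∀ x : ℝ, HasDerivAt (fun w : ℝ => deriv φ w * A w ^ 2 - w / 4 * A w ^ 2 + 3 / 4 * A w ^ 4)
      0 x := by
    intro x
    have h1 : HasDerivAt (fun w : ℝ => deriv φ w * A w ^ 2)
        (deriv (deriv φ) x * A x ^ 2 + deriv φ x * (2 * A x ^ 1 * deriv A x)) x :=
      ((hφ2 x).hasDerivAt).fun_mul (((hA1 x).hasDerivAt).fun_pow 2)
    have h2 : HasDerivAt (fun w : ℝ => w / 4 * A w ^ 2)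
        (1 / 4 * A x ^ 2 + x / 4 * (2 * A x ^ 1 * deriv A x)) x :=
      ((hasDerivAt_id x).div_const 4).fun_mul (((hA1 x).hasDerivAt).fun_pow 2)
    have h3 : HasDerivAt (fun w : ℝ => 3 / 4 * A w ^ 4)
        (3 / 4 * (4 * A x ^ 3 * deriv A x)) x :=
      (((hA1 x).hasDerivAt).fun_pow 4).const_mul (3/4)
    have h := (h1.sub h2).add h3
    have hB := (main x).2
    refine h.congr_deriv (Eq.symm ?_)
    linear_combination (-(A x)) * hB
  have hGzero : ∀ y : ℝ, deriv φ y * A y ^ 2 - y / 4 * A y ^ 2 + 3 / 4 * A y ^ 4 = 0 := by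
    intro y
    have hc := is_const_of_deriv_eq_zero (f := fun w : ℝ =>
        deriv φ w * A w ^ 2 - w / 4 * A w ^ 2 + 3 / 4 * A w ^ 4)
      (fun x => (hGd x).differentiableAt) (fun x => (hGd x).deriv) y 0
    rw [hc, hφ0]
    ring
  -- conclude
  intro y
  have hR := (main y).1
  by_cases ha : A y = 0
  · rw [ha] at hR ⊢
    linear_combination hR
  · have hp : deriv φ y = y / 4 - 3 / 4 * A y ^ 2 := by
      have h := hGzero y
      have ha2 : A y ^ 2 ≠ 0 := pow_ne_zero 2 ha
      have h2 : (deriv φ y - (y / 4 - 3 / 4 * A y ^ 2)) * A y ^ 2 = 0 := by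
        linear_combination h
      rcases mul_eq_zero.mp h2 with h3 | h3
      · linarith
      · exact absurd h3 ha2
    rw [hp] at hR
    linear_combination hR
end

section
/- Let A : ℝ → ℝ be twice continuously differentiable and satisfy A''(y) + (y²/16) A(y) = (y/4) A(y)³ − (3/16) A(y)⁵ for all y ∈ ℝ. Fix φ₀ ∈ ℝ and define φ(y) = φ₀ + y²/8 − (3/4) ∫₀^y A(s)² ds and Q(y) = A(y) e^{i φ(y)}. Then Q is twice continuously differentiable and satisfies Q''(y) − (i/4) Q(y) − (i/2) y Q'(y) + i (d/dy)(|Q(y)|² Q(y)) = 0 for every y ∈ ℝ. -/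
/-!
Write `Q = A e^{iφ}` and `θ = φ' = y/4 - (3/4) A²`. Then `Q' = (A' + iθA) e^{iφ}`, and
`|Q| = |A|` turns the nonlinearity into `A³ e^{iφ}`. After dividing the profile equation by
`e^{iφ}`, the imaginary part `θ'A + 2θA' - A/4 - (y/2)A' + 3A²A'` vanishes identically since
`θ' = 1/4 - (3/2) A A'`, and the real part `A'' - θ²A + (y/2)θA - θA³` equals
`A'' + (y²/16) A - (y/4) A³ + (3/16) A⁵`, which vanishes by the amplitude equation.
-/

open Complex

theorem HasDerivAt.mul_cexp_I_mul {a : ℝ → ℂ} {θ : ℝ → ℝ} {a' : ℂ} {θ' y : ℝ}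
    (ha : HasDerivAt a a' y) (hθ : HasDerivAt θ θ' y) :
    HasDerivAt (fun u => a u * Complex.exp (I * (θ u : ℂ)))
      ((a' + I * (θ' : ℂ) * a y) * Complex.exp (I * (θ y : ℂ))) y :=
  (ha.mul (hθ.ofReal_comp.const_mul I).cexp).congr_deriv (by ring)

theorem norm_ofReal_mul_cexp_I_mul (a θ : ℝ) : ‖(a : ℂ) * exp (I * θ)‖ = |a| := by
  rw [norm_mul, norm_exp_I_mul_ofReal, mul_one, norm_real, Real.norm_eq_abs]

theorem contDiff_two_of_hasDerivAt {F : Type*} [NormedAddCommGroup F] [NormedSpace ℝ F]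
    {f g : ℝ → F} (hf : ∀ y, HasDerivAt f (g y) y) (hg : ContDiff ℝ 1 g) :
    ContDiff ℝ 2 f := by
  have hderiv : deriv f = g := funext fun y => (hf y).deriv
  rw [show (2 : WithTop ℕ∞) = 1 + 1 from rfl, contDiff_succ_iff_deriv, hderiv]
  exact ⟨fun y => (hf y).differentiableAt, by simp, hg⟩

theorem hasDerivAt_phase {A : ℝ → ℝ} (hA : Continuous A) (φ₀ y : ℝ) :
    HasDerivAt (fun y => φ₀ + y ^ 2 / 8 - 3 / 4 * ∫ s in (0 : ℝ)..y, A s ^ 2)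
      (y / 4 - 3 / 4 * A y ^ 2) y := by
  have hquad : HasDerivAt (fun y : ℝ => φ₀ + y ^ 2 / 8) (y / 4) y := by
    refine (((hasDerivAt_pow 2 y).div_const 8).const_add φ₀).congr_deriv ?_
    push_cast; ring
  exact hquad.sub (((hA.pow 2).integral_hasStrictDerivAt 0 y).hasDerivAt.const_mul _)

theorem profile_identity {a a' a'' y θ : ℂ} (E : ℂ) (hθ : θ = y / 4 - 3 / 4 * a ^ 2)
    (hODE : a'' + y ^ 2 / 16 * a = y / 4 * a ^ 3 - 3 / 16 * a ^ 5) :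
    (a'' + I * ((1 / 4 - 3 / 2 * a * a') * a + θ * a') + I * θ * (a' + I * θ * a)) * E
      - I / 4 * (a * E) - I / 2 * y * ((a' + I * θ * a) * E)
      + I * ((3 * a ^ 2 * a' + I * θ * a ^ 3) * E) = 0 := by
  subst hθ
  linear_combination E * hODE
    + E * a * (y / 4 - 3 / 4 * a ^ 2) * (y / 4 - 3 / 4 * a ^ 2 - y / 2 + a ^ 2) * I_sq

section AmplitudePhase

variable {A φ : ℝ → ℝ} (hA : ContDiff ℝ 2 A)
  (hφ : ∀ y, HasDerivAt φ (y / 4 - 3 / 4 * A y ^ 2) y)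
include hA hφ

theorem hasDerivAt_amplitude_phase (y : ℝ) :
    HasDerivAt (fun u => (A u : ℂ) * exp (I * (φ u : ℂ)))
      ((deriv A y + I * ((y / 4 - 3 / 4 * A y ^ 2 : ℝ) : ℂ) * A y)
        * exp (I * (φ y : ℂ))) y :=
  HasDerivAt.mul_cexp_I_mul (hA.differentiable two_ne_zero y).hasDerivAt.ofReal_comp (hφ y)

theorem hasDerivAt_deriv_amplitude_phase (y : ℝ) :
    HasDerivAt (deriv fun u => (A u : ℂ) * exp (I * (φ u : ℂ)))
      ((deriv (deriv A) y + I * ((1 / 4 - 3 / 2 * A y * deriv A y : ℝ) : ℂ) * A y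
          + I * ((y / 4 - 3 / 4 * A y ^ 2 : ℝ) : ℂ) * deriv A y
          + I * ((y / 4 - 3 / 4 * A y ^ 2 : ℝ) : ℂ)
            * (deriv A y + I * ((y / 4 - 3 / 4 * A y ^ 2 : ℝ) : ℂ) * A y))
        * exp (I * (φ y : ℂ))) y := by
  have hA' : HasDerivAt A (deriv A y) y := (hA.differentiable two_ne_zero y).hasDerivAt
  have hA'' : HasDerivAt (deriv A) (deriv (deriv A) y) y :=
    ((ContDiff.deriv' (n := 1) hA).differentiable one_ne_zero y).hasDerivAt
  have hθ : HasDerivAt (fun u : ℝ => u / 4 - 3 / 4 * A u ^ 2)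
      (1 / 4 - 3 / 2 * A y * deriv A y) y :=
    (((hasDerivAt_id y).div_const 4).sub ((hA'.pow 2).const_mul (3 / 4))).congr_deriv
      (by push_cast; ring)
  have hamplitude : HasDerivAt
      (fun u => ((deriv A u : ℝ) : ℂ) + I * ((u / 4 - 3 / 4 * A u ^ 2 : ℝ) : ℂ) * A u)
      (deriv (deriv A) y + (I * ((1 / 4 - 3 / 2 * A y * deriv A y : ℝ) : ℂ) * A y
        + I * ((y / 4 - 3 / 4 * A y ^ 2 : ℝ) : ℂ) * deriv A y)) y :=
    hA''.ofReal_comp.add ((hθ.ofReal_comp.const_mul I).mul hA'.ofReal_comp)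
  rw [funext fun u => (hasDerivAt_amplitude_phase hA hφ u).deriv]
  exact (HasDerivAt.mul_cexp_I_mul hamplitude (hφ y)).congr_deriv (by ring)

theorem hasDerivAt_cubic_amplitude_phase (y : ℝ) :
    HasDerivAt (fun u => ((‖(A u : ℂ) * exp (I * (φ u : ℂ))‖ ^ 2 : ℝ) : ℂ)
        * ((A u : ℂ) * exp (I * (φ u : ℂ))))
      ((3 * A y ^ 2 * deriv A y + I * ((y / 4 - 3 / 4 * A y ^ 2 : ℝ) : ℂ) * A y ^ 3)
        * exp (I * (φ y : ℂ))) y := by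
  have hcube : (fun u => ((‖(A u : ℂ) * exp (I * (φ u : ℂ))‖ ^ 2 : ℝ) : ℂ)
      * ((A u : ℂ) * exp (I * (φ u : ℂ))))
      = fun u => ((A u ^ 3 : ℝ) : ℂ) * exp (I * (φ u : ℂ)) := by
    funext u
    rw [norm_ofReal_mul_cexp_I_mul, sq_abs]
    push_cast; ring
  have hA' : HasDerivAt A (deriv A y) y := (hA.differentiable two_ne_zero y).hasDerivAt
  rw [hcube]
  exact (HasDerivAt.mul_cexp_I_mul (hA'.pow 3).ofReal_comp (hφ y)).congr_deriv
    (by simp only [Pi.pow_apply]; push_cast; ring)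

end AmplitudePhase

/-- If `A : ℝ → ℝ` is twice continuously differentiable and solves the
amplitude equation `A'' + (y²/16) A = (y/4) A³ − (3/16) A⁵`, and
`φ(y) = φ₀ + y²/8 − (3/4) ∫₀^y A(s)² ds`, `Q(y) = A(y) e^{i φ(y)}`, then `Q` is twice
continuously differentiable and satisfies the profile equation
`Q'' − (i/4) Q − (i/2) y Q' + i (|Q|² Q)' = 0` on `ℝ`. -/
theorem stmt_4 (A : ℝ → ℝ) (hA : ContDiff ℝ 2 A)
    (hODE : ∀ y : ℝ,
      deriv (deriv A) y + y ^ 2 / 16 * A y = y / 4 * A y ^ 3 - 3 / 16 * A y ^ 5)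
    (φ₀ : ℝ) (φ : ℝ → ℝ) (Q : ℝ → ℂ)
    (hφ : ∀ y : ℝ, φ y = φ₀ + y ^ 2 / 8 - 3 / 4 * ∫ s in (0 : ℝ)..y, A s ^ 2)
    (hQ : ∀ y : ℝ, Q y = (A y : ℂ) * Complex.exp (Complex.I * (φ y : ℂ))) :
    ContDiff ℝ 2 Q ∧
    ∀ y : ℝ,
      deriv (deriv Q) y - (Complex.I / 4) * Q y - (Complex.I / 2) * (y : ℂ) * deriv Q y
        + Complex.I * deriv (fun z : ℝ => ((‖Q z‖ ^ 2 : ℝ) : ℂ) * Q z) y = 0 := by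
  have hφ' : ∀ y, HasDerivAt φ (y / 4 - 3 / 4 * A y ^ 2) y := by
    rw [funext hφ]
    exact hasDerivAt_phase hA.continuous φ₀
  have hφC2 : ContDiff ℝ 2 φ := contDiff_two_of_hasDerivAt hφ'
    ((contDiff_id.div_const 4).sub (contDiff_const.mul ((hA.of_le one_le_two).pow 2)))
  obtain rfl : Q = fun u => (A u : ℂ) * exp (I * (φ u : ℂ)) := funext hQ
  refine ⟨(ofRealCLM.contDiff.comp hA).mul
    (contDiff_const.mul (ofRealCLM.contDiff.comp hφC2)).cexp, fun y => ?_⟩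
  rw [(hasDerivAt_deriv_amplitude_phase hA hφ' y).deriv,
    (hasDerivAt_amplitude_phase hA hφ' y).deriv,
    (hasDerivAt_cubic_amplitude_phase hA hφ' y).deriv]
  have hODE' : ((deriv (deriv A) y : ℝ) : ℂ) + (y : ℂ) ^ 2 / 16 * A y
      = y / 4 * (A y : ℂ) ^ 3 - 3 / 16 * (A y : ℂ) ^ 5 := by
    simpa using congrArg ofReal (hODE y)
  push_cast
  linear_combination profile_identity (exp (I * (φ y : ℂ))) rfl hODE'
end

section
/- Let K be a natural number and let V₀, V₁, …, V_K : [0,∞) → ℝ be nonnegative nondecreasing functions. Assume there exists x₀ > 0 with V₀(x₀) > 0. Let f : [0,∞) → ℝ be twice continuously differentiable with f(0) > 0, f'(0) = 0, and f''(x) = −(∑_{k=0}^K V_k(x) f(x)^{2k}) · f(x) for all x ≥ 0. Then, setting m₀ = 0, there exist strictly increasing sequences (m_j)_{j≥1} and (n_j)_{j≥1} of positive reals, both tending to ∞, such that for every j ≥ 1: m_{j−1} < n_j < m_j, m_j is a local maximum point of x ↦ f(x)², n_j is a local maximum point of x ↦ f'(x)², and the inequalities ∑_{k=0}^K (V_k(n_j)/(k+1))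 f(m_j)^{2(k+1)} ≤ f'(n_j)² ≤ ∑_{k=0}^K (V_k(n_j)/(k+1)) f(m_{j−1})^{2(k+1)} and ∑_{k=0}^K (V_k(m_j)/(k+1)) f(m_j)^{2(k+1)} ≥ f'(n_j)² ≥ ∑_{k=0}^K (V_k(m_{j−1})/(k+1)) f(m_{j−1})^{2(k+1)} hold. -/
open Filter Set Real Topology

/-!
Along the solution, `f'' = -q f` with `q(x) = V(x, f(x)²) ≥ 0` and `q ≥ V₀(x₀) > 0` beyond `x₀`.
Comparison with `sin (√c (x - a))` shows that `f` has zeros arbitrarily far out, and the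
growth of `(f² + f'²) e^{Cx}` shows that `f` has no double zero. Between a critical point `m`
and the next zero `z` of `f` the product `f f'` is `≤ 0`, and between `z` and the next critical
point `m'` it is `≥ 0`; this makes `z` a local maximum of `f'²` and `m'` one of `f²`. The energy
`E_a = f'² + ∑ V_k(a) f^{2(k+1)}/(k+1)` with coefficients frozen at `a` has derivative
`2 f f' (V(a, f²) - V(x, f²))`, whose sign on `[m, z]` and `[z, m']` for `a` an endpoint gives
the four inequalities. Iterating yields the sequences, which cannot converge to a finite `L`:
`L` would be a double zero.
-/

theorem monotoneOn_Icc_of_hasDerivAt {g g' : ℝ → ℝ} {p r : ℝ}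
    (hg : ∀ x ∈ Icc p r, HasDerivAt g (g' x) x) (hg' : ∀ x ∈ Ioo p r, 0 ≤ g' x) :
    MonotoneOn g (Icc p r) :=
  monotoneOn_of_hasDerivWithinAt_nonneg (convex_Icc p r)
    (fun x hx => (hg x hx).continuousAt.continuousWithinAt)
    (fun x hx => by
      rw [interior_Icc] at hx ⊢; exact (hg x (Ioo_subset_Icc_self hx)).hasDerivWithinAt)
    (by rwa [interior_Icc])

theorem antitoneOn_Icc_of_hasDerivAt {g g' : ℝ → ℝ} {p r : ℝ}
    (hg : ∀ x ∈ Icc p r, HasDerivAt g (g' x) x) (hg' : ∀ x ∈ Ioo p r, g' x ≤ 0) :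
    AntitoneOn g (Icc p r) :=
  antitoneOn_of_hasDerivWithinAt_nonpos (convex_Icc p r)
    (fun x hx => (hg x hx).continuousAt.continuousWithinAt)
    (fun x hx => by
      rw [interior_Icc] at hx ⊢; exact (hg x (Ioo_subset_Icc_self hx)).hasDerivWithinAt)
    (by rwa [interior_Icc])

theorem strictAntiOn_Icc_of_hasDerivAt {g g' : ℝ → ℝ} {p r : ℝ}
    (hg : ∀ x ∈ Icc p r, HasDerivAt g (g' x) x) (hg' : ∀ x ∈ Ioo p r, g' x < 0) :
    StrictAntiOn g (Icc p r) :=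
  strictAntiOn_of_hasDerivWithinAt_neg (convex_Icc p r)
    (fun x hx => (hg x hx).continuousAt.continuousWithinAt)
    (fun x hx => by
      rw [interior_Icc] at hx ⊢; exact (hg x (Ioo_subset_Icc_self hx)).hasDerivWithinAt)
    (by rwa [interior_Icc])

theorem exists_first_zero {g : ℝ → ℝ} (hg : Continuous g) {a b : ℝ} (hab : a ≤ b)
    (ha : 0 < g a) (hb : g b ≤ 0) :
    ∃ z ∈ Ioc a b, g z = 0 ∧ ∀ x ∈ Ico a z, 0 < g x := by
  have hzeros : IsCompact {x ∈ Icc a b | g x = 0} :=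
    isCompact_Icc.inter_right (isClosed_eq hg continuous_const)
  have hne : {x ∈ Icc a b | g x = 0}.Nonempty := by
    obtain ⟨z, hz, hgz⟩ := intermediate_value_Icc' hab hg.continuousOn ⟨hb, ha.le⟩
    exact ⟨z, hz, hgz⟩
  obtain ⟨z, ⟨hz, hgz⟩, hleast⟩ := hzeros.exists_isLeast hne
  have haz : a < z := hz.1.lt_of_ne (by rintro rfl; exact ha.ne' hgz)
  refine ⟨z, ⟨haz, hz.2⟩, hgz, fun x hx => ?_⟩
  by_contra! hgx
  obtain ⟨y, hy, hgy⟩ := intermediate_value_Icc' hx.1 hg.continuousOn ⟨hgx, ha.le⟩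
  have := hleast ⟨⟨hy.1, hy.2.trans (hx.2.le.trans hz.2)⟩, hgy⟩
  exact absurd (this.trans hy.2) (not_le.2 hx.2)

theorem exists_deriv_eq_zero_mul_deriv_nonneg {f : ℝ → ℝ} (hf : Differentiable ℝ f)
    (hf' : Continuous (deriv f)) (hosc : ∃ᶠ x in atTop, f x = 0) {z : ℝ} (hfz : f z = 0)
    (hf'z : deriv f z ≠ 0) :
    ∃ m > z, deriv f m = 0 ∧ f m ≠ 0 ∧ ∀ x ∈ Icc z m, 0 ≤ f x * deriv f x := by
  wlog hneg : deriv f z < 0 generalizing f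
  · have hf'neg : deriv (-f) = -deriv f := deriv.neg'
    obtain ⟨m, hm, hf'm, hfm, hff'⟩ := this hf.neg (hf'neg ▸ hf'.neg)
      (hosc.mono fun x hx => by simp [hx]) (by simp [hfz]) (by simpa [hf'neg] using hf'z)
      (by simpa [hf'neg] using lt_of_le_of_ne (not_lt.1 hneg) hf'z.symm)
    refine ⟨m, hm, by simpa [hf'neg] using hf'm, by simpa using hfm, fun x hx => ?_⟩
    simpa [hf'neg] using hff' x hx
  have hanti : ∀ w, (∀ x ∈ Ioo z w, deriv f x < 0) → StrictAntiOn f (Icc z w) :=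
    fun w h => strictAntiOn_Icc_of_hasDerivAt (fun x _ => (hf x).hasDerivAt) h
  obtain ⟨w, hw, hf'w⟩ : ∃ w > z, 0 ≤ deriv f w := by
    by_contra! h
    obtain ⟨ζ, hζ, hfζ⟩ := frequently_atTop'.1 hosc z
    have := hanti ζ (fun x hx => h x hx.1) (left_mem_Icc.2 hζ.le) (right_mem_Icc.2 hζ.le) hζ
    rw [hfz, hfζ] at this
    exact lt_irrefl _ this
  obtain ⟨m, hm, hf'm, hf'neg⟩ := exists_first_zero hf'.neg hw.le (neg_pos.2 hneg)
    (neg_nonpos.2 hf'w)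
  have hf'm : deriv f m = 0 := neg_eq_zero.1 hf'm
  have hanti_m := hanti m fun x hx => neg_pos.1 (hf'neg x (Ioo_subset_Ico_self hx))
  refine ⟨m, hm.1, hf'm, ?_, fun x hx => mul_nonneg_of_nonpos_of_nonpos ?_ ?_⟩
  · exact (hfz ▸ hanti_m (left_mem_Icc.2 hm.1.le) (right_mem_Icc.2 hm.1.le) hm.1).ne
  · exact hfz ▸ hanti_m.antitoneOn (left_mem_Icc.2 hm.1.le) hx hx.1
  · rcases hx.2.eq_or_lt with rfl | hxm
    · exact hf'm.le
    · exact (neg_pos.1 (hf'neg x ⟨hx.1, hxm⟩)).le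

theorem isLocalMax_sq_of_mul_deriv {f : ℝ → ℝ} (hf : Differentiable ℝ f) {p x r : ℝ}
    (hpx : p < x) (hxr : x < r) (hl : ∀ y ∈ Ioo p x, 0 ≤ f y * deriv f y)
    (hr : ∀ y ∈ Ioo x r, f y * deriv f y ≤ 0) :
    IsLocalMax (fun y => f y ^ 2) x := by
  have hd : ∀ y, deriv (fun y => f y ^ 2) y = 2 * (f y * deriv f y) := fun y => by
    rw [((hf y).hasDerivAt.fun_pow 2).deriv]; ring
  have hdiff : Differentiable ℝ fun y => f y ^ 2 := hf.pow 2
  refine isLocalMax_of_deriv_Ioo hpx hxr hdiff.continuous.continuousAt hdiff.differentiableOn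
    hdiff.differentiableOn (fun y hy => ?_) (fun y hy => ?_) <;> rw [hd]
  · linarith [hl y hy]
  · linarith [hr y hy]

theorem exists_seq_of_forall_exists {α : Type*} {S : α → Prop} {R : α → α → α → Prop} {a₀ : α}
    (h₀ : S a₀) (h : ∀ a, S a → ∃ b c, S c ∧ R a b c) :
    ∃ m n : ℕ → α, m 0 = a₀ ∧ ∀ j, S (m j) ∧ R (m j) (n (j + 1)) (m (j + 1)) := by
  choose b c hc hR using fun a : {a // S a} => h a.1 a.2
  let next : {a // S a} → {a // S a} := fun a => ⟨c a, hc a⟩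
  refine ⟨fun j => (next^[j] ⟨a₀, h₀⟩).1, fun j => b (next^[j - 1] ⟨a₀, h₀⟩), rfl,
    fun j => ⟨(next^[j] ⟨a₀, h₀⟩).2, ?_⟩⟩
  simp only [Nat.add_sub_cancel, Function.iterate_succ_apply']
  exact hR _

structure IsSturmSolution (q f : ℝ → ℝ) : Prop where
  differentiable : Differentiable ℝ f
  differentiable_deriv : Differentiable ℝ (deriv f)
  nonneg : ∀ x, 0 ≤ x → 0 ≤ q x
  deriv_deriv : ∀ x, 0 ≤ x → deriv (deriv f) x = -q x * f x

namespace IsSturmSolution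

variable {q f : ℝ → ℝ}

theorem continuous (hs : IsSturmSolution q f) : Continuous f :=
  hs.differentiable.continuous

theorem continuous_deriv (hs : IsSturmSolution q f) : Continuous (deriv f) :=
  hs.differentiable_deriv.continuous

theorem hasDerivAt_deriv (hs : IsSturmSolution q f) {x : ℝ} (hx : 0 ≤ x) :
    HasDerivAt (deriv f) (-q x * f x) x :=
  hs.deriv_deriv x hx ▸ (hs.differentiable_deriv x).hasDerivAt

theorem neg (hs : IsSturmSolution q f) : IsSturmSolution q (-f) where
  differentiable := hs.differentiable.neg
  differentiable_deriv := by rw [deriv.neg']; exact hs.differentiable_deriv.neg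
  nonneg := hs.nonneg
  deriv_deriv x hx := by
    rw [deriv.neg', deriv.fun_neg, hs.deriv_deriv x hx, Pi.neg_apply]; ring

theorem eq_zero_of_eq_zero_of_deriv_eq_zero (hs : IsSturmSolution q f) {p r : ℝ} (hp : 0 ≤ p)
    (hpr : p ≤ r) (hq : BddAbove (q '' Icc p r)) (hfr : f r = 0) (hf'r : deriv f r = 0) :
    f p = 0 := by
  obtain ⟨B, hB⟩ := hq
  -- `(f² + f'²)' = 2 f f' (1 - q) ≥ -(1 + B) (f² + f'²)`, written as a sum of nonnegative terms
  have hE : ∀ x ∈ Icc p r, HasDerivAt (fun y => (f y ^ 2 + deriv f y ^ 2) * exp ((1 + B) * y))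
      (((f x + deriv f x) ^ 2 + q x * (f x - deriv f x) ^ 2
        + (B - q x) * (f x ^ 2 + deriv f x ^ 2)) * exp ((1 + B) * x)) x := by
    intro x hx
    have := (((hs.differentiable x).hasDerivAt.fun_pow 2).fun_add
      ((hs.hasDerivAt_deriv (hp.trans hx.1)).fun_pow 2)).fun_mul
      (((hasDerivAt_id x).const_mul (1 + B)).exp)
    refine this.congr_deriv ?_
    simp only [id]
    ring
  have hmono := monotoneOn_Icc_of_hasDerivAt hE fun x hx => by
    have hqx := hs.nonneg x (hp.trans hx.1.le)
    have hqB : q x ≤ B := hB ⟨x, Ioo_subset_Icc_self hx, rfl⟩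
    have := sub_nonneg.2 hqB
    positivity
  have hend := hmono (left_mem_Icc.2 hpr) (right_mem_Icc.2 hpr) hpr
  have hp0 : (f p ^ 2 + deriv f p ^ 2) * exp ((1 + B) * p) ≤ 0 := by simpa [hfr, hf'r] using hend
  have hsum := nonpos_of_mul_nonpos_left hp0 (exp_pos _)
  exact pow_eq_zero_iff two_ne_zero |>.1 (le_antisymm (by nlinarith [sq_nonneg (deriv f p)])
    (sq_nonneg _))

theorem deriv_ne_zero_of_eq_zero (hs : IsSturmSolution q f) (hf0 : f 0 ≠ 0)
    (hq : ∀ r, BddAbove (q '' Icc 0 r)) {z : ℝ} (hz : 0 ≤ z) (hfz : f z = 0) :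
    deriv f z ≠ 0 :=
  fun hf'z => hf0 (hs.eq_zero_of_eq_zero_of_deriv_eq_zero le_rfl hz (hq z) hfz hf'z)

theorem exists_nonpos_mem_Icc (hs : IsSturmSolution q f) {a c : ℝ} (ha : 0 ≤ a) (hc : 0 < c)
    (hq : ∀ x ∈ Icc a (a + π / √c), c ≤ q x) : ∃ x ∈ Icc a (a + π / √c), f x ≤ 0 := by
  have haL : a ≤ a + π / √c := le_add_of_nonneg_right (by positivity)
  by_contra! hpos
  -- the Wronskian of `f` and `sin (√c (x - a))`, a solution of `y'' + c y = 0`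
  set s := √c with hs_def
  have hs0 : 0 < s := sqrt_pos.2 hc
  set u : ℝ → ℝ := fun x => s * f x * cos (s * (x - a)) - deriv f x * sin (s * (x - a))
  have hu : ∀ x ∈ Icc a (a + π / s),
      HasDerivAt u ((q x - c) * f x * sin (s * (x - a))) x := by
    intro x hx
    have hθ : HasDerivAt (fun y => s * (y - a)) s x := by
      simpa using ((hasDerivAt_id x).sub_const a).const_mul s
    have := (((hs.differentiable x).hasDerivAt.const_mul s).fun_mul hθ.cos).fun_sub
      ((hs.hasDerivAt_deriv (ha.trans hx.1)).fun_mul hθ.sin)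
    refine this.congr_deriv ?_
    rw [← mul_self_sqrt hc.le, ← hs_def]
    ring
  have hmono := monotoneOn_Icc_of_hasDerivAt hu fun x hx => by
    have hsin : 0 ≤ sin (s * (x - a)) := by
      refine sin_nonneg_of_nonneg_of_le_pi (by nlinarith [hx.1]) ?_
      calc s * (x - a) ≤ s * (π / s) := by gcongr; linarith [hx.2]
        _ = π := by field_simp
    exact mul_nonneg (mul_nonneg (sub_nonneg.2 (hq x (Ioo_subset_Icc_self hx)))
      (hpos x (Ioo_subset_Icc_self hx)).le) hsin
  have hend := hmono (left_mem_Icc.2 haL) (right_mem_Icc.2 haL) haL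
  have hπ : s * (a + π / s - a) = π := by field_simp; ring
  simp only [u, sub_self, mul_zero, cos_zero, sin_zero, hπ, cos_pi, sin_pi] at hend
  nlinarith [mul_pos hs0 (hpos a (left_mem_Icc.2 haL)),
    mul_pos hs0 (hpos _ (right_mem_Icc.2 haL))]

theorem exists_zero_mem_Icc (hs : IsSturmSolution q f) {a c : ℝ} (ha : 0 ≤ a) (hc : 0 < c)
    (hq : ∀ x ∈ Icc a (a + π / √c), c ≤ q x) : ∃ x ∈ Icc a (a + π / √c), f x = 0 := by
  wlog hfa : 0 < f a generalizing f
  · rcases (not_lt.1 hfa).eq_or_lt with h | h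
    · exact ⟨a, left_mem_Icc.2 (le_add_of_nonneg_right (by positivity)), h⟩
    · obtain ⟨x, hx, hfx⟩ := this hs.neg (by simpa using h)
      exact ⟨x, hx, by simpa using hfx⟩
  obtain ⟨x, hx, hfx⟩ := hs.exists_nonpos_mem_Icc ha hc hq
  obtain ⟨z, hz, hfz, -⟩ := exists_first_zero hs.continuous hx.1 hfa hfx
  exact ⟨z, ⟨hz.1.le, hz.2.trans hx.2⟩, hfz⟩

theorem frequently_eq_zero (hs : IsSturmSolution q f) {c x₀ : ℝ} (hc : 0 < c)
    (hq : ∀ x, x₀ ≤ x → c ≤ q x) : ∃ᶠ x in atTop, f x = 0 := by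
  refine frequently_atTop.2 fun b => ?_
  set a := max b (max x₀ 0)
  obtain ⟨x, hx, hfx⟩ := hs.exists_zero_mem_Icc (a := a) (le_max_of_le_right (le_max_right _ _))
    hc fun x hx => hq x ((le_max_left _ _).trans ((le_max_right b _).trans hx.1))
  exact ⟨x, (le_max_left _ _).trans hx.1, hfx⟩

theorem exists_zero_mul_deriv_nonpos (hs : IsSturmSolution q f) (hosc : ∃ᶠ x in atTop, f x = 0)
    {m : ℝ} (hm : 0 ≤ m) (hfm : f m ≠ 0) (hf'm : deriv f m = 0) :
    ∃ z > m, f z = 0 ∧ ∀ x ∈ Icc m z, f x * deriv f x ≤ 0 := by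
  wlog hpos : 0 < f m generalizing f
  · obtain ⟨z, hz, hfz, hff'⟩ := this hs.neg (hosc.mono fun x hx => by simp [hx])
      (by simpa using hfm) (by simp [deriv.neg, hf'm])
      (by simpa using lt_of_le_of_ne (not_lt.1 hpos) hfm)
    exact ⟨z, hz, by simpa using hfz, fun x hx => by simpa [deriv.neg] using hff' x hx⟩
  obtain ⟨ζ, hζ, hfζ⟩ := frequently_atTop'.1 hosc m
  obtain ⟨z, hz, hfz, hfpos⟩ := exists_first_zero hs.continuous hζ.le hpos hfζ.le
  have hf_nonneg : ∀ x ∈ Icc m z, 0 ≤ f x := fun x hx =>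
    hx.2.eq_or_lt.elim (fun h => h ▸ hfz.ge) fun h => (hfpos x ⟨hx.1, h⟩).le
  have hf'_anti : AntitoneOn (deriv f) (Icc m z) :=
    antitoneOn_Icc_of_hasDerivAt (fun x hx => hs.hasDerivAt_deriv (hm.trans hx.1)) fun x hx => by
      rw [neg_mul, neg_nonpos]
      exact mul_nonneg (hs.nonneg x (hm.trans hx.1.le)) (hf_nonneg x (Ioo_subset_Icc_self hx))
  refine ⟨z, hz.1, hfz, fun x hx => mul_nonpos_of_nonneg_of_nonpos (hf_nonneg x hx) ?_⟩
  exact hf'm ▸ hf'_anti (left_mem_Icc.2 hz.1.le) hx hx.1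

theorem isLocalMax_deriv_sq (hs : IsSturmSolution q f) {p x r : ℝ} (hp : 0 ≤ p) (hpx : p < x)
    (hxr : x < r) (hl : ∀ y ∈ Ioo p x, f y * deriv f y ≤ 0)
    (hr : ∀ y ∈ Ioo x r, 0 ≤ f y * deriv f y) :
    IsLocalMax (fun y => deriv f y ^ 2) x := by
  have hd : ∀ y, 0 ≤ y → deriv (fun y => deriv f y ^ 2) y = -2 * q y * (f y * deriv f y) :=
    fun y hy => by rw [((hs.hasDerivAt_deriv hy).fun_pow 2).deriv]; ring
  have hdiff : Differentiable ℝ fun y => deriv f y ^ 2 := hs.differentiable_deriv.pow 2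
  refine isLocalMax_of_deriv_Ioo hpx hxr hdiff.continuous.continuousAt hdiff.differentiableOn
    hdiff.differentiableOn (fun y hy => ?_) (fun y hy => ?_)
  · rw [hd y (hp.trans hy.1.le)]
    nlinarith [hs.nonneg y (hp.trans hy.1.le), hl y hy]
  · rw [hd y (by linarith [hy.1])]
    nlinarith [hs.nonneg y (by linarith [hy.1]), hr y hy]

theorem exists_half_period (hs : IsSturmSolution q f) (hf0 : f 0 ≠ 0)
    (hq : ∀ r, BddAbove (q '' Icc 0 r)) (hosc : ∃ᶠ x in atTop, f x = 0) {m : ℝ} (hm : 0 ≤ m)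
    (hf'm : deriv f m = 0) (hfm : f m ≠ 0) :
    ∃ z m', m < z ∧ z < m' ∧ f z = 0 ∧ deriv f m' = 0 ∧ f m' ≠ 0 ∧
      (∀ x ∈ Icc m z, f x * deriv f x ≤ 0) ∧ (∀ x ∈ Icc z m', 0 ≤ f x * deriv f x) ∧
      IsLocalMax (fun x => deriv f x ^ 2) z ∧ IsLocalMax (fun x => f x ^ 2) m' := by
  obtain ⟨z, hmz, hfz, hl⟩ := hs.exists_zero_mul_deriv_nonpos hosc hm hfm hf'm
  obtain ⟨m', hzm', hf'm', hfm', hr⟩ := exists_deriv_eq_zero_mul_deriv_nonneg hs.differentiable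
    hs.continuous_deriv hosc hfz (hs.deriv_ne_zero_of_eq_zero hf0 hq (hm.trans hmz.le) hfz)
  obtain ⟨z', hz', -, hr'⟩ :=
    hs.exists_zero_mul_deriv_nonpos hosc (by linarith) hfm' hf'm'
  refine ⟨z, m', hmz, hzm', hfz, hf'm', hfm', hl, hr, ?_, ?_⟩
  · exact hs.isLocalMax_deriv_sq hm hmz hzm' (fun y hy => hl y (Ioo_subset_Icc_self hy))
      fun y hy => hr y (Ioo_subset_Icc_self hy)
  · exact isLocalMax_sq_of_mul_deriv hs.differentiable hzm' hz'
      (fun y hy => hr y (Ioo_subset_Icc_self hy)) fun y hy => hr' y (Ioo_subset_Icc_self hy)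

theorem tendsto_atTop_of_deriv_eq_zero (hs : IsSturmSolution q f) (hf0 : f 0 ≠ 0)
    (hq : ∀ r, BddAbove (q '' Icc 0 r)) {m : ℕ → ℝ} (hm0 : 0 ≤ m 0) (hmono : Monotone m)
    (hf'm : ∀ j, deriv f (m j) = 0) (hzero : ∀ j, ∃ x ∈ Icc (m j) (m (j + 1)), f x = 0) :
    Tendsto m atTop atTop := by
  by_contra hm
  have hbdd : BddAbove (range m) := by
    by_contra h
    exact hm (tendsto_atTop_atTop_of_monotone' hmono h)
  set L := ⨆ j, m j
  have hL : Tendsto m atTop (𝓝 L) := tendsto_atTop_ciSup hmono hbdd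
  choose x hx hfx using hzero
  have hxL : Tendsto x atTop (𝓝 L) :=
    tendsto_of_tendsto_of_tendsto_of_le_of_le hL ((tendsto_add_atTop_iff_nat 1).2 hL)
      (fun j => (hx j).1) fun j => (hx j).2
  have hfL : f L = 0 :=
    tendsto_nhds_unique ((hs.continuous.tendsto L).comp hxL) (by simp [Function.comp_def, hfx])
  have hf'L : deriv f L = 0 :=
    tendsto_nhds_unique ((hs.continuous_deriv.tendsto L).comp hL)
      (by simp [Function.comp_def, hf'm])
  exact hf0 (hs.eq_zero_of_eq_zero_of_deriv_eq_zero le_rfl (hm0.trans (le_ciSup hbdd 0)) (hq L)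
    hfL hf'L)

end IsSturmSolution

section Potential

variable {K : ℕ} {V : ℕ → ℝ → ℝ}

/-- `V(x, y²)`. -/
noncomputable def potential (K : ℕ) (V : ℕ → ℝ → ℝ) (x y : ℝ) : ℝ :=
  ∑ k ∈ Finset.range (K + 1), V k x * y ^ (2 * k)

noncomputable def potentialEnergy (K : ℕ) (V : ℕ → ℝ → ℝ) (a y : ℝ) : ℝ :=
  ∑ k ∈ Finset.range (K + 1), V k a / ((k : ℝ) + 1) * y ^ (2 * (k + 1))

noncomputable def modEnergy (K : ℕ) (V : ℕ → ℝ → ℝ) (f : ℝ → ℝ) (a x : ℝ) : ℝ :=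
  deriv f x ^ 2 + potentialEnergy K V a (f x)

theorem potential_nonneg (hVnonneg : ∀ k ≤ K, ∀ x : ℝ, 0 ≤ x → 0 ≤ V k x) {x : ℝ} (hx : 0 ≤ x)
    (y : ℝ) : 0 ≤ potential K V x y :=
  Finset.sum_nonneg fun k hk =>
    mul_nonneg (hVnonneg k (Finset.mem_range_succ_iff.1 hk) x hx) ((even_two_mul k).pow_nonneg y)

theorem potential_mono (hVmono : ∀ k ≤ K, MonotoneOn (V k) (Ici (0 : ℝ))) {x a : ℝ}
    (hx : 0 ≤ x) (hxa : x ≤ a) (y : ℝ) : potential K V x y ≤ potential K V a y :=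
  Finset.sum_le_sum fun k hk => mul_le_mul_of_nonneg_right
    (hVmono k (Finset.mem_range_succ_iff.1 hk) hx (hx.trans hxa) hxa)
    ((even_two_mul k).pow_nonneg y)

theorem potential_le_of_abs_le (hVnonneg : ∀ k ≤ K, ∀ x : ℝ, 0 ≤ x → 0 ≤ V k x) {x y B : ℝ}
    (hx : 0 ≤ x) (hy : |y| ≤ B) : potential K V x y ≤ potential K V x B :=
  Finset.sum_le_sum fun k hk => mul_le_mul_of_nonneg_left
    ((even_two_mul k).pow_abs y ▸ pow_le_pow_left₀ (abs_nonneg y) hy _)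
    (hVnonneg k (Finset.mem_range_succ_iff.1 hk) x hx)

theorem le_potential (hVnonneg : ∀ k ≤ K, ∀ x : ℝ, 0 ≤ x → 0 ≤ V k x) {x : ℝ} (hx : 0 ≤ x)
    (y : ℝ) : V 0 x ≤ potential K V x y := by
  have := Finset.single_le_sum (f := fun k => V k x * y ^ (2 * k))
    (fun k hk => mul_nonneg (hVnonneg k (Finset.mem_range_succ_iff.1 hk) x hx)
      ((even_two_mul k).pow_nonneg y)) (Finset.mem_range.2 K.succ_pos)
  simpa [potential] using this

theorem bddAbove_potential_image (hVnonneg : ∀ k ≤ K, ∀ x : ℝ, 0 ≤ x → 0 ≤ V k x)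
    (hVmono : ∀ k ≤ K, MonotoneOn (V k) (Ici (0 : ℝ))) {f : ℝ → ℝ} (hf : Continuous f) (r : ℝ) :
    BddAbove ((fun x => potential K V x (f x)) '' Icc 0 r) := by
  obtain ⟨B, hB⟩ := isCompact_Icc.exists_bound_of_continuousOn hf.continuousOn
  refine ⟨potential K V r B, ?_⟩
  rintro _ ⟨x, hx, rfl⟩
  exact (potential_mono hVmono hx.1 hx.2 _).trans
    (potential_le_of_abs_le hVnonneg (hx.1.trans hx.2) (hB x hx))

theorem hasDerivAt_potentialEnergy (a y : ℝ) :
    HasDerivAt (potentialEnergy K V a) (2 * y * potential K V a y) y := by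
  have := HasDerivAt.fun_sum fun k (_ : k ∈ Finset.range (K + 1)) =>
    (hasDerivAt_pow (2 * (k + 1)) y).const_mul (V k a / ((k : ℝ) + 1))
  refine this.congr_deriv ?_
  rw [potential, Finset.mul_sum]
  refine Finset.sum_congr rfl fun k _ => ?_
  rw [show 2 * (k + 1) - 1 = 2 * k + 1 by omega]
  field_simp
  push_cast
  ring

theorem isSturmSolution_potential (hVnonneg : ∀ k ≤ K, ∀ x : ℝ, 0 ≤ x → 0 ≤ V k x)
    {f : ℝ → ℝ} (hf : ContDiff ℝ 2 f)
    (hODE : ∀ x, 0 ≤ x → deriv (deriv f) x = -potential K V x (f x) * f x) :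
    IsSturmSolution (fun x => potential K V x (f x)) f where
  differentiable := hf.differentiable (by norm_num)
  differentiable_deriv := hf.differentiable_deriv_two
  nonneg x hx := potential_nonneg hVnonneg hx (f x)
  deriv_deriv := hODE

theorem modEnergy_of_eq_zero {f : ℝ → ℝ} {x : ℝ} (hx : f x = 0) (a : ℝ) :
    modEnergy K V f a x = deriv f x ^ 2 := by
  simp [modEnergy, potentialEnergy, hx]

theorem modEnergy_of_deriv_eq_zero {f : ℝ → ℝ} {x : ℝ} (hx : deriv f x = 0) (a : ℝ) :
    modEnergy K V f a x = potentialEnergy K V a (f x) := by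
  simp [modEnergy, hx]

namespace IsSturmSolution

variable {f : ℝ → ℝ}

theorem hasDerivAt_modEnergy (hs : IsSturmSolution (fun x => potential K V x (f x)) f) (a : ℝ)
    {x : ℝ} (hx : 0 ≤ x) :
    HasDerivAt (modEnergy K V f a)
      (2 * (f x * deriv f x) * (potential K V a (f x) - potential K V x (f x))) x :=
  (((hs.hasDerivAt_deriv hx).fun_pow 2).fun_add
    ((hasDerivAt_potentialEnergy a (f x)).comp x (hs.differentiable x).hasDerivAt)).congr_deriv
    (by ring)

theorem modEnergy_le_of_mul_deriv_nonpos (hVmono : ∀ k ≤ K, MonotoneOn (V k) (Ici (0 : ℝ)))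
    (hs : IsSturmSolution (fun x => potential K V x (f x)) f) {p r : ℝ} (hp : 0 ≤ p) (hpr : p ≤ r)
    (hff' : ∀ x ∈ Icc p r, f x * deriv f x ≤ 0) :
    modEnergy K V f r r ≤ modEnergy K V f r p ∧ modEnergy K V f p p ≤ modEnergy K V f p r := by
  have hx0 : ∀ x ∈ Ioo p r, 0 ≤ x := fun x hx => hp.trans hx.1.le
  have h2ff' : ∀ x ∈ Ioo p r, 2 * (f x * deriv f x) ≤ 0 := fun x hx =>
    mul_nonpos_of_nonneg_of_nonpos zero_le_two (hff' x (Ioo_subset_Icc_self hx))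
  have hp_mem := left_mem_Icc.2 hpr
  have hr_mem := right_mem_Icc.2 hpr
  constructor
  · refine antitoneOn_Icc_of_hasDerivAt (fun x hx => hs.hasDerivAt_modEnergy r (hp.trans hx.1))
      (fun x hx => mul_nonpos_of_nonpos_of_nonneg (h2ff' x hx)
        (sub_nonneg.2 (potential_mono hVmono (hx0 x hx) hx.2.le _))) hp_mem hr_mem hpr
  · refine monotoneOn_Icc_of_hasDerivAt (fun x hx => hs.hasDerivAt_modEnergy p (hp.trans hx.1))
      (fun x hx => mul_nonneg_of_nonpos_of_nonpos (h2ff' x hx)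
        (sub_nonpos.2 (potential_mono hVmono hp hx.1.le _))) hp_mem hr_mem hpr

theorem modEnergy_le_of_mul_deriv_nonneg (hVmono : ∀ k ≤ K, MonotoneOn (V k) (Ici (0 : ℝ)))
    (hs : IsSturmSolution (fun x => potential K V x (f x)) f) {p r : ℝ} (hp : 0 ≤ p) (hpr : p ≤ r)
    (hff' : ∀ x ∈ Icc p r, 0 ≤ f x * deriv f x) :
    modEnergy K V f p r ≤ modEnergy K V f p p ∧ modEnergy K V f r p ≤ modEnergy K V f r r := by
  have hx0 : ∀ x ∈ Ioo p r, 0 ≤ x := fun x hx => hp.trans hx.1.le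
  have h2ff' : ∀ x ∈ Ioo p r, 0 ≤ 2 * (f x * deriv f x) := fun x hx =>
    mul_nonneg zero_le_two (hff' x (Ioo_subset_Icc_self hx))
  have hp_mem := left_mem_Icc.2 hpr
  have hr_mem := right_mem_Icc.2 hpr
  constructor
  · refine antitoneOn_Icc_of_hasDerivAt (fun x hx => hs.hasDerivAt_modEnergy p (hp.trans hx.1))
      (fun x hx => mul_nonpos_of_nonneg_of_nonpos (h2ff' x hx)
        (sub_nonpos.2 (potential_mono hVmono hp hx.1.le _))) hp_mem hr_mem hpr
  · refine monotoneOn_Icc_of_hasDerivAt (fun x hx => hs.hasDerivAt_modEnergy r (hp.trans hx.1))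
      (fun x hx => mul_nonneg (h2ff' x hx)
        (sub_nonneg.2 (potential_mono hVmono (hx0 x hx) hx.2.le _))) hp_mem hr_mem hpr

theorem exists_next_extremum (hVmono : ∀ k ≤ K, MonotoneOn (V k) (Ici (0 : ℝ)))
    (hs : IsSturmSolution (fun x => potential K V x (f x)) f) (hf0 : f 0 ≠ 0)
    (hq : ∀ r, BddAbove ((fun x => potential K V x (f x)) '' Icc 0 r))
    (hosc : ∃ᶠ x in atTop, f x = 0) {m : ℝ} (hm : 0 ≤ m ∧ deriv f m = 0 ∧ f m ≠ 0) :
    ∃ n m', (0 ≤ m' ∧ deriv f m' = 0 ∧ f m' ≠ 0) ∧ m < n ∧ n < m' ∧ f n = 0 ∧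
      IsLocalMax (fun x => f x ^ 2) m' ∧ IsLocalMax (fun x => deriv f x ^ 2) n ∧
      potentialEnergy K V n (f m') ≤ deriv f n ^ 2 ∧
      deriv f n ^ 2 ≤ potentialEnergy K V n (f m) ∧
      deriv f n ^ 2 ≤ potentialEnergy K V m' (f m') ∧
      potentialEnergy K V m (f m) ≤ deriv f n ^ 2 := by
  obtain ⟨hm0, hf'm, hfm⟩ := hm
  obtain ⟨z, m', hmz, hzm', hfz, hf'm', hfm', hl, hr, hmaxz, hmaxm'⟩ :=
    hs.exists_half_period hf0 hq hosc hm0 hf'm hfm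
  obtain ⟨h₁, h₂⟩ := hs.modEnergy_le_of_mul_deriv_nonpos hVmono hm0 hmz.le hl
  obtain ⟨h₃, h₄⟩ := hs.modEnergy_le_of_mul_deriv_nonneg hVmono (hm0.trans hmz.le) hzm'.le hr
  simp only [modEnergy_of_eq_zero hfz, modEnergy_of_deriv_eq_zero hf'm,
    modEnergy_of_deriv_eq_zero hf'm'] at h₁ h₂ h₃ h₄
  exact ⟨z, m', ⟨by linarith, hf'm', hfm'⟩, hmz, hzm', hfz, hmaxm', hmaxz, h₃, h₁, h₄, h₂⟩

end IsSturmSolution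

end Potential

/-- Oscillation and modified-energy lemma for `f'' = −V(x, f²) f`,
`V(x,y) = ∑_{k=0}^K V_k(x) y^k` with nonnegative nondecreasing coefficients `V_k` and
`V₀(x₀) > 0` for some `x₀ > 0`: with `m₀ = 0` there are unbounded strictly increasing
sequences of successive maximal points `m_j` of `f²` and `n_j` of `(f')²` interleaving
as `m_{j-1} < n_j < m_j`, along which the stated energy inequalities hold. -/
theorem stmt_7 (K : ℕ) (V : ℕ → ℝ → ℝ)
    (hVnonneg : ∀ k ≤ K, ∀ x : ℝ, 0 ≤ x → 0 ≤ V k x)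
    (hVmono : ∀ k ≤ K, MonotoneOn (V k) (Set.Ici (0 : ℝ)))
    (x₀ : ℝ) (hx₀ : 0 < x₀) (hV₀ : 0 < V 0 x₀)
    (f : ℝ → ℝ) (hf : ContDiff ℝ 2 f) (hf0 : 0 < f 0) (hf'0 : deriv f 0 = 0)
    (hODE : ∀ x : ℝ, 0 ≤ x →
      deriv (deriv f) x = -(∑ k ∈ Finset.range (K + 1), V k x * f x ^ (2 * k)) * f x) :
    ∃ m n : ℕ → ℝ, m 0 = 0 ∧
      StrictMono m ∧ (∀ j : ℕ, 1 ≤ j → n j < n (j + 1)) ∧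
      Tendsto m atTop atTop ∧ Tendsto n atTop atTop ∧
      ∀ j : ℕ, 1 ≤ j →
        0 < n j ∧ m (j - 1) < n j ∧ n j < m j ∧
        IsLocalMax (fun x => f x ^ 2) (m j) ∧
        IsLocalMax (fun x => deriv f x ^ 2) (n j) ∧
        (∑ k ∈ Finset.range (K + 1),
            V k (n j) / ((k : ℝ) + 1) * f (m j) ^ (2 * (k + 1)))
          ≤ deriv f (n j) ^ 2 ∧
        deriv f (n j) ^ 2 ≤
          (∑ k ∈ Finset.range (K + 1),
            V k (n j) / ((k : ℝ) + 1) * f (m (j - 1)) ^ (2 * (k + 1))) ∧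
        deriv f (n j) ^ 2 ≤
          (∑ k ∈ Finset.range (K + 1),
            V k (m j) / ((k : ℝ) + 1) * f (m j) ^ (2 * (k + 1))) ∧
        (∑ k ∈ Finset.range (K + 1),
            V k (m (j - 1)) / ((k : ℝ) + 1) * f (m (j - 1)) ^ (2 * (k + 1)))
          ≤ deriv f (n j) ^ 2 := by
  have hs := isSturmSolution_potential hVnonneg hf hODE
  have hq := bddAbove_potential_image hVnonneg hVmono hs.continuous
  have hosc : ∃ᶠ x in atTop, f x = 0 := hs.frequently_eq_zero hV₀ fun x hx =>
    (hVmono 0 K.zero_le hx₀.le (hx₀.le.trans hx) hx).trans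
      (le_potential hVnonneg (hx₀.le.trans hx) _)
  obtain ⟨m, n, hm0, hmn⟩ := exists_seq_of_forall_exists
    (S := fun m => 0 ≤ m ∧ deriv f m = 0 ∧ f m ≠ 0) ⟨le_rfl, hf'0, hf0.ne'⟩
    fun m hm => hs.exists_next_extremum hVmono hf0.ne' hq hosc hm
  have hmono : StrictMono m := strictMono_nat_of_lt_succ fun j => (hmn j).2.1.trans (hmn j).2.2.1
  have hm_top : Tendsto m atTop atTop := hs.tendsto_atTop_of_deriv_eq_zero hf0.ne' hq hm0.ge
    hmono.monotone (fun j => (hmn j).1.2.1)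
    fun j => ⟨n (j + 1), ⟨(hmn j).2.1.le, (hmn j).2.2.1.le⟩, (hmn j).2.2.2.1⟩
  have hn_top : Tendsto n atTop atTop := (tendsto_add_atTop_iff_nat 1).1
    (tendsto_atTop_mono (fun j => (hmn j).2.1.le) hm_top)
  refine ⟨m, n, hm0, hmono, ?_, hm_top, hn_top, ?_⟩ <;> intro j hj <;>
    obtain ⟨i, rfl⟩ := Nat.exists_eq_add_of_le' hj
  · exact (hmn i).2.2.1.trans (hmn (i + 1)).2.1
  · obtain ⟨⟨hmi, -⟩, hmn', hnm, -, hmax, hmax', h⟩ := hmn i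
    exact ⟨hmi.trans_lt hmn', hmn', hnm, hmax, hmax', h⟩
end

section
/- Let K be a natural number and let V₀, V₁, …, V_K : [0,∞) → ℝ be nonnegative nondecreasing functions with V₀(x₀) > 0 for some x₀ > 0. Let f : [0,∞) → ℝ be twice continuously differentiable with f(0) > 0, f'(0) = 0, and f''(x) = −(∑_{k=0}^K V_k(x) f(x)^{2k}) · f(x) for all x ≥ 0. Then |f(x)| ≤ f(0) for all x ≥ 0. -/
/-!
Put `c = f 0 ^ 2` and let `Φ x` be the primitive of `s ↦ ∑ V_k(x) s^k` vanishing at `s = c`.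
While `f² ≤ c`, the energy `f'² + Φ x (f²)` does not increase: along the flow its derivative is
the `x`-derivative of `Φ`, which is `≤ 0` because `Φ x ≤ 0` on `[0, c]` and the `V_k` increase.
As the `V_k` are merely monotone, this is proved by freezing `x` in `Φ` on short intervals and
summing over ever finer partitions. So at the first time `t` where `f²` reaches `c`, we get
`f'(t)² ≤ energy 0 = 0`; at such a turning point `f''` has the sign opposite to `f`, so `f²`
cannot exceed `c` right after `t`.
-/

open Set Filter Topology Finset

theorem le_of_forall_sub_le_mul_sub {G φ : ℝ → ℝ} {a b : ℝ} (hab : a ≤ b)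
    (h : ∀ y z, a ≤ y → y ≤ z → z ≤ b → G z - G y ≤ (φ z - φ y) * (z - y)) : G b ≤ G a := by
  have hpartition : ∀ n : ℕ, 1 ≤ n → G b - G a ≤ (φ b - φ a) * (b - a) / n := by
    intro n hn
    have hn0 : (0 : ℝ) < n := by exact_mod_cast hn
    set δ := (b - a) / n with hδ
    have hδ0 : 0 ≤ δ := div_nonneg (sub_nonneg.2 hab) hn0.le
    have hend : a + n * δ = b := by rw [hδ]; field_simp; ring
    have hstep : ∀ j ∈ range n, G (a + (j + 1 : ℕ) * δ) - G (a + j * δ) ≤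
        (φ (a + (j + 1 : ℕ) * δ) - φ (a + j * δ)) * δ := by
      intro j hj
      have hjn : (j : ℝ) + 1 ≤ n := by exact_mod_cast mem_range.1 hj
      have hlen : a + ((j + 1 : ℕ) : ℝ) * δ - (a + j * δ) = δ := by push_cast; ring
      have := h (a + j * δ) (a + (j + 1 : ℕ) * δ) (by nlinarith) (by linarith)
        (by push_cast; nlinarith)
      rwa [hlen] at this
    calc G b - G a = ∑ j ∈ range n, (G (a + (j + 1 : ℕ) * δ) - G (a + j * δ)) := by
          rw [sum_range_sub (fun j => G (a + j * δ)), hend]; simp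
      _ ≤ ∑ j ∈ range n, (φ (a + (j + 1 : ℕ) * δ) - φ (a + j * δ)) * δ := sum_le_sum hstep
      _ = (φ b - φ a) * (b - a) / n := by
          rw [← sum_mul, sum_range_sub (fun j => φ (a + j * δ)), hend]; simp [hδ, mul_div_assoc]
  have hlim := tendsto_const_div_atTop_nhds_zero_nat ((φ b - φ a) * (b - a))
  linarith [ge_of_tendsto hlim (eventually_atTop.2 ⟨1, hpartition⟩)]

theorem forall_le_of_continuous_of_eventually_le {g : ℝ → ℝ} {a c : ℝ} (hg : Continuous g)
    (ha : g a ≤ c)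
    (hstep : ∀ t, a ≤ t → (∀ u ∈ Icc a t, g u ≤ c) → g t = c → ∀ᶠ u in 𝓝[>] t, g u ≤ c) :
    ∀ x, a ≤ x → g x ≤ c := by
  by_contra! ⟨x, hax, hx⟩
  set D := {s | a ≤ s ∧ c < g s}
  have hDne : D.Nonempty := ⟨x, hax, hx⟩
  have hDbdd : BddBelow D := ⟨a, fun s hs => hs.1⟩
  set t := sInf D
  have hat : a ≤ t := le_csInf hDne fun s hs => hs.1
  have hbelow : ∀ u ∈ Ico a t, g u ≤ c := fun u hu =>
    not_lt.1 fun h => (csInf_le hDbdd ⟨hu.1, h⟩).not_gt hu.2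
  have hgt : g t ≤ c := by
    rcases hat.eq_or_lt with hat | hat
    · exact hat ▸ ha
    · refine le_of_tendsto ((hg.tendsto t).mono_left (nhdsWithin_le_nhds (s := Iio t))) ?_
      filter_upwards [Ioo_mem_nhdsLT hat] with u hu using hbelow u ⟨hu.1.le, hu.2⟩
  have hev : ∀ᶠ u in 𝓝[>] t, g u ≤ c := by
    rcases hgt.lt_or_eq with hlt | heq
    · exact nhdsWithin_le_nhds ((hg.continuousAt.eventually (gt_mem_nhds hlt)).mono
        fun _ => le_of_lt)
    · refine hstep t hat (fun u hu => ?_) heq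
      rcases hu.2.lt_or_eq with hut | rfl
      exacts [hbelow u ⟨hu.1, hut⟩, hgt]
  obtain ⟨r, htr, hsub⟩ := mem_nhdsGT_iff_exists_Ioo_subset.1 hev
  obtain ⟨s, hsD, hsr⟩ := exists_lt_of_csInf_lt hDne htr
  have hts : t < s := (csInf_le hDbdd hsD).lt_of_ne fun hts => by
    rw [← hts] at hsD; exact hgt.not_gt hsD.2
  exact (hsub ⟨hts, hsr⟩).not_gt hsD.2

theorem eventually_mem_Ioc_of_mul_nonpos {f f' f'' : ℝ → ℝ} {t : ℝ}
    (hf : ∀ x, HasDerivAt f (f' x) x) (hf' : ∀ x, HasDerivAt f' (f'' x) x)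
    (hsign : ∀ x > t, f'' x * f x ≤ 0) (h't : f' t = 0) (ht : 0 < f t) :
    ∀ᶠ x in 𝓝[>] t, f x ∈ Ioc 0 (f t) := by
  obtain ⟨r, htr, hpos⟩ := mem_nhdsGE_iff_exists_Ico_subset.1
    (nhdsWithin_le_nhds ((hf t).continuousAt.eventually (lt_mem_nhds ht)))
  have hint : interior (Ico t r) = Ioo t r := interior_Ico
  have hf'anti : AntitoneOn f' (Ico t r) := by
    refine antitoneOn_of_hasDerivWithinAt_nonpos (convex_Ico t r)
      (fun x _ => (hf' x).continuousAt.continuousWithinAt)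
      (fun x _ => (hf' x).hasDerivWithinAt) fun x hx => ?_
    rw [hint] at hx
    exact nonpos_of_mul_nonpos_left (hsign x hx.1) (hpos (Ioo_subset_Ico_self hx))
  have hfanti : AntitoneOn f (Ico t r) := by
    refine antitoneOn_of_hasDerivWithinAt_nonpos (convex_Ico t r)
      (fun x _ => (hf x).continuousAt.continuousWithinAt)
      (fun x _ => (hf x).hasDerivWithinAt) fun x hx => ?_
    rw [hint] at hx
    exact h't ▸ hf'anti (left_mem_Ico.2 htr) (Ioo_subset_Ico_self hx) hx.1.le
  filter_upwards [Ioo_mem_nhdsGT htr] with x hx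
  exact ⟨hpos (Ioo_subset_Ico_self hx),
    hfanti (left_mem_Ico.2 htr) (Ioo_subset_Ico_self hx) hx.1.le⟩

theorem eventually_sq_le_of_mul_nonpos {f f' f'' : ℝ → ℝ} {t : ℝ}
    (hf : ∀ x, HasDerivAt f (f' x) x) (hf' : ∀ x, HasDerivAt f' (f'' x) x)
    (hsign : ∀ x > t, f'' x * f x ≤ 0) (h't : f' t = 0) (ht : f t ≠ 0) :
    ∀ᶠ x in 𝓝[>] t, f x ^ 2 ≤ f t ^ 2 := by
  rcases ht.lt_or_gt with hneg | hpos
  · have hev := eventually_mem_Ioc_of_mul_nonpos (f := -f) (fun x => (hf x).neg)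
      (fun x => (hf' x).neg) (fun x hx => by simpa using hsign x hx) (by simpa using h't)
      (by simpa using hneg)
    filter_upwards [hev] with x hx
    simp only [Pi.neg_apply, Set.mem_Ioc] at hx
    rw [← neg_sq (f x), ← neg_sq (f t)]
    exact sq_le_sq' (by linarith [hx.1]) hx.2
  · filter_upwards [eventually_mem_Ioc_of_mul_nonpos hf hf' hsign h't hpos] with x hx
    exact sq_le_sq' (by linarith [hx.1]) hx.2

section Energy

variable {K : ℕ} {V : ℕ → ℝ → ℝ}

-- The paper's `V(x, y)`.
noncomputable def Vsum (K : ℕ) (V : ℕ → ℝ → ℝ) (x s : ℝ) : ℝ :=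
  ∑ k ∈ range (K + 1), V k x * s ^ k

noncomputable def Vprim (K : ℕ) (V : ℕ → ℝ → ℝ) (c x s : ℝ) : ℝ :=
  ∑ k ∈ range (K + 1), V k x * (s ^ (k + 1) - c ^ (k + 1)) / (k + 1)

noncomputable def energy (K : ℕ) (V : ℕ → ℝ → ℝ) (c : ℝ) (f f' : ℝ → ℝ) (u : ℝ) : ℝ :=
  f' u ^ 2 + Vprim K V c u (f u ^ 2)

theorem Vsum_nonneg {x s : ℝ} (hV : ∀ k ≤ K, 0 ≤ V k x) (hs : 0 ≤ s) : 0 ≤ Vsum K V x s :=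
  sum_nonneg fun k hk => mul_nonneg (hV k (Nat.lt_succ_iff.1 (mem_range.1 hk))) (pow_nonneg hs k)

theorem Vsum_le_Vsum {x x' s : ℝ} (hV : ∀ k ≤ K, V k x ≤ V k x') (hs : 0 ≤ s) :
    Vsum K V x s ≤ Vsum K V x' s :=
  sum_le_sum fun k hk =>
    mul_le_mul_of_nonneg_right (hV k (Nat.lt_succ_iff.1 (mem_range.1 hk))) (pow_nonneg hs k)

theorem Vsum_sub_Vsum_le {y u z s c : ℝ} (hyu : ∀ k ≤ K, V k y ≤ V k u)
    (huz : ∀ k ≤ K, V k u ≤ V k z) (hs : 0 ≤ s) (hsc : s ≤ c) :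
    Vsum K V u s - Vsum K V y s ≤ Vsum K V z c - Vsum K V y c := by
  simp only [Vsum, ← sum_sub_distrib, ← sub_mul]
  refine sum_le_sum fun k hk => ?_
  have hk := Nat.lt_succ_iff.1 (mem_range.1 hk)
  exact mul_le_mul (by linarith [huz k hk]) (pow_le_pow_left₀ hs hsc k) (pow_nonneg hs k)
    (by linarith [hyu k hk, huz k hk])

theorem hasDerivAt_Vprim (c x s : ℝ) : HasDerivAt (Vprim K V c x) (Vsum K V x s) s := by
  refine HasDerivAt.fun_sum fun k _ => ?_
  refine ((((hasDerivAt_pow (k + 1) s).sub_const (c ^ (k + 1))).const_mul (V k x)).div_const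
    ((k : ℝ) + 1)).congr_deriv ?_
  rw [Nat.add_sub_cancel, Nat.cast_add_one]
  field_simp

theorem Vprim_self (c x : ℝ) : Vprim K V c x c = 0 := by
  simp [Vprim]

theorem Vprim_le_Vprim {x x' s c : ℝ} (hV : ∀ k ≤ K, V k x ≤ V k x') (hs : 0 ≤ s) (hsc : s ≤ c) :
    Vprim K V c x' s ≤ Vprim K V c x s := by
  refine sum_le_sum fun k hk => div_le_div_of_nonneg_right ?_ (by positivity)
  exact mul_le_mul_of_nonpos_right (hV k (Nat.lt_succ_iff.1 (mem_range.1 hk)))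
    (sub_nonpos.2 (pow_le_pow_left₀ hs hsc _))

variable {f f' f'' : ℝ → ℝ} {c : ℝ}

theorem energy_sub_energy_le {B y z : ℝ} (hyz : y ≤ z)
    (hf : ∀ u, HasDerivAt f (f' u) u) (hf' : ∀ u, HasDerivAt f' (f'' u) u)
    (hODE : ∀ u ∈ Icc y z, f'' u = -Vsum K V u (f u ^ 2) * f u)
    (hV : ∀ k ≤ K, MonotoneOn (V k) (Icc y z))
    (hfc : ∀ u ∈ Icc y z, f u ^ 2 ≤ c) (hB : ∀ u ∈ Icc y z, |f u * f' u| ≤ B) :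
    energy K V c f f' z - energy K V c f f' y ≤
      2 * B * (Vsum K V z c - Vsum K V y c) * (z - y) := by
  have hy : y ∈ Icc y z := left_mem_Icc.2 hyz
  have hz : z ∈ Icc y z := right_mem_Icc.2 hyz
  set F : ℝ → ℝ := fun u => f' u ^ 2 + Vprim K V c y (f u ^ 2)
  have hF : ∀ u, HasDerivAt F (2 * f' u * f'' u + Vsum K V y (f u ^ 2) * (2 * f u * f' u)) u := by
    intro u
    refine (((hf' u).fun_pow 2).fun_add
      ((hasDerivAt_Vprim c y (f u ^ 2)).comp u ((hf u).fun_pow 2))).congr_deriv ?_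
    push_cast
    ring
  have hF'le : ∀ u ∈ Icc y z, 2 * f' u * f'' u + Vsum K V y (f u ^ 2) * (2 * f u * f' u) ≤
      2 * B * (Vsum K V z c - Vsum K V y c) := by
    intro u hu
    have hyu : ∀ k ≤ K, V k y ≤ V k u := fun k hk => hV k hk hy hu hu.1
    have huz : ∀ k ≤ K, V k u ≤ V k z := fun k hk => hV k hk hu hz hu.2
    have hmono := Vsum_le_Vsum hyu (sq_nonneg (f u))
    have hincr := Vsum_sub_Vsum_le hyu huz (sq_nonneg (f u)) (hfc u hu)
    rw [hODE u hu]
    calc _ = -(2 * (f u * f' u)) * (Vsum K V u (f u ^ 2) - Vsum K V y (f u ^ 2)) := by ring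
      _ ≤ 2 * B * (Vsum K V u (f u ^ 2) - Vsum K V y (f u ^ 2)) :=
        mul_le_mul_of_nonneg_right (by linarith [neg_abs_le (f u * f' u), hB u hu])
          (sub_nonneg.2 hmono)
      _ ≤ 2 * B * (Vsum K V z c - Vsum K V y c) :=
        mul_le_mul_of_nonneg_left hincr (by linarith [abs_nonneg (f y * f' y), hB y hy])
  have hFzy := (convex_Icc y z).image_sub_le_mul_sub_of_deriv_le
    (fun u _ => (hF u).continuousAt.continuousWithinAt)
    (fun u _ => (hF u).differentiableAt.differentiableWithinAt)
    (fun u hu => (hF u).deriv ▸ hF'le u (interior_subset hu)) y hy z hz hyz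
  have hpot : Vprim K V c z (f z ^ 2) ≤ Vprim K V c y (f z ^ 2) :=
    Vprim_le_Vprim (fun k hk => hV k hk hy hz hyz) (sq_nonneg (f z)) (hfc z hz)
  simp only [energy, F] at hFzy ⊢
  linarith

theorem energy_le_energy {a b : ℝ} (hab : a ≤ b)
    (hf : ∀ u, HasDerivAt f (f' u) u) (hf' : ∀ u, HasDerivAt f' (f'' u) u)
    (hODE : ∀ u ∈ Icc a b, f'' u = -Vsum K V u (f u ^ 2) * f u)
    (hV : ∀ k ≤ K, MonotoneOn (V k) (Icc a b)) (hfc : ∀ u ∈ Icc a b, f u ^ 2 ≤ c) :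
    energy K V c f f' b ≤ energy K V c f f' a := by
  obtain ⟨B, hB⟩ := isCompact_Icc.exists_bound_of_continuousOn (f := fun u => f u * f' u)
    fun u _ => ((hf u).continuousAt.mul (hf' u).continuousAt).continuousWithinAt
  refine le_of_forall_sub_le_mul_sub (φ := fun x => 2 * B * Vsum K V x c) hab
    fun y z hay hyz hzb => ?_
  have hsub : Icc y z ⊆ Icc a b := Icc_subset_Icc hay hzb
  calc _ ≤ 2 * B * (Vsum K V z c - Vsum K V y c) * (z - y) :=
        energy_sub_energy_le hyz hf hf' (fun u hu => hODE u (hsub hu))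
          (fun k hk => (hV k hk).mono hsub) (fun u hu => hfc u (hsub hu))
          (fun u hu => hB u (hsub hu))
    _ = _ := by ring

end Energy

theorem stmt_8_general (K : ℕ) (V : ℕ → ℝ → ℝ)
    (hVnonneg : ∀ k ≤ K, ∀ x : ℝ, 0 ≤ x → 0 ≤ V k x)
    (hVmono : ∀ k ≤ K, MonotoneOn (V k) (Set.Ici (0 : ℝ)))
    (f : ℝ → ℝ) (hf : ContDiff ℝ 2 f) (hf0 : 0 < f 0) (hf'0 : deriv f 0 = 0)
    (hODE : ∀ x : ℝ, 0 ≤ x →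
      deriv (deriv f) x = -(∑ k ∈ Finset.range (K + 1), V k x * f x ^ (2 * k)) * f x) :
    ∀ x : ℝ, 0 ≤ x → |f x| ≤ f 0 := by
  have hf' : ∀ x, HasDerivAt f (deriv f x) x :=
    fun x => (hf.differentiable two_ne_zero x).hasDerivAt
  have hf'' : ∀ x, HasDerivAt (deriv f) (deriv (deriv f) x) x :=
    fun x => (hf.differentiable_deriv_two x).hasDerivAt
  have hODE' : ∀ x, 0 ≤ x → deriv (deriv f) x = -Vsum K V x (f x ^ 2) * f x := by
    simpa only [Vsum, ← pow_mul] using hODE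
  have hsq : ∀ x, 0 ≤ x → f x ^ 2 ≤ f 0 ^ 2 := by
    refine forall_le_of_continuous_of_eventually_le (g := fun x => f x ^ 2)
      (hf.continuous.pow 2) le_rfl fun t ht hle hft => ?_
    have hen := energy_le_energy (V := V) (c := f 0 ^ 2) ht hf' hf''
      (fun u hu => hODE' u hu.1) (fun k hk => (hVmono k hk).mono Icc_subset_Ici_self) hle
    have h't : deriv f t = 0 := by
      simpa [energy, hft, Vprim_self, hf'0] using hen
    refine hft ▸ eventually_sq_le_of_mul_nonpos hf' hf'' (fun x hx => ?_) h't ?_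
    · rw [hODE' x (ht.trans hx.le)]
      nlinarith [Vsum_nonneg (fun k hk => hVnonneg k hk x (ht.trans hx.le)) (sq_nonneg (f x))]
    · exact fun h => (pow_pos hf0 2).ne (by rw [← hft, h, zero_pow two_ne_zero])
  intro x hx
  simpa [abs_of_pos hf0] using sq_le_sq.1 (hsq x hx)

/-- For the ODE `f'' = −V(x, f²) f`, `V(x,y) = ∑_{k=0}^K V_k(x) y^k` with
nonnegative nondecreasing coefficients `V_k`, `V₀(x₀) > 0` for some `x₀ > 0`, and
initial data `f(0) > 0`, `f'(0) = 0`, the solution satisfies `|f(x)| ≤ f(0)` for all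
`x ≥ 0`. -/
theorem stmt_8 (K : ℕ) (V : ℕ → ℝ → ℝ)
    (hVnonneg : ∀ k ≤ K, ∀ x : ℝ, 0 ≤ x → 0 ≤ V k x)
    (hVmono : ∀ k ≤ K, MonotoneOn (V k) (Set.Ici (0 : ℝ)))
    (x₀ : ℝ) (hx₀ : 0 < x₀) (hV₀ : 0 < V 0 x₀)
    (f : ℝ → ℝ) (hf : ContDiff ℝ 2 f) (hf0 : 0 < f 0) (hf'0 : deriv f 0 = 0)
    (hODE : ∀ x : ℝ, 0 ≤ x →
      deriv (deriv f) x = -(∑ k ∈ Finset.range (K + 1), V k x * f x ^ (2 * k)) * f x) :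
    ∀ x : ℝ, 0 ≤ x → |f x| ≤ f 0 :=
  stmt_8_general K V hVnonneg hVmono f hf hf0 hf'0 hODE
end

section
/- Let A₀ > 0 and let Ã : [0,∞) → ℝ be twice continuously differentiable with Ã(0) = A₀, Ã'(0) = 0, and Ã''(y) = −((y²/16) Ã(y) + (y/4) Ã(y)³ + (3/16) Ã(y)⁵) for all y ≥ 0. Suppose n₁ > 0 satisfies Ã(n₁) = 0 and Ã(y) > 0 for all y ∈ [0, n₁). Then for every y > n₁, (1/(2y)) Ã'(y)² + (y/32) Ã(y)² ≤ (n₁/32) A₀² + (1/16) A₀⁴ + (1/(32 n₁)) A₀⁶ + (1/(2 n₁)) A₀ · ((1/16) A₀² + (1/(8 n₁)) A₀⁴ + (1/(16 n₁²)) A₀⁶)^{1/2}. -/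
/-!
Along a solution, the energy `E = Ã'²/2 + V(y, Ã)` with `V(y, a) = y²a²/32 + y a⁴/16 + a⁶/32`
satisfies `E' = ∂_y V ≥ 0`. On `[0, n₁]` the solution is nonnegative, hence concave, hence
decreasing from `A₀`; this bounds `Ã'(n₁)²/2 = E(n₁)` by `V(n₁, A₀)`, and comparing `Ã` with the
parabola `A₀ - K y²/2`, where `K` bounds `|Ã''|` on `[0, n₁]`, gives the constraint
`2 A₀ ≤ n₁² K`. Beyond `n₁`, both `E/y²` and `E/y + ÃÃ'/(2y²) + Ã²/(2y³)` are nonincreasing.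
The first bounds `|Ã| ≤ 4w` and `|Ã'| ≤ y w` with `w = |Ã'(n₁)|/n₁`; the second gives the
estimate up to the cross term, which the constraint on `n₁` absorbs.
-/

open Set

theorem add_mul_sub_le_pow {c t : ℝ} (hc : 0 < c) (ht : 0 ≤ t) (k : ℕ) :
    c ^ (k + 1) + (k + 1) * c ^ k * (t - c) ≤ t ^ (k + 1) := by
  have hbernoulli := one_add_mul_le_pow (a := t / c - 1)
    (by linarith [div_nonneg ht hc.le]) (k + 1)
  calc c ^ (k + 1) + (k + 1) * c ^ k * (t - c)
      = c ^ (k + 1) * (1 + ((k + 1 : ℕ) : ℝ) * (t / c - 1)) := by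
        field_simp; push_cast; ring
    _ ≤ c ^ (k + 1) * (1 + (t / c - 1)) ^ (k + 1) := by gcongr
    _ = t ^ (k + 1) := by rw [add_sub_cancel, div_pow]; field_simp

theorem Convex.antitoneOn_of_hasDerivAt_nonpos {D : Set ℝ} (hD : Convex ℝ D) {f f' : ℝ → ℝ}
    (hf : ∀ x ∈ D, HasDerivAt f (f' x) x) (hf' : ∀ x ∈ D, f' x ≤ 0) : AntitoneOn f D :=
  antitoneOn_of_hasDerivWithinAt_nonpos hD (fun x hx ↦ (hf x hx).continuousAt.continuousWithinAt)
    (fun x hx ↦ (hf x (interior_subset hx)).hasDerivWithinAt) fun x hx ↦ hf' x (interior_subset hx)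

theorem Convex.monotoneOn_of_hasDerivAt_nonneg {D : Set ℝ} (hD : Convex ℝ D) {f f' : ℝ → ℝ}
    (hf : ∀ x ∈ D, HasDerivAt f (f' x) x) (hf' : ∀ x ∈ D, 0 ≤ f' x) : MonotoneOn f D :=
  monotoneOn_of_hasDerivWithinAt_nonneg hD (fun x hx ↦ (hf x hx).continuousAt.continuousWithinAt)
    (fun x hx ↦ (hf x (interior_subset hx)).hasDerivWithinAt) fun x hx ↦ hf' x (interior_subset hx)

section SecondDerivative

variable {f f'' : ℝ → ℝ} {n : ℝ}

theorem deriv_nonpos_of_second_deriv_nonpos (hf'' : ∀ y ∈ Icc 0 n, HasDerivAt (deriv f) (f'' y) y)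
    (h'0 : deriv f 0 = 0) (hle : ∀ y ∈ Icc 0 n, f'' y ≤ 0) : ∀ y ∈ Icc 0 n, deriv f y ≤ 0 :=
  fun _ hy ↦ h'0 ▸ (convex_Icc 0 n).antitoneOn_of_hasDerivAt_nonpos hf'' hle
    ⟨le_rfl, hy.1.trans hy.2⟩ hy hy.1

theorem le_of_second_deriv_nonpos (hf : Differentiable ℝ f)
    (hf'' : ∀ y ∈ Icc 0 n, HasDerivAt (deriv f) (f'' y) y) (h'0 : deriv f 0 = 0)
    (hle : ∀ y ∈ Icc 0 n, f'' y ≤ 0) : ∀ y ∈ Icc 0 n, f y ≤ f 0 :=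
  fun _ hy ↦ (convex_Icc 0 n).antitoneOn_of_hasDerivAt_nonpos (fun z _ ↦ (hf z).hasDerivAt)
    (deriv_nonpos_of_second_deriv_nonpos hf'' h'0 hle) ⟨le_rfl, hy.1.trans hy.2⟩ hy hy.1

theorem le_add_mul_sq_of_neg_le_second_deriv {K : ℝ} (hn : 0 ≤ n) (hf : Differentiable ℝ f)
    (hf'' : ∀ y ∈ Icc 0 n, HasDerivAt (deriv f) (f'' y) y) (h'0 : deriv f 0 = 0)
    (hK : ∀ y ∈ Icc 0 n, -K ≤ f'' y) : f 0 ≤ f n + K * n ^ 2 / 2 := by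
  have hslope : ∀ y ∈ Icc 0 n, 0 ≤ deriv f y + K * y := by
    have hmono := (convex_Icc 0 n).monotoneOn_of_hasDerivAt_nonneg
      (f := fun y ↦ deriv f y + K * y) (f' := fun y ↦ f'' y + K)
      (fun y hy ↦ ((hf'' y hy).add ((hasDerivAt_id y).const_mul K)).congr_deriv (by simp))
      (fun y hy ↦ by linarith [hK y hy])
    intro y hy
    simpa [h'0] using hmono ⟨le_rfl, hn⟩ hy hy.1
  have hmono := (convex_Icc 0 n).monotoneOn_of_hasDerivAt_nonneg
    (f := fun y ↦ f y + K * y ^ 2 / 2) (f' := fun y ↦ deriv f y + K * y)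
    (fun y _ ↦ ((hf y).hasDerivAt.add (((hasDerivAt_pow 2 y).const_mul K).div_const 2)).congr_deriv
      (by ring)) hslope
  simpa using hmono ⟨le_rfl, hn⟩ ⟨hn, le_rfl⟩ hn

end SecondDerivative

namespace AmplitudeEquation

noncomputable section

def potential (y a : ℝ) : ℝ := y ^ 2 * a ^ 2 / 32 + y * a ^ 4 / 16 + a ^ 6 / 32

/-- `∂ potential / ∂a`, so that the equation reads `Ã'' = -force y Ã`. -/
def force (y a : ℝ) : ℝ := y ^ 2 / 16 * a + y / 4 * a ^ 3 + 3 / 16 * a ^ 5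

def energy (A : ℝ → ℝ) (y : ℝ) : ℝ := deriv A y ^ 2 / 2 + potential y (A y)

def lyapunov (A : ℝ → ℝ) (y : ℝ) : ℝ :=
  energy A y / y + A y * deriv A y / (2 * y ^ 2) + A y ^ 2 / (2 * y ^ 3)

end

theorem force_nonneg {y a : ℝ} (hy : 0 ≤ y) (ha : 0 ≤ a) : 0 ≤ force y a := by
  unfold force; positivity

theorem force_le_force {y a n M : ℝ} (hy : 0 ≤ y) (hyn : y ≤ n) (ha : 0 ≤ a) (haM : a ≤ M) :
    force y a ≤ force n M := by
  unfold force
  gcongr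
  linarith

theorem energy_of_eq_zero {A : ℝ → ℝ} {n : ℝ} (h : A n = 0) : energy A n = deriv A n ^ 2 / 2 := by
  simp [energy, potential, h]

theorem lyapunov_of_eq_zero {A : ℝ → ℝ} {n : ℝ} (h : A n = 0) :
    lyapunov A n = deriv A n ^ 2 / 2 / n := by
  simp [lyapunov, energy_of_eq_zero h, h]

variable {A : ℝ → ℝ}

theorem hasDerivAt_energy {y : ℝ} (hA : DifferentiableAt ℝ A y)
    (hA'' : HasDerivAt (deriv A) (-force y (A y)) y) :
    HasDerivAt (energy A) (y * A y ^ 2 / 16 + A y ^ 4 / 16) y := by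
  have hA' := hA.hasDerivAt
  have := ((hA''.pow 2).div_const 2).add
    (((((hasDerivAt_id' y).pow 2).mul (hA'.pow 2)).div_const 32).add
      (((hasDerivAt_id' y).mul (hA'.pow 4)).div_const 16) |>.add ((hA'.pow 6).div_const 32))
  refine this.congr_deriv ?_
  simp only [force, Pi.pow_apply]
  ring

theorem energy_sub_potential_antitoneOn {n M : ℝ} (hA : Differentiable ℝ A)
    (hA'' : ∀ y, 0 ≤ y → HasDerivAt (deriv A) (-force y (A y)) y)
    (hbound : ∀ y ∈ Icc 0 n, 0 ≤ A y ∧ A y ≤ M) :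
    AntitoneOn (fun y ↦ energy A y - potential y M) (Icc 0 n) := by
  refine (convex_Icc 0 n).antitoneOn_of_hasDerivAt_nonpos
    (f' := fun y ↦ (y * A y ^ 2 / 16 + A y ^ 4 / 16) - (y * M ^ 2 / 16 + M ^ 4 / 16))
    (fun y hy ↦ ?_) (fun y hy ↦ ?_)
  · have hV : HasDerivAt (fun z ↦ potential z M) (y * M ^ 2 / 16 + M ^ 4 / 16) y := by
      have := ((((hasDerivAt_pow 2 y).mul_const (M ^ 2)).div_const 32).add
        (((hasDerivAt_id' y).mul_const (M ^ 4)).div_const 16)).add_const (M ^ 6 / 32)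
      exact this.congr_deriv (by ring)
    exact (hasDerivAt_energy (hA y) (hA'' y hy.1)).sub hV
  · obtain ⟨h0, hM⟩ := hbound y hy
    have : A y ^ 2 ≤ M ^ 2 := pow_le_pow_left₀ h0 hM 2
    have : A y ^ 4 ≤ M ^ 4 := pow_le_pow_left₀ h0 hM 4
    nlinarith [hy.1]

theorem energy_le_potential {n : ℝ} (hn : 0 ≤ n) (hA : Differentiable ℝ A)
    (hA'' : ∀ y, 0 ≤ y → HasDerivAt (deriv A) (-force y (A y)) y) (h'0 : deriv A 0 = 0)
    (hbound : ∀ y ∈ Icc 0 n, 0 ≤ A y ∧ A y ≤ A 0) :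
    energy A n ≤ potential n (A 0) := by
  have := energy_sub_potential_antitoneOn hA hA'' hbound ⟨le_rfl, hn⟩ ⟨hn, le_rfl⟩ hn
  simp only [energy, h'0] at this ⊢
  linarith

theorem energy_div_sq_antitoneOn (hA : Differentiable ℝ A)
    (hA'' : ∀ y, 0 < y → HasDerivAt (deriv A) (-force y (A y)) y) :
    AntitoneOn (fun y ↦ energy A y / y ^ 2) (Ioi 0) := by
  refine (convex_Ioi 0).antitoneOn_of_hasDerivAt_nonpos
    (f' := fun y ↦ -(deriv A y ^ 2 / y ^ 3 + A y ^ 4 / (16 * y ^ 2) + A y ^ 6 / (16 * y ^ 3)))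
    (fun y (hy : 0 < y) ↦ ?_) (fun y (hy : 0 < y) ↦ ?_)
  · refine ((hasDerivAt_energy (hA y) (hA'' y hy)).div (hasDerivAt_pow 2 y)
      (by positivity)).congr_deriv ?_
    simp only [energy, potential]
    field_simp
    ring
  · simp only [neg_nonpos]
    positivity

theorem lyapunov_antitoneOn (hA : Differentiable ℝ A)
    (hA'' : ∀ y, 0 < y → HasDerivAt (deriv A) (-force y (A y)) y) :
    AntitoneOn (lyapunov A) (Ioi 0) := by
  refine (convex_Ioi 0).antitoneOn_of_hasDerivAt_nonpos
    (f' := fun y ↦ -(A y ^ 4 / (8 * y) + A y ^ 6 / (8 * y ^ 2) + 3 * A y ^ 2 / (2 * y ^ 4)))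
    (fun y (hy : 0 < y) ↦ ?_) (fun y (hy : 0 < y) ↦ ?_)
  · have hA' := (hA y).hasDerivAt
    have := (((hasDerivAt_energy (hA y) (hA'' y hy)).div (hasDerivAt_id' y) hy.ne').add
      ((hA'.mul (hA'' y hy)).div ((hasDerivAt_pow 2 y).const_mul 2) (by positivity))).add
      ((hA'.pow 2).div ((hasDerivAt_pow 3 y).const_mul 2) (by positivity))
    refine this.congr_deriv ?_
    simp only [energy, potential, force, Pi.pow_apply, Pi.mul_apply]
    field_simp
    ring
  · simp only [neg_nonpos]
    positivity

theorem four_mul_add_sq_le {n c : ℝ} (hn : 0 < n) (hc : 0 < c) (hC : 2 * c ≤ n ^ 2 * force n c) :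
    4 * (n + c ^ 2) ≤ 2 * n ^ 3 + 9 * n ^ 2 * c ^ 2 + 6 * n * c ^ 4 := by
  have h32 : 32 ≤ n ^ 2 * (n + c ^ 2) * (n + 3 * c ^ 2) := by
    unfold force at hC; nlinarith
  have h2 : 2 ≤ n * (n + 3 * c ^ 2) := by
    have hsq : 32 ≤ (n * (n + 3 * c ^ 2)) ^ 2 := by
      nlinarith [mul_le_mul_of_nonneg_left (show n + c ^ 2 ≤ n + 3 * c ^ 2 by nlinarith)
        (show 0 ≤ n ^ 2 * (n + 3 * c ^ 2) by positivity)]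
    nlinarith [show 0 ≤ n * (n + 3 * c ^ 2) by positivity]
  nlinarith [mul_le_mul_of_nonneg_left h2 (show 0 ≤ 2 * (n + c ^ 2) by positivity),
    mul_pos (pow_pos hn 2) (pow_pos hc 2)]

theorem mul_le_pow_six_add_pow_four {n c s t : ℝ} (hn : 0 < n) (hc : 0 < c)
    (hC : 2 * c ≤ n ^ 2 * force n c) (hs : s = c / 4 + c ^ 3 / (4 * n))
    (ht0 : 0 ≤ t) (ht : t ≤ 4 * s) :
    t * s ≤ t ^ 6 / 16 + n * t ^ 4 / 8 + c * s := by
  have hs0 : 0 < s := by rw [hs]; positivity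
  rcases le_or_gt t c with htc | hct
  · nlinarith [mul_le_mul_of_nonneg_right htc hs0.le, pow_nonneg ht0 6, pow_nonneg ht0 4]
  -- tangent lines at `c` reduce this to an affine inequality in `t` on `[c, 4 s]`
  have htangent : c ^ 6 / 16 + n * c ^ 4 / 8 + (t - c) * (3 * c ^ 5 / 8 + n * c ^ 3 / 2)
      ≤ t ^ 6 / 16 + n * t ^ 4 / 8 := by
    have h6 := add_mul_sub_le_pow hc ht0 5
    have h4 := add_mul_sub_le_pow hc ht0 3
    push_cast at h6 h4
    nlinarith
  set D := s - 3 * c ^ 5 / 8 - n * c ^ 3 / 2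
  have hend : c ^ 3 / n * D ≤ c ^ 6 / 16 + n * c ^ 4 / 8 := by
    have hP := four_mul_add_sq_le hn hc hC
    have hdiff : c ^ 6 / 16 + n * c ^ 4 / 8 - c ^ 3 / n * D = c ^ 4 / (16 * n ^ 2)
        * (2 * n ^ 3 + 9 * n ^ 2 * c ^ 2 + 6 * n * c ^ 4 - 4 * (n + c ^ 2)) := by
      simp only [D, hs]; field_simp; ring
    have := mul_nonneg (by positivity : 0 ≤ c ^ 4 / (16 * n ^ 2)) (sub_nonneg.2 hP)
    linarith
  have htc : t - c ≤ c ^ 3 / n := by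
    have : 4 * s = c + c ^ 3 / n := by rw [hs]; field_simp
    linarith
  have hlin : (t - c) * D ≤ c ^ 6 / 16 + n * c ^ 4 / 8 := by
    rcases le_or_gt D 0 with hD | hD
    · nlinarith [mul_nonpos_of_nonneg_of_nonpos (sub_nonneg.2 hct.le) hD, pow_pos hc 6,
        pow_pos hc 4]
    · nlinarith [mul_le_mul_of_nonneg_right htc hD.le]
  have : t * s = c * s + (t - c) * D + (t - c) * (3 * c ^ 5 / 8 + n * c ^ 3 / 2) := by
    simp only [D]; ring
  linarith

theorem cross_term_le {n c s w t y : ℝ} (hn : 0 < n) (hc : 0 < c)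
    (hC : 2 * c ≤ n ^ 2 * force n c) (hs : s = c / 4 + c ^ 3 / (4 * n))
    (hw0 : 0 ≤ w) (hws : w ≤ s) (ht0 : 0 ≤ t) (ht : t ≤ 4 * w) (hy : n ≤ y) :
    t * w / (2 * y) - t ^ 6 / (32 * y)
      ≤ t ^ 4 / 16 + n * (s ^ 2 - w ^ 2) / 2 + c * s / (2 * n) := by
  have hy0 : 0 < y := hn.trans_le hy
  have hs0 : 0 < s := by rw [hs]; positivity
  have hR : 0 ≤ n * t ^ 4 / 8 + c * s + n ^ 2 * (s ^ 2 - w ^ 2) := by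
    have : w ^ 2 ≤ s ^ 2 := pow_le_pow_left₀ hw0 hws 2
    have : 0 ≤ n * t ^ 4 / 8 := by positivity
    have : 0 ≤ c * s := by positivity
    nlinarith
  have hnum : t * w - t ^ 6 / 16 ≤ n * t ^ 4 / 8 + c * s + n ^ 2 * (s ^ 2 - w ^ 2) := by
    have hts := mul_le_pow_six_add_pow_four hn hc hC hs ht0 (by linarith)
    nlinarith [mul_nonneg (sub_nonneg.2 hws) (show 0 ≤ t + n ^ 2 * (s + w) by positivity)]
  calc t * w / (2 * y) - t ^ 6 / (32 * y) = (t * w - t ^ 6 / 16) / (2 * y) := by ring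
    _ ≤ (n * t ^ 4 / 8 + c * s + n ^ 2 * (s ^ 2 - w ^ 2)) / (2 * y) := by gcongr
    _ ≤ (n * t ^ 4 / 8 + c * s + n ^ 2 * (s ^ 2 - w ^ 2)) / (2 * n) := by gcongr
    _ = t ^ 4 / 16 + n * (s ^ 2 - w ^ 2) / 2 + c * s / (2 * n) := by field_simp; ring

theorem abs_le_of_energy_div_sq_le {y a b w : ℝ} (hy : 0 < y) (hw : 0 ≤ w)
    (hq : (b ^ 2 / 2 + potential y a) / y ^ 2 ≤ w ^ 2 / 2) : |a| ≤ 4 * w ∧ |b| ≤ y * w := by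
  rw [div_le_iff₀ (by positivity)] at hq
  unfold potential at hq
  have : 0 ≤ y * a ^ 4 := by positivity
  have : 0 ≤ a ^ 6 := by positivity
  have : 0 ≤ b ^ 2 := by positivity
  have : 0 ≤ y ^ 2 * a ^ 2 := by positivity
  refine ⟨abs_le_of_sq_le_sq ?_ (by positivity), abs_le_of_sq_le_sq (by linarith) (by positivity)⟩
  exact le_of_mul_le_mul_left (by linarith : y ^ 2 * a ^ 2 ≤ y ^ 2 * (4 * w) ^ 2) (by positivity)

theorem sqrt_eq_div_add_div {n c : ℝ} (hn : 0 < n) (hc : 0 ≤ c) :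
    √(1 / 16 * c ^ 2 + 1 / (8 * n) * c ^ 4 + 1 / (16 * n ^ 2) * c ^ 6)
      = c / 4 + c ^ 3 / (4 * n) := by
  rw [← Real.sqrt_sq (by positivity : 0 ≤ c / 4 + c ^ 3 / (4 * n))]
  congr 1
  field_simp
  ring

theorem bound_of_lyapunov {n c y a b B : ℝ} (hn : 0 < n) (hc : 0 < c)
    (hC : 2 * c ≤ n ^ 2 * force n c) (hB : B ^ 2 / 2 ≤ potential n c) (hy : n ≤ y)
    (hq : (b ^ 2 / 2 + potential y a) / y ^ 2 ≤ B ^ 2 / 2 / n ^ 2)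
    (hm : (b ^ 2 / 2 + potential y a) / y + a * b / (2 * y ^ 2) + a ^ 2 / (2 * y ^ 3)
      ≤ B ^ 2 / 2 / n) :
    1 / (2 * y) * b ^ 2 + y / 32 * a ^ 2 ≤ n / 32 * c ^ 2 + 1 / 16 * c ^ 4 + 1 / (32 * n) * c ^ 6
      + 1 / (2 * n) * c * (c / 4 + c ^ 3 / (4 * n)) := by
  have hy0 : 0 < y := hn.trans_le hy
  set s := c / 4 + c ^ 3 / (4 * n) with hs
  set w := |B| / n
  have hw0 : 0 ≤ w := by positivity
  have hws : w ≤ s := by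
    have hB2 : B ^ 2 ≤ (n * s) ^ 2 := by
      have : 2 * potential n c = (n * s) ^ 2 := by simp only [potential, s]; field_simp; ring
      linarith
    rw [div_le_iff₀ hn, mul_comm]
    exact abs_le_of_sq_le_sq hB2 (by positivity)
  have hBq : B ^ 2 / 2 / n ^ 2 = w ^ 2 / 2 := by simp only [w, div_pow, sq_abs]; ring
  have hBm : B ^ 2 / 2 / n = n * w ^ 2 / 2 := by simp only [w, div_pow, sq_abs]; field_simp
  rw [hBq] at hq
  rw [hBm] at hm
  obtain ⟨ha, hb⟩ := abs_le_of_energy_div_sq_le hy0 hw0 hq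
  have hcross : -(a * b) / (2 * y ^ 2) ≤ |a| * w / (2 * y) := by
    calc -(a * b) / (2 * y ^ 2) ≤ |a| * |b| / (2 * y ^ 2) := by
          rw [← abs_mul]; gcongr; exact neg_le_abs _
      _ ≤ |a| * (y * w) / (2 * y ^ 2) := by gcongr
      _ = |a| * w / (2 * y) := by field_simp
  have hexp : (b ^ 2 / 2 + potential y a) / y
      = 1 / (2 * y) * b ^ 2 + y / 32 * a ^ 2 + |a| ^ 6 / (32 * y) + |a| ^ 4 / 16 := by
    simp only [potential, Even.pow_abs (by decide : Even 4), Even.pow_abs (by decide : Even 6)]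
    field_simp
    ring
  have : 0 ≤ a ^ 2 / (2 * y ^ 3) := by positivity
  have halg := cross_term_le hn hc hC hs hw0 hws (abs_nonneg a) ha hy
  calc 1 / (2 * y) * b ^ 2 + y / 32 * a ^ 2 ≤ n * s ^ 2 / 2 + c * s / (2 * n) := by
        linarith [neg_div (2 * y ^ 2) (a * b)]
    _ = _ := by simp only [s]; field_simp; ring

end AmplitudeEquation

open AmplitudeEquation

/-- A priori bound for the reflected amplitude equation
`Ã'' = −((y²/16) Ã + (y/4) Ã³ + (3/16) Ã⁵)` with `Ã(0) = A₀ > 0`, `Ã'(0) = 0`: if `n₁`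
is the minimal positive zero of `Ã`, then for every `y > n₁`,
`(1/(2y)) Ã'(y)² + (y/32) Ã(y)²` is bounded by the stated explicit constant. -/
theorem stmt_9 (A₀ : ℝ) (hA₀ : 0 < A₀)
    (A : ℝ → ℝ) (hA : ContDiff ℝ 2 A) (h0 : A 0 = A₀) (h'0 : deriv A 0 = 0)
    (hODE : ∀ y : ℝ, 0 ≤ y →
      deriv (deriv A) y = -(y ^ 2 / 16 * A y + y / 4 * A y ^ 3 + 3 / 16 * A y ^ 5))
    (n₁ : ℝ) (hn₁ : 0 < n₁) (hzero : A n₁ = 0)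
    (hpos : ∀ y : ℝ, 0 ≤ y → y < n₁ → 0 < A y) :
    ∀ y : ℝ, n₁ < y →
      1 / (2 * y) * deriv A y ^ 2 + y / 32 * A y ^ 2 ≤
        n₁ / 32 * A₀ ^ 2 + 1 / 16 * A₀ ^ 4 + 1 / (32 * n₁) * A₀ ^ 6
          + 1 / (2 * n₁) * A₀ *
            Real.sqrt (1 / 16 * A₀ ^ 2 + 1 / (8 * n₁) * A₀ ^ 4
              + 1 / (16 * n₁ ^ 2) * A₀ ^ 6) := by
  intro y hy
  have hA' : Differentiable ℝ A := hA.differentiable (by norm_num)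
  have hA'' : ∀ z, 0 ≤ z → HasDerivAt (deriv A) (-force z (A z)) z := fun z hz ↦
    hODE z hz ▸ (hA.differentiable_deriv_two z).hasDerivAt
  have hnonneg : ∀ z ∈ Icc 0 n₁, 0 ≤ A z := fun z hz ↦
    hz.2.eq_or_lt.elim (fun h ↦ h ▸ hzero.ge) fun h ↦ (hpos z hz.1 h).le
  have hle := le_of_second_deriv_nonpos hA' (fun z hz ↦ hA'' z hz.1) h'0 fun z hz ↦
    neg_nonpos.2 (force_nonneg hz.1 (hnonneg z hz))
  have hC := le_add_mul_sq_of_neg_le_second_deriv (K := force n₁ (A 0)) hn₁.le hA'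
    (fun z hz ↦ hA'' z hz.1) h'0
    fun z hz ↦ neg_le_neg (force_le_force hz.1 hz.2 (hnonneg z hz) (hle z hz))
  have hE := energy_le_potential hn₁.le hA' hA'' h'0 fun z hz ↦ ⟨hnonneg z hz, hle z hz⟩
  have hq := energy_div_sq_antitoneOn hA' (fun z hz ↦ hA'' z hz.le) hn₁ (hn₁.trans hy) hy.le
  have hm := lyapunov_antitoneOn hA' (fun z hz ↦ hA'' z hz.le) hn₁ (hn₁.trans hy) hy.le
  simp only [energy_of_eq_zero hzero] at hE hq
  rw [lyapunov_of_eq_zero hzero] at hm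
  rw [hzero, h0] at hC
  rw [h0] at hE
  rw [sqrt_eq_div_add_div hn₁ hA₀.le]
  exact bound_of_lyapunov hn₁ hA₀ (by linarith) hE hy.le hq hm
end

section
/- Let Ã : (0,∞) → ℝ be twice continuously differentiable with Ã''(y) = −((y²/16) Ã(y) + (y/4) Ã(y)³ + (3/16) Ã(y)⁵) for all y > 0, and define E₁(y) = (1/2) Ã'(y)² + (y²/32) Ã(y)² + (y/16) Ã(y)⁴ + (1/32) Ã(y)⁶. Then for every y > 0 the function y ↦ E₁(y)/y² is differentiable with (d/dy)(E₁(y)/y²) = −Ã'(y)²/y³ − Ã(y)⁴/(16 y²) − Ã(y)⁶/(16 y³); in particular y ↦ E₁(y)/y² is nonincreasing on (0,∞). -/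
/-!
Along a solution of `u'' = -((y²/16) u + (y/4) u³ + (3/16) u⁵)` the energy
`E₁ = ½ u'² + (y²/32) u² + (y/16) u⁴ + (1/32) u⁶` is not conserved only because its
coefficients depend on `y`: the ODE cancels every term containing `u'`, leaving
`E₁' = (y/16) u² + u⁴/16`. By the quotient rule `(E₁/y²)' = (y E₁' - 2 E₁)/y³`, in which the
`y² u²` terms cancel and what is left is the negative of a sum of squares over `y³`.
-/

noncomputable def modifiedEnergy (u v : ℝ → ℝ) (z : ℝ) : ℝ :=
  1 / 2 * v z ^ 2 + z ^ 2 / 32 * u z ^ 2 + z / 16 * u z ^ 4 + 1 / 32 * u z ^ 6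

theorem hasDerivAt_modifiedEnergy {u v : ℝ → ℝ} {y : ℝ} (hu : HasDerivAt u (v y) y)
    (hv : HasDerivAt v (-(y ^ 2 / 16 * u y + y / 4 * u y ^ 3 + 3 / 16 * u y ^ 5)) y) :
    HasDerivAt (modifiedEnergy u v) (y / 16 * u y ^ 2 + 1 / 16 * u y ^ 4) y := by
  have hsq : HasDerivAt (fun z : ℝ => z ^ 2 / 32) (2 * y / 32) y := by
    simpa using (hasDerivAt_pow 2 y).div_const 32
  have := ((((hv.pow 2).const_mul (1 / 2 : ℝ)).add (hsq.mul (hu.pow 2))).add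
    (((hasDerivAt_id' y).div_const 16).mul (hu.pow 4))).add ((hu.pow 6).const_mul (1 / 32 : ℝ))
  exact this.congr_deriv (by push_cast [Pi.pow_apply]; ring)

theorem hasDerivAt_modifiedEnergy_div_sq {u v : ℝ → ℝ} {y : ℝ} (hy : y ≠ 0)
    (hu : HasDerivAt u (v y) y)
    (hv : HasDerivAt v (-(y ^ 2 / 16 * u y + y / 4 * u y ^ 3 + 3 / 16 * u y ^ 5)) y) :
    HasDerivAt (fun z => modifiedEnergy u v z / z ^ 2)
      (-(v y ^ 2) / y ^ 3 - u y ^ 4 / (16 * y ^ 2) - u y ^ 6 / (16 * y ^ 3)) y := by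
  have hden : HasDerivAt (fun z : ℝ => z ^ 2) (2 * y) y := by simpa using hasDerivAt_pow 2 y
  refine ((hasDerivAt_modifiedEnergy hu hv).div hden (pow_ne_zero 2 hy)).congr_deriv ?_
  unfold modifiedEnergy
  field_simp
  ring

theorem ContDiffOn.hasDerivAt_deriv_deriv {f : ℝ → ℝ} {s : Set ℝ} (hf : ContDiffOn ℝ 2 f s)
    (hs : IsOpen s) {x : ℝ} (hx : x ∈ s) : HasDerivAt (deriv f) (deriv (deriv f) x) x :=
  (((hf.deriv_of_isOpen (m := 1) hs (by norm_num)).contDiffAt (hs.mem_nhds hx)).differentiableAt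
    one_ne_zero).hasDerivAt

/-- For a C² solution of the reflected amplitude equation
`Ã'' = −((y²/16) Ã + (y/4) Ã³ + (3/16) Ã⁵)` on `(0,∞)` and the modified energy
`E₁ = (1/2) Ã'² + (y²/32) Ã² + (y/16) Ã⁴ + (1/32) Ã⁶`, the function `E₁/y²` has
derivative `−Ã'²/y³ − Ã⁴/(16y²) − Ã⁶/(16y³)` at each `y > 0`; in particular `E₁/y²` is
nonincreasing on `(0,∞)`. -/
theorem stmt_10 (A : ℝ → ℝ) (hA : ContDiffOn ℝ 2 A (Set.Ioi (0 : ℝ)))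
    (hODE : ∀ y : ℝ, 0 < y →
      deriv (deriv A) y = -(y ^ 2 / 16 * A y + y / 4 * A y ^ 3 + 3 / 16 * A y ^ 5)) :
    (∀ y : ℝ, 0 < y →
      HasDerivAt
        (fun z : ℝ =>
          (1 / 2 * deriv A z ^ 2 + z ^ 2 / 32 * A z ^ 2 + z / 16 * A z ^ 4
            + 1 / 32 * A z ^ 6) / z ^ 2)
        (-(deriv A y ^ 2) / y ^ 3 - A y ^ 4 / (16 * y ^ 2) - A y ^ 6 / (16 * y ^ 3)) y) ∧
    AntitoneOn
      (fun z : ℝ =>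
        (1 / 2 * deriv A z ^ 2 + z ^ 2 / 32 * A z ^ 2 + z / 16 * A z ^ 4
          + 1 / 32 * A z ^ 6) / z ^ 2)
      (Set.Ioi (0 : ℝ)) := by
  have hderiv : ∀ y : ℝ, 0 < y → HasDerivAt (fun z => modifiedEnergy A (deriv A) z / z ^ 2)
      (-(deriv A y ^ 2) / y ^ 3 - A y ^ 4 / (16 * y ^ 2) - A y ^ 6 / (16 * y ^ 3)) y := by
    intro y hy
    have hA' : HasDerivAt A (deriv A y) y :=
      ((hA.contDiffAt (isOpen_Ioi.mem_nhds hy)).differentiableAt two_ne_zero).hasDerivAt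
    have hA'' := hA.hasDerivAt_deriv_deriv isOpen_Ioi hy
    rw [hODE y hy] at hA''
    exact hasDerivAt_modifiedEnergy_div_sq hy.ne' hA' hA''
  refine ⟨hderiv, antitoneOn_of_hasDerivWithinAt_nonpos (convex_Ioi 0)
    (f' := fun y => -(deriv A y ^ 2) / y ^ 3 - A y ^ 4 / (16 * y ^ 2) - A y ^ 6 / (16 * y ^ 3))
    (fun y hy => (hderiv y hy).continuousAt.continuousWithinAt) ?_ ?_⟩
  · rw [interior_Ioi]
    exact fun y hy => (hderiv y hy).hasDerivWithinAt
  · rw [interior_Ioi]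
    intro y (hy : 0 < y)
    have : 0 ≤ deriv A y ^ 2 / y ^ 3 + A y ^ 4 / (16 * y ^ 2) + A y ^ 6 / (16 * y ^ 3) := by
      positivity
    linarith [neg_div (y ^ 3) (deriv A y ^ 2)]
end

section
/- Let Ã : (0,∞) → ℝ be twice continuously differentiable with Ã''(y) = −((y²/16) Ã(y) + (y/4) Ã(y)³ + (3/16) Ã(y)⁵) for all y > 0. Define E₁(y) = (1/2) Ã'(y)² + (y²/32) Ã(y)² + (y/16) Ã(y)⁴ + (1/32) Ã(y)⁶ and E₂(y) = E₁(y)/y + Ã(y) Ã'(y)/(2 y²) + Ã(y)²/(2 y³). Then for every y > 0, E₂ is differentiable with E₂'(y) = −Ã(y)⁶/(8 y²) − Ã(y)⁴/(8 y) − 3 Ã(y)²/(2 y⁴); in particular E₂ is nonincreasing on (0,∞). -/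
/-!
Along a solution, `E₁' = y Ã²/16 + Ã⁴/16`: differentiating `E₁` produces `Ã'` times the
left side minus the right side of the equation, plus the two terms coming from the explicit
`y`-dependence. Dividing by `y` and adding the correction `Ã Ã'/(2y²) + Ã²/(2y³)` cancels
every term of indefinite sign (the equation is used once more to eliminate `Ã''`), leaving
a sum of nonpositive terms.
-/

theorem ContDiffOn.hasDerivAt_and_hasDerivAt_deriv {𝕜 F : Type*} [NontriviallyNormedField 𝕜]
    [NormedAddCommGroup F] [NormedSpace 𝕜 F] {f : 𝕜 → F} {s : Set 𝕜} {x : 𝕜}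
    (hf : ContDiffOn 𝕜 2 f s) (hs : IsOpen s) (hx : x ∈ s) :
    HasDerivAt f (deriv f x) x ∧ HasDerivAt (deriv f) (deriv (deriv f) x) x := by
  have hd : ContDiffOn 𝕜 1 (deriv f) s := hf.deriv_of_isOpen hs (by norm_num)
  exact ⟨((hf.contDiffAt (hs.mem_nhds hx)).differentiableAt (by norm_num)).hasDerivAt,
    ((hd.contDiffAt (hs.mem_nhds hx)).differentiableAt (by norm_num)).hasDerivAt⟩

namespace ReflectedAmplitude

noncomputable section

/-- `E₁` at the point `z`, with `a` and `b` standing for `Ã z` and `Ã' z`. -/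
def energy₁ (z a b : ℝ) : ℝ :=
  1 / 2 * b ^ 2 + z ^ 2 / 32 * a ^ 2 + z / 16 * a ^ 4 + 1 / 32 * a ^ 6

def energy₂ (z a b : ℝ) : ℝ :=
  energy₁ z a b / z + a * b / (2 * z ^ 2) + a ^ 2 / (2 * z ^ 3)

def rhs (y a : ℝ) : ℝ :=
  -(y ^ 2 / 16 * a + y / 4 * a ^ 3 + 3 / 16 * a ^ 5)

variable {a b : ℝ → ℝ} {y : ℝ}

theorem hasDerivAt_energy₁ (ha : HasDerivAt a (b y) y)
    (hb : HasDerivAt b (rhs y (a y)) y) :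
    HasDerivAt (fun z => energy₁ z (a z) (b z)) (y / 16 * a y ^ 2 + a y ^ 4 / 16) y := by
  refine (((((hb.pow 2).const_mul (1 / 2)).add
    (((hasDerivAt_pow 2 y).div_const 32).mul (ha.pow 2))).add
    (((hasDerivAt_id y).div_const 16).mul (ha.pow 4))).add
    ((ha.pow 6).const_mul (1 / 32))).congr_deriv ?_
  simp only [rhs, id, Pi.pow_apply]
  push_cast
  ring

theorem hasDerivAt_energy₂ (ha : HasDerivAt a (b y) y)
    (hb : HasDerivAt b (rhs y (a y)) y) (hy : y ≠ 0) :
    HasDerivAt (fun z => energy₂ z (a z) (b z))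
      (-(a y ^ 6) / (8 * y ^ 2) - a y ^ 4 / (8 * y) - 3 * a y ^ 2 / (2 * y ^ 4)) y := by
  refine ((((hasDerivAt_energy₁ ha hb).div (hasDerivAt_id' y) hy).add
    ((ha.mul hb).div ((hasDerivAt_pow 2 y).const_mul 2) (by positivity))).add
    ((ha.pow 2).div ((hasDerivAt_pow 3 y).const_mul 2) (by positivity))).congr_deriv ?_
  simp only [energy₁, rhs, Pi.mul_apply, Pi.pow_apply]
  push_cast
  field_simp
  ring

theorem energy₂_deriv_nonpos (a : ℝ) (hy : 0 < y) :
    -(a ^ 6) / (8 * y ^ 2) - a ^ 4 / (8 * y) - 3 * a ^ 2 / (2 * y ^ 4) ≤ 0 := by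
  have : 0 ≤ a ^ 6 / (8 * y ^ 2) + a ^ 4 / (8 * y) + 3 * a ^ 2 / (2 * y ^ 4) := by positivity
  linarith [neg_div (8 * y ^ 2) (a ^ 6)]

end

end ReflectedAmplitude

open ReflectedAmplitude in
/-- For a C² solution of the reflected amplitude equation
`Ã'' = −((y²/16) Ã + (y/4) Ã³ + (3/16) Ã⁵)` on `(0,∞)`, the modified energy
`E₂ = E₁/y + Ã Ã'/(2y²) + Ã²/(2y³)` (with `E₁ = (1/2) Ã'² + (y²/32) Ã² + (y/16) Ã⁴ +
(1/32) Ã⁶`) has derivative `−Ã⁶/(8y²) − Ã⁴/(8y) − 3Ã²/(2y⁴)` at each `y > 0`; in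
particular `E₂` is nonincreasing on `(0,∞)`. -/
theorem stmt_11 (A : ℝ → ℝ) (hA : ContDiffOn ℝ 2 A (Set.Ioi (0 : ℝ)))
    (hODE : ∀ y : ℝ, 0 < y →
      deriv (deriv A) y = -(y ^ 2 / 16 * A y + y / 4 * A y ^ 3 + 3 / 16 * A y ^ 5)) :
    (∀ y : ℝ, 0 < y →
      HasDerivAt
        (fun z : ℝ =>
          (1 / 2 * deriv A z ^ 2 + z ^ 2 / 32 * A z ^ 2 + z / 16 * A z ^ 4
            + 1 / 32 * A z ^ 6) / z
          + A z * deriv A z / (2 * z ^ 2) + A z ^ 2 / (2 * z ^ 3))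
        (-(A y ^ 6) / (8 * y ^ 2) - A y ^ 4 / (8 * y) - 3 * A y ^ 2 / (2 * y ^ 4)) y) ∧
    AntitoneOn
      (fun z : ℝ =>
        (1 / 2 * deriv A z ^ 2 + z ^ 2 / 32 * A z ^ 2 + z / 16 * A z ^ 4
          + 1 / 32 * A z ^ 6) / z
        + A z * deriv A z / (2 * z ^ 2) + A z ^ 2 / (2 * z ^ 3))
      (Set.Ioi (0 : ℝ)) := by
  have hE₂ : ∀ y : ℝ, 0 < y → HasDerivAt (fun z => energy₂ z (A z) (deriv A z))
      (-(A y ^ 6) / (8 * y ^ 2) - A y ^ 4 / (8 * y) - 3 * A y ^ 2 / (2 * y ^ 4)) y := by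
    intro y hy
    obtain ⟨hA₁, hA₂⟩ := hA.hasDerivAt_and_hasDerivAt_deriv isOpen_Ioi hy
    exact hasDerivAt_energy₂ hA₁ (by rw [rhs, ← hODE y hy]; exact hA₂) hy.ne'
  refine ⟨hE₂, antitoneOn_of_hasDerivWithinAt_nonpos (convex_Ioi 0)
    (f' := fun y => -(A y ^ 6) / (8 * y ^ 2) - A y ^ 4 / (8 * y) - 3 * A y ^ 2 / (2 * y ^ 4))
    (fun y hy => (hE₂ y hy).continuousAt.continuousWithinAt) ?_ ?_⟩
  all_goals simp only [interior_Ioi]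
  · exact fun y hy => (hE₂ y hy).hasDerivWithinAt
  · exact fun y hy => energy₂_deriv_nonpos (A y) hy
end

section
/- Let ε ∈ (0,1) and let A : [0,∞) → ℝ be twice continuously differentiable with A(0) = ε, A'(0) = 0, and A''(y) + (y²/16) A(y) = (y/4) A(y)³ − (3/16) A(y)⁵ for all y ≥ 0. Then |A(y)| < 2ε for every y ∈ [0, 1/3]. -/
/-!
A continuity (bootstrap) argument. As long as `|A| ≤ 3ε/2` on `[0, y]` with `y ≤ 1/3`
and `ε < 1`, the equation gives `|A''| ≤ 2ε` there, and Taylor's formula at `0` (where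
`A' = 0`) gives `|A(y) - ε| ≤ ε y² ≤ ε/9`, so `|A(y)| ≤ 10ε/9`, strictly better than the
assumed bound. Hence the bound `|A| < 3ε/2 < 2ε` can never be lost on `[0, 1/3]`.
-/

open Set

theorem ContinuousOn.lt_on_Icc_of_forall_Ico_lt {α β : Type*}
    [ConditionallyCompleteLinearOrder α] [TopologicalSpace α] [OrderTopology α]
    [LinearOrder β] [TopologicalSpace β] [OrderClosedTopology β] {f : α → β}
    {a b : α} {M : β} (hf : ContinuousOn f (Icc a b))
    (hstep : ∀ x ∈ Icc a b, (∀ t ∈ Ico a x, f t < M) → f x < M) :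
    ∀ x ∈ Icc a b, f x < M := by
  by_contra! hbad
  obtain ⟨x, hx, hMx⟩ := hbad
  have hK : IsCompact (Icc a b ∩ f ⁻¹' Ici M) :=
    isCompact_Icc.of_isClosed_subset
      (hf.preimage_isClosed_of_isClosed isClosed_Icc isClosed_Ici) inter_subset_left
  obtain ⟨T, ⟨hT, hMT⟩, hleast⟩ := hK.exists_isLeast ⟨x, hx, hMx⟩
  refine (hstep T hT fun t ht => ?_).not_ge hMT
  by_contra! hMt
  exact ht.2.not_ge (hleast ⟨⟨ht.1, ht.2.le.trans hT.2⟩, hMt⟩)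

theorem abs_sub_sub_deriv_mul_le {f : ℝ → ℝ} (hf : ContDiff ℝ 2 f) {x₀ x C : ℝ} (hx : x₀ ≤ x)
    (hC : ∀ t ∈ Ioo x₀ x, |deriv (deriv f) t| ≤ C) :
    |f x - f x₀ - deriv f x₀ * (x - x₀)| ≤ C * (x - x₀) ^ 2 / 2 := by
  rcases hx.eq_or_lt with rfl | hlt
  · simp
  obtain ⟨ξ, hξ, hTaylor⟩ := taylor_mean_remainder_lagrange_iteratedDeriv (n := 1) hlt.ne
    hf.contDiffOn
  have hderiv : derivWithin f (uIcc x₀ x) x₀ = deriv f x₀ :=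
    ((hf.differentiable (by norm_num)) x₀).derivWithin
      ((uniqueDiffOn_uIcc hlt.ne) x₀ left_mem_uIcc)
  rw [uIoo_of_le hlt.le] at hξ
  simp only [taylor_within_apply, Finset.sum_range_succ, Finset.sum_range_zero,
    iteratedDerivWithin_zero, iteratedDerivWithin_one, hderiv, iteratedDeriv_succ,
    iteratedDeriv_zero] at hTaylor
  norm_num at hTaylor
  calc |f x - f x₀ - deriv f x₀ * (x - x₀)|
      = |deriv (deriv f) ξ| * (x - x₀) ^ 2 / 2 := by
        rw [show f x - f x₀ - deriv f x₀ * (x - x₀) = deriv (deriv f) ξ * (x - x₀) ^ 2 / 2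
          by linarith, abs_div, abs_mul, abs_of_nonneg (sq_nonneg (x - x₀))]
        norm_num
    _ ≤ C * (x - x₀) ^ 2 / 2 := by gcongr; exact hC ξ hξ

theorem abs_amplitude_rhs_le {ε y a : ℝ} (hε0 : 0 < ε) (hε1 : ε < 1) (hy0 : 0 ≤ y)
    (hy : y ≤ 1 / 3) (ha : |a| ≤ 3 * ε / 2) :
    |y / 4 * a ^ 3 - 3 / 16 * a ^ 5 - y ^ 2 / 16 * a| ≤ 2 * ε := by
  have hb : 0 ≤ |a| := abs_nonneg a
  have hε3 : ε ^ 3 ≤ ε := by nlinarith [pow_le_one₀ hε0.le hε1.le (n := 2)]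
  have hε5 : ε ^ 5 ≤ ε := by nlinarith [pow_le_one₀ hε0.le hε1.le (n := 4)]
  have ha3 : |a| ^ 3 ≤ 27 / 8 * ε := by
    nlinarith [pow_le_pow_left₀ hb ha 3]
  have ha5 : |a| ^ 5 ≤ 243 / 32 * ε := by
    nlinarith [pow_le_pow_left₀ hb ha 5]
  calc |y / 4 * a ^ 3 - 3 / 16 * a ^ 5 - y ^ 2 / 16 * a|
      ≤ y / 4 * |a| ^ 3 + 3 / 16 * |a| ^ 5 + y ^ 2 / 16 * |a| := by
        refine (abs_sub _ _).trans (add_le_add ((abs_sub _ _).trans (le_of_eq ?_)) (le_of_eq ?_))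
        · rw [abs_mul, abs_mul, abs_pow, abs_pow, abs_of_nonneg (by positivity : 0 ≤ y / 4)]
          norm_num
        · rw [abs_mul, abs_of_nonneg (by positivity : 0 ≤ y ^ 2 / 16)]
    _ ≤ (1 / 3) / 4 * (27 / 8 * ε) + 3 / 16 * (243 / 32 * ε)
          + (1 / 3) ^ 2 / 16 * (3 * ε / 2) := by gcongr
    _ ≤ 2 * ε := by linarith

/-- For `ε ∈ (0,1)`, any C² solution of the amplitude equation
`A'' + (y²/16) A = (y/4) A³ − (3/16) A⁵` on `[0,∞)` with `A(0) = ε`, `A'(0) = 0`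
satisfies `|A(y)| < 2ε` for every `y ∈ [0, 1/3]`. -/
theorem stmt_12 (ε : ℝ) (hε0 : 0 < ε) (hε1 : ε < 1)
    (A : ℝ → ℝ) (hA : ContDiff ℝ 2 A) (h0 : A 0 = ε) (h'0 : deriv A 0 = 0)
    (hODE : ∀ y : ℝ, 0 ≤ y →
      deriv (deriv A) y + y ^ 2 / 16 * A y = y / 4 * A y ^ 3 - 3 / 16 * A y ^ 5) :
    ∀ y : ℝ, 0 ≤ y → y ≤ 1 / 3 → |A y| < 2 * ε := by
  have hbound : ∀ x ∈ Icc (0 : ℝ) (1 / 3), |A x| < 3 * ε / 2 := by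
    refine hA.continuous.abs.continuousOn.lt_on_Icc_of_forall_Ico_lt fun x hx hbefore => ?_
    have hA'' : ∀ t ∈ Ioo 0 x, |deriv (deriv A) t| ≤ 2 * ε := fun t ht => by
      rw [eq_sub_of_add_eq (hODE t ht.1.le)]
      exact abs_amplitude_rhs_le hε0 hε1 ht.1.le (ht.2.le.trans hx.2)
        (hbefore t ⟨ht.1.le, ht.2⟩).le
    have hTaylor := abs_sub_sub_deriv_mul_le hA hx.1 hA''
    rw [h0, h'0, zero_mul, sub_zero, sub_zero] at hTaylor
    have hclose : |A x - ε| ≤ ε / 9 := hTaylor.trans <| by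
      nlinarith [mul_le_mul hx.2 hx.2 hx.1 (by norm_num : (0 : ℝ) ≤ 1 / 3)]
    linarith [abs_sub_abs_le_abs_sub (A x) ε, abs_of_pos hε0]
  intro y hy0 hy
  linarith [hbound y ⟨hy0, hy⟩]
end

section
/- Let A : (0,∞) → ℝ be twice continuously differentiable with A''(y) + (y²/16) A(y) = (y/4) A(y)³ − (3/16) A(y)⁵ for all y > 0. Define E₃(y) = (1/2) A'(y)² + (y²/32) A(y)² − (y/16) A(y)⁴ + (1/32) A(y)⁶ and E₄(y) = E₃(y)/y + A(y) A'(y)/(2 y²) + A(y)²/(2 y³). Then for every y > 0, E₄ is differentiable with E₄'(y) = −A(y)⁶/(8 y²) + A(y)⁴/(8 y) − 3 A(y)²/(2 y⁴); in particular E₄'(y) ≤ A(y)⁴/(8 y) for all y > 0. -/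
/-! Differentiating `E₃` along a solution, the `A'`-terms collect into `A'·(A'' + y²A/16 − yA³/4 + 3A⁵/16)`,
which vanishes by the equation, leaving `E₃' = yA²/16 − A⁴/16`. The corrections `AA'/(2y²)` and
`A²/(2y³)` in `E₄` are chosen so that, after using the equation once more, the terms linear in
`A'` and in `A'²` cancel against those of `(E₃/y)'`; what remains is `−A⁶/(8y²) + A⁴/(8y) − 3A²/(2y⁴)`,
whose first and last terms are nonpositive. -/

noncomputable section

namespace ModifiedEnergy

/-- `v` plays the role of `u'`. -/
def energy₃ (u v : ℝ → ℝ) (z : ℝ) : ℝ :=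
  1 / 2 * v z ^ 2 + z ^ 2 / 32 * u z ^ 2 - z / 16 * u z ^ 4 + 1 / 32 * u z ^ 6

def energy₄ (u v : ℝ → ℝ) (z : ℝ) : ℝ :=
  energy₃ u v z / z + u z * v z / (2 * z ^ 2) + u z ^ 2 / (2 * z ^ 3)

variable {u v : ℝ → ℝ} {y w : ℝ}

theorem hasDerivAt_energy₃ (hu : HasDerivAt u (v y) y) (hv : HasDerivAt v w y) :
    HasDerivAt (energy₃ u v)
      (v y * (w + y ^ 2 / 16 * u y - y / 4 * u y ^ 3 + 3 / 16 * u y ^ 5)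
        + y / 16 * u y ^ 2 - u y ^ 4 / 16) y := by
  have hid := hasDerivAt_id' y
  refine (((((hv.pow 2).const_mul (1 / 2 : ℝ)).add
      (((hid.pow 2).div_const 32).mul (hu.pow 2))).sub
      ((hid.div_const 16).mul (hu.pow 4))).add ((hu.pow 6).const_mul (1 / 32 : ℝ))).congr_deriv ?_
  simp only [Pi.pow_apply]
  ring

theorem hasDerivAt_energy₄ (hu : HasDerivAt u (v y) y) (hv : HasDerivAt v w y) (hy : y ≠ 0)
    (hODE : w + y ^ 2 / 16 * u y = y / 4 * u y ^ 3 - 3 / 16 * u y ^ 5) :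
    HasDerivAt (energy₄ u v)
      (-(u y ^ 6) / (8 * y ^ 2) + u y ^ 4 / (8 * y) - 3 * u y ^ 2 / (2 * y ^ 4)) y := by
  have hid := hasDerivAt_id' y
  have hE₃ := hasDerivAt_energy₃ hu hv
  rw [show w + y ^ 2 / 16 * u y - y / 4 * u y ^ 3 + 3 / 16 * u y ^ 5 = 0 by linarith,
    mul_zero, zero_add] at hE₃
  have hw : w = y / 4 * u y ^ 3 - 3 / 16 * u y ^ 5 - y ^ 2 / 16 * u y := by linarith
  refine (((hE₃.div hid hy).add ((hu.mul hv).div ((hid.pow 2).const_mul 2) (by simp [hy]))).add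
    ((hu.pow 2).div ((hid.pow 3).const_mul 2) (by simp [hy]))).congr_deriv ?_
  simp only [Pi.pow_apply, Pi.mul_apply, energy₃, hw]
  field_simp
  ring

theorem energy₄_deriv_le (a y : ℝ) :
    -(a ^ 6) / (8 * y ^ 2) + a ^ 4 / (8 * y) - 3 * a ^ 2 / (2 * y ^ 4) ≤ a ^ 4 / (8 * y) := by
  have h₆ : 0 ≤ a ^ 6 / (8 * y ^ 2) := by positivity
  have h₂ : 0 ≤ 3 * a ^ 2 / (2 * y ^ 4) := by positivity
  rw [neg_div]
  linarith

end ModifiedEnergy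

end

/-- For a C² solution of the amplitude equation
`A'' + (y²/16) A = (y/4) A³ − (3/16) A⁵` on `(0,∞)`, the modified energy
`E₄ = E₃/y + A A'/(2y²) + A²/(2y³)` (with `E₃ = (1/2) A'² + (y²/32) A² − (y/16) A⁴ +
(1/32) A⁶`) has derivative `−A⁶/(8y²) + A⁴/(8y) − 3A²/(2y⁴)` at each `y > 0`; in
particular this derivative is at most `A⁴/(8y)`. -/
theorem stmt_14 (A : ℝ → ℝ) (hA : ContDiffOn ℝ 2 A (Set.Ioi (0 : ℝ)))
    (hODE : ∀ y : ℝ, 0 < y →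
      deriv (deriv A) y + y ^ 2 / 16 * A y = y / 4 * A y ^ 3 - 3 / 16 * A y ^ 5) :
    ∀ y : ℝ, 0 < y →
      HasDerivAt
        (fun z : ℝ =>
          (1 / 2 * deriv A z ^ 2 + z ^ 2 / 32 * A z ^ 2 - z / 16 * A z ^ 4
            + 1 / 32 * A z ^ 6) / z
          + A z * deriv A z / (2 * z ^ 2) + A z ^ 2 / (2 * z ^ 3))
        (-(A y ^ 6) / (8 * y ^ 2) + A y ^ 4 / (8 * y) - 3 * A y ^ 2 / (2 * y ^ 4)) y ∧
      -(A y ^ 6) / (8 * y ^ 2) + A y ^ 4 / (8 * y) - 3 * A y ^ 2 / (2 * y ^ 4)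
        ≤ A y ^ 4 / (8 * y) := by
  intro y hy
  have hmem : Set.Ioi (0 : ℝ) ∈ nhds y := isOpen_Ioi.mem_nhds hy
  have hA' : ContDiffOn ℝ 1 (deriv A) (Set.Ioi 0) := hA.deriv_of_isOpen isOpen_Ioi (by norm_num)
  have hAy : HasDerivAt A (deriv A y) y :=
    ((hA.contDiffAt hmem).differentiableAt (by norm_num)).hasDerivAt
  have hA'y : HasDerivAt (deriv A) (deriv (deriv A) y) y :=
    ((hA'.contDiffAt hmem).differentiableAt (by norm_num)).hasDerivAt
  exact ⟨ModifiedEnergy.hasDerivAt_energy₄ hAy hA'y hy.ne' (hODE y hy),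
    ModifiedEnergy.energy₄_deriv_le (A y) y⟩
end

section
/- There exist constants C₃ > 0 and ε₁ > 0 such that for every ε ∈ (0, ε₁) and every twice continuously differentiable A : [0,∞) → ℝ with A(0) = ε, A'(0) = 0, and A''(y) + (y²/16) A(y) = (y/4) A(y)³ − (3/16) A(y)⁵ for all y ≥ 0, one has |A(y)| ≤ C₃ ε (1 + y)^{-1/2} and |A'(y)| ≤ C₃ ε (1 + y)^{1/2} for all y ≥ 0. -/
open Real Set Filter Topology

noncomputable def Hf (A : ℝ → ℝ) (y : ℝ) : ℝ := (deriv A y)^2 + (A y)^2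
noncomputable def Sf (A : ℝ → ℝ) (y : ℝ) : ℝ := 4 * (deriv A y)^2 / y + y * (A y)^2 / 4
noncomputable def Uf (A : ℝ → ℝ) (y : ℝ) : ℝ :=
  Sf A y + 4 * (A y * deriv A y) / y^2 - (A y)^4 / 2 + (A y)^6 / (4*y)

lemma hasDerivAt_Hf {A : ℝ → ℝ} (hd1 : Differentiable ℝ A) (hd2 : Differentiable ℝ (deriv A))
    (x : ℝ) :
    HasDerivAt (Hf A) (2*(deriv A x)*(deriv (deriv A) x) + 2*(A x)*(deriv A x)) x := by
  have h := ((hd2 x).hasDerivAt.pow 2).add ((hd1 x).hasDerivAt.pow 2)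
  have e : (2*(deriv A x)*(deriv (deriv A) x) + 2*(A x)*(deriv A x))
      = ((2:ℕ) * (deriv A x)^(2-1) * deriv (deriv A) x + (2:ℕ) * (A x)^(2-1) * deriv A x) := by
    push_cast; ring
  rw [e]; exact h

lemma hasDerivAt_Uf {A : ℝ → ℝ} (hd1 : Differentiable ℝ A) (hd2 : Differentiable ℝ (deriv A))
    {x : ℝ} (hx : 0 < x)
    (heq' : deriv (deriv A) x = x/4*(A x)^3 - 3/16*(A x)^5 - x^2/16*(A x)) :
    HasDerivAt (Uf A)
      (-8*(A x * deriv A x)/x^3 + (A x)^4/x - (A x)^6/x^2) x := by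
  have hb := (hd1 x).hasDerivAt
  have hc := (hd2 x).hasDerivAt
  have p1 := (((hd2 x).hasDerivAt.pow 2).const_mul 4).div (hasDerivAt_id' x) hx.ne'
  have p2 := ((hasDerivAt_id' x).mul (hb.pow 2)).div_const 4
  have p3 := ((hb.mul hc).const_mul 4).div (hasDerivAt_pow 2 x) (pow_ne_zero 2 hx.ne')
  have p4 := (hb.pow 4).div_const 2
  have p5 := (hb.pow 6).div ((hasDerivAt_id' x).const_mul 4) (by positivity)
  have h := (((p1.add p2).add p3).sub p4).add p5
  have goal_eq : HasDerivAt (fun y => 4 * (deriv A y)^2 / y + y * (A y)^2 / 4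
      + 4 * (A y * deriv A y) / y^2 - (A y)^4 / 2 + (A y)^6 / (4*y))
      (-8*(A x * deriv A x)/x^3 + (A x)^4/x - (A x)^6/x^2) x := by
    refine h.congr_deriv ?_
    rw [heq']
    simp only [Pi.pow_apply, Pi.mul_apply]
    field_simp
    ring
  exact goal_eq

lemma part1_arith (a b x : ℝ) (hx0 : 0 ≤ x) (hx8 : x ≤ 8) (ha : a^2 ≤ 1) :
    2*b*(x/4*a^3 - 3/16*a^5 - x^2/16*a) + 2*a*b ≤ 8*(b^2 + a^2) := by
  have h64 : (0:ℝ) ≤ 64 - x^2 := by nlinarith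
  have t1 : 2*a*b*(1 - x^2/16) ≤ 5*(a^2+b^2) := by
    nlinarith [sq_nonneg (a-b), mul_nonneg (mul_nonneg hx0 hx0) (sq_nonneg (a+b)),
      mul_nonneg h64 (sq_nonneg (a+b)), sq_nonneg (a+b)]
  have t2 : x/2*(a^3*b) ≤ 2*(a^2+b^2) := by
    nlinarith [mul_nonneg hx0 (sq_nonneg (a*a*a - b)),
      mul_nonneg (by linarith : (0:ℝ) ≤ 8 - x) (add_nonneg (sq_nonneg (a*a*a)) (sq_nonneg b)),
      mul_nonneg (sub_nonneg.2 ha) (sq_nonneg (a*a)),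
      mul_nonneg (sub_nonneg.2 ha) (sq_nonneg a)]
  have t3 : -(3/8)*(a^5*b) ≤ (3/16)*(a^2+b^2) := by
    nlinarith [sq_nonneg (a*a*a + a*a*b), mul_nonneg (sub_nonneg.2 ha) (sq_nonneg a),
      mul_nonneg (sub_nonneg.2 ha) (sq_nonneg (a*a)),
      mul_nonneg (sub_nonneg.2 ha) (sq_nonneg (a*b)), sq_nonneg b]
  nlinarith [t1, t2, t3]

lemma part1 {A : ℝ → ℝ} (hd1 : Differentiable ℝ A) (hd2 : Differentiable ℝ (deriv A))
    (heq : ∀ y : ℝ, 0 ≤ y →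
      deriv (deriv A) y + y ^ 2 / 16 * A y = y / 4 * A y ^ 3 - 3 / 16 * A y ^ 5)
    (c : ℝ) (hc0 : 0 ≤ c) (hc8 : c ≤ 8)
    (hbdd : ∀ t, 0 < t → t < c → Hf A t ≤ 1) :
    Hf A c ≤ Hf A 0 * Real.exp 64 := by
  set W : ℝ → ℝ := fun y => Hf A y * Real.exp (-(8*y)) with hW_def
  have hW : ∀ x : ℝ, HasDerivAt W
      ((2*(deriv A x)*(deriv (deriv A) x) + 2*(A x)*(deriv A x)) * Real.exp (-(8*x))
        + Hf A x * (Real.exp (-(8*x)) * -(8*1))) x := by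
    intro x
    exact (hasDerivAt_Hf hd1 hd2 x).mul (((hasDerivAt_id' x).const_mul (8:ℝ)).neg.exp)
  have hanti : AntitoneOn W (Icc 0 c) := by
    apply antitoneOn_of_deriv_nonpos (convex_Icc 0 c)
    · exact fun x _ => (hW x).continuousAt.continuousWithinAt
    · intro x hx
      exact (hW x).differentiableAt.differentiableWithinAt
    · intro x hx
      rw [interior_Icc] at hx
      rw [(hW x).deriv]
      have hx0 : 0 < x := hx.1
      have hxc : x < c := hx.2
      have hH1 : Hf A x ≤ 1 := hbdd x hx0 hxc
      have ha1 : (A x)^2 ≤ 1 := by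
        have : (deriv A x)^2 ≥ 0 := sq_nonneg _
        simp only [Hf] at hH1; linarith
      have heq' : deriv (deriv A) x = x/4*(A x)^3 - 3/16*(A x)^5 - x^2/16*(A x) := by
        have := heq x hx0.le; linarith
      have key : 2*(deriv A x)*(deriv (deriv A) x) + 2*(A x)*(deriv A x)
          ≤ 8 * Hf A x := by
        rw [heq']
        have := part1_arith (A x) (deriv A x) x hx0.le (by linarith) ha1
        simp only [Hf]; nlinarith [this]
      have hE := Real.exp_pos (-(8*x))
      nlinarith [mul_nonpos_of_nonpos_of_nonneg
        (by linarith : 2*(deriv A x)*(deriv (deriv A) x) + 2*(A x)*(deriv A x) - 8*Hf A x ≤ 0)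
        hE.le]
  have h1 : W c ≤ W 0 := hanti ⟨le_refl 0, hc0⟩ ⟨hc0, le_refl c⟩ hc0
  have hW0 : W 0 = Hf A 0 := by simp [hW_def]
  have hWc : W c = Hf A c * Real.exp (-(8*c)) := rfl
  have hH0 : 0 ≤ Hf A 0 := by simp only [Hf]; positivity
  have hexp : Real.exp (8*c) ≤ Real.exp 64 := Real.exp_le_exp.2 (by linarith)
  have h2 : Hf A c = W c * Real.exp (8*c) := by
    rw [hWc, mul_assoc, ← Real.exp_add]; simp
  rw [h2]
  calc W c * Real.exp (8*c) ≤ Hf A 0 * Real.exp (8*c) := by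
        apply mul_le_mul_of_nonneg_right _ (Real.exp_pos _).le
        rw [← hW0]; exact h1
    _ ≤ Hf A 0 * Real.exp 64 := mul_le_mul_of_nonneg_left hexp hH0

lemma arith_facts (a b x s : ℝ) (hx : 8 ≤ x) (hs : s = 4*b^2/x + x*a^2/4) (hs1 : s ≤ 1) :
    0 ≤ s ∧ x*a^2 ≤ 4*s ∧ -s ≤ a*b ∧ a*b ≤ s ∧ x^2*a^4 ≤ 16*s^2 ∧ a^6*x ≤ s ∧ s^2 ≤ s := by
  have hx0 : (0:ℝ) < x := by linarith
  have hs0 : 0 ≤ s := by rw [hs]; positivity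
  have hb2 : (0:ℝ) ≤ 4*b^2/x := by positivity
  have ha2 : (0:ℝ) ≤ x*a^2/4 := by positivity
  have hP : x*a^2 ≤ 4*s := by rw [hs]; linarith
  have hQ : 4*b^2 ≤ x*s := by
    have h1 : 4*b^2/x ≤ s := by rw [hs]; linarith
    calc 4*b^2 = (4*b^2/x)*x := by field_simp
      _ ≤ s*x := mul_le_mul_of_nonneg_right h1 hx0.le
      _ = x*s := mul_comm _ _
  have hab2 : (a*b)^2 ≤ s^2 := by
    have h := mul_le_mul hP hQ (by positivity) (by linarith)
    nlinarith [h, hx0]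
  have habU : a*b ≤ s := by nlinarith [hab2, hs0, sq_nonneg (a*b - s), sq_nonneg (a*b + s)]
  have habL : -s ≤ a*b := by nlinarith [hab2, hs0, sq_nonneg (a*b - s), sq_nonneg (a*b + s)]
  have h4 : x^2*a^4 ≤ 16*s^2 := by
    have h := pow_le_pow_left₀ (by positivity) hP 2
    nlinarith [h]
  have hs2 : s^2 ≤ s := by nlinarith
  have h64 : (64:ℝ) ≤ x^2 := by nlinarith
  have h6x : a^6*x ≤ s := by
    have h3 : (x*a^2)^3 ≤ (4*s)^3 := pow_le_pow_left₀ (by positivity) hP 3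
    have hs3 : s^3 ≤ s := by nlinarith
    have key : x^2*(a^6*x) ≤ 64*s := by nlinarith [h3, hs3]
    have ha6x : (0:ℝ) ≤ a^6*x := by positivity
    nlinarith [key, mul_nonneg (by linarith : (0:ℝ) ≤ x^2 - 64) ha6x]
  exact ⟨hs0, hP, habL, habU, h4, h6x, hs2⟩

lemma arith_G12 (a b x s : ℝ) (hx : 8 ≤ x) (hs : s = 4*b^2/x + x*a^2/4) (hs1 : s ≤ 1) :
    (3/4)*s ≤ s + 4*(a*b)/x^2 - a^4/2 + a^6/(4*x) ∧
    s + 4*(a*b)/x^2 - a^4/2 + a^6/(4*x) ≤ (5/4)*s := by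
  obtain ⟨hs0, hP, habL, habU, h4, h6x, hs2⟩ := arith_facts a b x s hx hs hs1
  have hx0 : (0:ℝ) < x := by linarith
  have h64 : (64:ℝ) ≤ x^2 := by nlinarith
  have n1 : 64*s ≤ s*x^2 := by nlinarith
  have n4 : (0:ℝ) ≤ a^6*x := by positivity
  constructor
  · have hid : s + 4*(a*b)/x^2 - a^4/2 + a^6/(4*x) - (3/4)*s
        = (s*x^2 + 16*(a*b) - 2*(x^2*a^4) + a^6*x)/(4*x^2) := by
      field_simp; ring
    have num : 0 ≤ s*x^2 + 16*(a*b) - 2*(x^2*a^4) + a^6*x := by nlinarith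
    have := div_nonneg num (by positivity : (0:ℝ) ≤ 4*x^2)
    linarith [hid ▸ this]
  · have hid : (5/4)*s - (s + 4*(a*b)/x^2 - a^4/2 + a^6/(4*x))
        = (s*x^2 - 16*(a*b) + 2*(x^2*a^4) - a^6*x)/(4*x^2) := by
      field_simp; ring
    have num : 0 ≤ s*x^2 - 16*(a*b) + 2*(x^2*a^4) - a^6*x := by nlinarith
    have := div_nonneg num (by positivity : (0:ℝ) ≤ 4*x^2)
    linarith [hid ▸ this]

lemma arith_G3 (a b x s : ℝ) (hx : 8 ≤ x) (hs : s = 4*b^2/x + x*a^2/4) (hs1 : s ≤ 1) :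
    -8*(a*b)/x^3 + a^4/x - a^6/x^2
      ≤ 32*(s + 4*(a*b)/x^2 - a^4/2 + a^6/(4*x))/x^3 := by
  obtain ⟨hs0, hP, habL, habU, h4, h6x, hs2⟩ := arith_facts a b x s hx hs hs1
  have hx0 : (0:ℝ) < x := by linarith
  have h64 : (64:ℝ) ≤ x^2 := by nlinarith
  have n1 : 64*s ≤ s*x^2 := by nlinarith
  have c1 : x^2*a^4*x^2 ≤ 16*s^2*x^2 := by nlinarith [mul_nonneg (sub_nonneg.2 h4) (sq_nonneg x)]
  have c2 : s^2*x^2 ≤ s*x^2 := by nlinarith [mul_nonneg (sub_nonneg.2 hs2) (sq_nonneg x)]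
  have c3 : -(s*x^2) ≤ (a*b)*x^2 := by
    nlinarith [mul_nonneg (by linarith : (0:ℝ) ≤ a*b + s) (sq_nonneg x)]
  have n4 : (0:ℝ) ≤ a^6*x := by positivity
  have n5 : (0:ℝ) ≤ a^6*x^3 := by positivity
  have num : 0 ≤ 128*(s*x^2) + 512*(a*b) + 32*((a*b)*x^2) - 64*(x^2*a^4)
      - 4*(x^2*a^4*x^2) + 32*(a^6*x) + 4*(a^6*x^3) := by nlinarith
  have hid : 32*(s + 4*(a*b)/x^2 - a^4/2 + a^6/(4*x))/x^3
      - (-8*(a*b)/x^3 + a^4/x - a^6/x^2)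
      = (128*(s*x^2) + 512*(a*b) + 32*((a*b)*x^2) - 64*(x^2*a^4)
        - 4*(x^2*a^4*x^2) + 32*(a^6*x) + 4*(a^6*x^3))/(4*x^5) := by
    field_simp; ring
  have := div_nonneg num (by positivity : (0:ℝ) ≤ 4*x^5)
  linarith [hid ▸ this]

lemma part2 {A : ℝ → ℝ} (hd1 : Differentiable ℝ A) (hd2 : Differentiable ℝ (deriv A))
    (heq : ∀ y : ℝ, 0 ≤ y →
      deriv (deriv A) y + y ^ 2 / 16 * A y = y / 4 * A y ^ 3 - 3 / 16 * A y ^ 5)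
    (c : ℝ) (hc : 8 ≤ c) (hbdd : ∀ t, 8 ≤ t → t ≤ c → Sf A t ≤ 1) :
    Sf A c ≤ 5 * Sf A 8 := by
  have hUS : ∀ t, 8 ≤ t → Sf A t ≤ 1 →
      (3/4)*Sf A t ≤ Uf A t ∧ Uf A t ≤ (5/4)*Sf A t := by
    intro t ht hS1
    exact arith_G12 (A t) (deriv A t) t (Sf A t) ht rfl hS1
  set V : ℝ → ℝ := fun y => Uf A y * Real.exp (16/y^2) with hV_def
  have hV : ∀ x : ℝ, 0 < x → HasDerivAt V
      ((-8*(A x * deriv A x)/x^3 + (A x)^4/x - (A x)^6/x^2) * Real.exp (16/x^2)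
        + Uf A x * (Real.exp (16/x^2) * ((0*x^2 - 16*(2*x^(2-1)))/(x^2)^2))) x := by
    intro x hx
    have heq' : deriv (deriv A) x = x/4*(A x)^3 - 3/16*(A x)^5 - x^2/16*(A x) := by
      have := heq x hx.le; linarith
    exact (hasDerivAt_Uf hd1 hd2 hx heq').mul
      (((hasDerivAt_const x (16:ℝ)).div (hasDerivAt_pow 2 x) (pow_ne_zero 2 hx.ne')).exp)
  have hanti : AntitoneOn V (Icc 8 c) := by
    apply antitoneOn_of_deriv_nonpos (convex_Icc 8 c)
    · intro x hx
      exact (hV x (by have := hx.1; linarith)).continuousAt.continuousWithinAt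
    · intro x hx
      rw [interior_Icc] at hx
      exact (hV x (by linarith [hx.1])).differentiableAt.differentiableWithinAt
    · intro x hx
      rw [interior_Icc] at hx
      have hx8 : 8 < x := hx.1
      have hx0 : (0:ℝ) < x := by linarith
      rw [(hV x hx0).deriv]
      have hS1 : Sf A x ≤ 1 := hbdd x hx8.le hx.2.le
      have hG3 := arith_G3 (A x) (deriv A x) x (Sf A x) hx8.le rfl hS1
      have hUeq : Sf A x + 4*(A x*deriv A x)/x^2 - (A x)^4/2 + (A x)^6/(4*x) = Uf A x := rfl
      rw [hUeq] at hG3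
      have hE := Real.exp_pos (16/x^2)
      have hfac : Real.exp (16/x^2) * ((0*x^2 - 16*(2*x^(2-1)))/(x^2)^2)
          = Real.exp (16/x^2) * (-(32/x^3)) := by
        congr 1
        field_simp
        ring
      rw [hfac]
      have h32 : 32*Uf A x/x^3 = Uf A x * (32/x^3) := by ring
      have key : (-8*(A x * deriv A x)/x^3 + (A x)^4/x - (A x)^6/x^2) - 32*Uf A x/x^3 ≤ 0 := by
        linarith
      nlinarith [mul_nonpos_of_nonpos_of_nonneg key hE.le, h32]
  have hScnonneg : 0 ≤ Sf A c := by
    have hc0 : (0:ℝ) < c := by linarith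
    simp only [Sf]; positivity
  have hS8nonneg : 0 ≤ Sf A 8 := by simp only [Sf]; positivity
  have hS81 : Sf A 8 ≤ 1 := hbdd 8 le_rfl hc
  have hSc1 : Sf A c ≤ 1 := hbdd c hc le_rfl
  obtain ⟨hU8l, hU8u⟩ := hUS 8 le_rfl hS81
  obtain ⟨hUcl, hUcu⟩ := hUS c hc hSc1
  have hmono : V c ≤ V 8 := hanti ⟨le_refl 8, hc⟩ ⟨hc, le_refl c⟩ hc
  have hUc0 : 0 ≤ Uf A c := by linarith
  have hexpc : (1:ℝ) ≤ Real.exp (16/c^2) := by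
    rw [Real.one_le_exp_iff]; positivity
  have h1 : Uf A c ≤ V c := by
    have := mul_le_mul_of_nonneg_left hexpc hUc0
    simpa [hV_def] using this
  have hexp8 : Real.exp (16/(8:ℝ)^2) ≤ 3 := by
    have h14 : (16/(8:ℝ)^2) = 1/4 := by norm_num
    rw [h14]
    calc Real.exp (1/4) ≤ Real.exp 1 := Real.exp_le_exp.2 (by norm_num)
      _ ≤ 3 := by linarith [Real.exp_one_lt_d9]
  have hU80 : 0 ≤ Uf A 8 := by linarith
  have h2 : V 8 ≤ 3 * Uf A 8 := by
    have : Uf A 8 * Real.exp (16/(8:ℝ)^2) ≤ Uf A 8 * 3 := mul_le_mul_of_nonneg_left hexp8 hU80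
    simpa [hV_def, mul_comm] using this
  have h3 : Sf A c ≤ (4/3) * Uf A c := by linarith
  calc Sf A c ≤ (4/3) * Uf A c := h3
    _ ≤ (4/3) * (3 * Uf A 8) := by linarith
    _ ≤ (4/3) * (3 * ((5/4) * Sf A 8)) := by linarith
    _ = 5 * Sf A 8 := by ring

lemma rpow_goal1 (u y C : ℝ) (hy : 0 ≤ y) (hC : 0 ≤ C) (h : u^2 * (1+y) ≤ C^2) :
    |u| ≤ C * (1+y) ^ (-(1:ℝ)/2) := by
  have h1y : (0:ℝ) < 1+y := by linarith
  have hs : 0 < Real.sqrt (1+y) := Real.sqrt_pos.2 h1y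
  rw [show (-(1:ℝ)/2) = -(1/2:ℝ) by norm_num, Real.rpow_neg h1y.le, ← Real.sqrt_eq_rpow,
    ← div_eq_mul_inv, le_div_iff₀ hs]
  have habs : |u| * Real.sqrt (1+y) = |u * Real.sqrt (1+y)| := by
    rw [abs_mul, abs_of_nonneg hs.le]
  rw [habs]
  have hsq : (u * Real.sqrt (1+y))^2 ≤ C^2 := by
    rw [mul_pow, Real.sq_sqrt h1y.le]; exact h
  calc |u * Real.sqrt (1+y)| = Real.sqrt ((u * Real.sqrt (1+y))^2) := (Real.sqrt_sq_eq_abs _).symm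
    _ ≤ Real.sqrt (C^2) := Real.sqrt_le_sqrt hsq
    _ = C := Real.sqrt_sq hC

lemma rpow_goal2 (u y C : ℝ) (hy : 0 ≤ y) (hC : 0 ≤ C) (h : u^2 ≤ C^2 * (1+y)) :
    |u| ≤ C * (1+y) ^ ((1:ℝ)/2) := by
  have h1y : (0:ℝ) < 1+y := by linarith
  rw [← Real.sqrt_eq_rpow]
  calc |u| = Real.sqrt (u^2) := (Real.sqrt_sq_eq_abs u).symm
    _ ≤ Real.sqrt (C^2 * (1+y)) := Real.sqrt_le_sqrt h
    _ = Real.sqrt (C^2) * Real.sqrt (1+y) := Real.sqrt_mul (by positivity) _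
    _ = C * Real.sqrt (1+y) := by rw [Real.sqrt_sq hC]

set_option maxHeartbeats 1000000 in
/-- There are `C₃ > 0` and `ε₁ > 0` such that for every `ε ∈ (0, ε₁)`,
any C² solution on `[0,∞)` of the amplitude equation
`A'' + (y²/16) A = (y/4) A³ − (3/16) A⁵` with `A(0) = ε`, `A'(0) = 0` satisfies
`|A(y)| ≤ C₃ ε (1+y)^{-1/2}` and `|A'(y)| ≤ C₃ ε (1+y)^{1/2}` for all `y ≥ 0`. -/
theorem stmt_15 :
    ∃ C₃ ε₁ : ℝ, 0 < C₃ ∧ 0 < ε₁ ∧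
      ∀ ε : ℝ, 0 < ε → ε < ε₁ →
        ∀ A : ℝ → ℝ, ContDiff ℝ 2 A → A 0 = ε → deriv A 0 = 0 →
          (∀ y : ℝ, 0 ≤ y →
            deriv (deriv A) y + y ^ 2 / 16 * A y = y / 4 * A y ^ 3 - 3 / 16 * A y ^ 5) →
          ∀ y : ℝ, 0 ≤ y →
            |A y| ≤ C₃ * ε * (1 + y) ^ (-(1 : ℝ) / 2) ∧
            |deriv A y| ≤ C₃ * ε * (1 + y) ^ ((1 : ℝ) / 2) := by
  refine ⟨Real.exp 40, Real.exp (-35), Real.exp_pos _, Real.exp_pos _, ?_⟩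
  intro ε hε hεlt A hA hA0 hA'0 heq
  have hd1 : Differentiable ℝ A := hA.differentiable (by norm_num)
  have hd2 : Differentiable ℝ (deriv A) := by
    have h : ContDiff ℝ ((1:ℕ∞)+1) A := by exact_mod_cast hA
    exact ((contDiff_succ_iff_deriv.mp h).2.2).differentiable (by norm_num)
  -- numeric facts
  have hexp3 : (4:ℝ) ≤ Real.exp 3 := by linarith [Real.add_one_le_exp (3:ℝ)]
  have hexp6 : (16:ℝ) ≤ Real.exp 6 := by
    have h : Real.exp 6 = Real.exp 3 * Real.exp 3 := by rw [← Real.exp_add]; norm_num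
    nlinarith
  have hexp8 : (9:ℝ) ≤ Real.exp 8 := by linarith [Real.add_one_le_exp (8:ℝ)]
  have hexp16 : (81:ℝ) ≤ Real.exp 16 := by
    have h : Real.exp 16 = Real.exp 8 * Real.exp 8 := by rw [← Real.exp_add]; norm_num
    nlinarith
  have hsmall : ε^2 * Real.exp 64 < 1/16 := by
    have h1 : ε^2 < (Real.exp (-35))^2 := by nlinarith
    have h2 : (Real.exp (-35:ℝ))^2 * Real.exp 64 = Real.exp (-6) := by
      rw [sq, ← Real.exp_add, ← Real.exp_add]; norm_num
    have h3 : Real.exp (-6:ℝ) ≤ 1/16 := by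
      rw [Real.exp_neg]
      rw [inv_le_comm₀ (Real.exp_pos 6) (by norm_num)]
      simpa using hexp6
    calc ε^2 * Real.exp 64 < (Real.exp (-35))^2 * Real.exp 64 :=
          mul_lt_mul_of_pos_right h1 (Real.exp_pos _)
      _ = Real.exp (-6) := h2
      _ ≤ 1/16 := h3
  have hH0 : Hf A 0 = ε^2 := by simp [Hf, hA'0, hA0]
  -- bootstrap on [0,8]
  have boot1 : ∀ c, 0 ≤ c → c ≤ 8 → Hf A c ≤ ε^2 * Real.exp 64 := by
    have hHcont : Continuous (Hf A) := (hd2.continuous.pow 2).add (hd1.continuous.pow 2)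
    have claim : ∀ t, 0 ≤ t → t ≤ 8 → Hf A t ≤ 1 := by
      by_contra hcon
      push_neg at hcon
      obtain ⟨t₀, ht0, ht8, ht1⟩ := hcon
      set B : Set ℝ := Icc 0 8 ∩ (Hf A)⁻¹' (Ici 1) with hB_def
      have hBclosed : IsClosed B := isClosed_Icc.inter (isClosed_Ici.preimage hHcont)
      have hBne : B.Nonempty := ⟨t₀, ⟨ht0, ht8⟩, le_of_lt ht1⟩
      have hBbdd : BddBelow B := ⟨0, fun x hx => hx.1.1⟩
      have hm := hBclosed.csInf_mem hBne hBbdd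
      set m := sInf B with hm_def
      obtain ⟨⟨hm0, hm8⟩, hm1⟩ := hm
      have hbdd : ∀ t, 0 < t → t < m → Hf A t ≤ 1 := by
        intro t ht0' htm
        by_contra h'
        push_neg at h'
        have : t ∈ B := ⟨⟨ht0'.le, by linarith⟩, h'.le⟩
        have := csInf_le hBbdd this
        linarith
      have := part1 hd1 hd2 heq m hm0 hm8 hbdd
      rw [hH0] at this
      have : Hf A m < 1 := by linarith [hsmall]
      simp only [mem_preimage, mem_Ici] at hm1
      linarith
    intro c hc0 hc8
    have := part1 hd1 hd2 heq c hc0 hc8 (fun t ht0 htc => claim t ht0.le (by linarith))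
    rw [hH0] at this
    exact this
  -- seed for part 2
  have hS8 : Sf A 8 ≤ 2 * (ε^2 * Real.exp 64) := by
    have h8 := boot1 8 (by norm_num) le_rfl
    simp only [Hf] at h8
    simp only [Sf]
    nlinarith [sq_nonneg (A 8), sq_nonneg (deriv A 8)]
  have hS8nonneg : 0 ≤ Sf A 8 := by simp only [Sf]; positivity
  have h5S8 : 5 * Sf A 8 < 1 := by nlinarith
  -- bootstrap on [8,∞)
  have hScont : ContinuousOn (Sf A) (Ici 8) := by
    intro x hx
    have hx0 : (0:ℝ) < x := lt_of_lt_of_le (by norm_num) hx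
    have : ContinuousAt (Sf A) x := by
      apply ContinuousAt.add
      · exact ContinuousAt.div (continuous_const.mul (hd2.continuous.pow 2)).continuousAt
          continuousAt_id hx0.ne'
      · exact (continuousAt_id.mul ((hd1.continuous.pow 2).continuousAt)).div_const 4
    exact this.continuousWithinAt
  have boot2 : ∀ c, 8 ≤ c → Sf A c ≤ 5 * Sf A 8 := by
    have claim : ∀ t, 8 ≤ t → Sf A t ≤ 1 := by
      by_contra hcon
      push_neg at hcon
      obtain ⟨t₀, ht8, ht1⟩ := hcon
      set B : Set ℝ := Ici 8 ∩ (Sf A)⁻¹' (Ici 1) with hB_def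
      have hBclosed : IsClosed B :=
        hScont.preimage_isClosed_of_isClosed isClosed_Ici isClosed_Ici
      have hBne : B.Nonempty := ⟨t₀, ht8, le_of_lt ht1⟩
      have hBbdd : BddBelow B := ⟨8, fun x hx => hx.1⟩
      have hmmem := hBclosed.csInf_mem hBne hBbdd
      set m := sInf B with hm_def
      obtain ⟨hm8, hm1⟩ := hmmem
      simp only [mem_preimage, mem_Ici] at hm1
      have hIco : ∀ t ∈ Ico (8:ℝ) m, Sf A t ≤ 1 := by
        intro t ht
        by_contra h'
        push_neg at h'
        have : t ∈ B := ⟨ht.1, h'.le⟩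
        have := csInf_le hBbdd this
        linarith [ht.2]
      rcases eq_or_lt_of_le (show (8:ℝ) ≤ m from hm8) with heq8 | hm8'
      · have : Sf A 8 ≥ 1 := by rw [heq8]; exact hm1
        linarith
      · have hSm1 : Sf A m ≤ 1 := by
          have hne : (𝓝[Ico 8 m] m).NeBot := by
            rw [← mem_closure_iff_nhdsWithin_neBot, closure_Ico (by linarith : (8:ℝ) ≠ m)]
            exact ⟨hm8, le_rfl⟩
          have htend : Filter.Tendsto (Sf A) (𝓝[Ico 8 m] m) (𝓝 (Sf A m)) :=
            ((hScont m hm8).mono (fun t ht => ht.1)).tendsto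
          exact le_of_tendsto htend (eventually_nhdsWithin_of_forall hIco)
        have hbdd : ∀ t, 8 ≤ t → t ≤ m → Sf A t ≤ 1 := by
          intro t ht8' htm
          rcases eq_or_lt_of_le htm with h | h
          · rw [h]; exact hSm1
          · exact hIco t ⟨ht8', h⟩
        have := part2 hd1 hd2 heq m hm8 hbdd
        linarith
    intro c hc
    exact part2 hd1 hd2 heq c hc (fun t ht8 _ => claim t ht8)
  -- final bounds
  intro y hy
  have hC0 : (0:ℝ) ≤ Real.exp 40 * ε := by positivity
  have hCsq : (Real.exp 40 * ε)^2 = Real.exp 80 * ε^2 := by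
    rw [mul_pow, sq, ← Real.exp_add]; norm_num
  have he80 : Real.exp 80 = Real.exp 64 * Real.exp 16 := by rw [← Real.exp_add]; norm_num
  have hQnn : (0:ℝ) ≤ ε^2 * Real.exp 64 := by positivity
  have key1 : (A y)^2 * (1+y) ≤ Real.exp 80 * ε^2 := by
    rcases le_or_gt y 8 with hy8 | hy8
    · have hH := boot1 y hy hy8
      simp only [Hf] at hH
      have h1 : (A y)^2 ≤ ε^2 * Real.exp 64 := by nlinarith [sq_nonneg (deriv A y)]
      have h3 : (A y)^2 * (1+y) ≤ (ε^2 * Real.exp 64) * 9 :=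
        mul_le_mul h1 (by linarith) (by linarith) hQnn
      have h4 : (ε^2 * Real.exp 64) * 9 ≤ (ε^2 * Real.exp 64) * Real.exp 16 :=
        mul_le_mul_of_nonneg_left (by linarith) hQnn
      calc (A y)^2 * (1+y) ≤ (ε^2 * Real.exp 64) * 9 := h3
        _ ≤ (ε^2 * Real.exp 64) * Real.exp 16 := h4
        _ = Real.exp 80 * ε^2 := by rw [he80]; ring
    · have hy0 : (0:ℝ) < y := by linarith
      have comp1 : y*(A y)^2/4 ≤ Sf A y := by
        have hp : (0:ℝ) ≤ 4*(deriv A y)^2/y := by positivity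
        simp only [Sf]; linarith
      have hS := boot2 y hy8.le
      have h2 : (A y)^2 * y ≤ 40 * (ε^2 * Real.exp 64) := by linarith
      have h3 : (A y)^2 * (1+y) ≤ (9/8) * ((A y)^2 * y) := by
        have := mul_nonneg (sq_nonneg (A y)) (by linarith : (0:ℝ) ≤ y - 8)
        nlinarith [this]
      have h4 : (9/8) * ((A y)^2 * y) ≤ (9/8) * (40 * (ε^2 * Real.exp 64)) := by linarith
      have h5 : (45:ℝ) * (ε^2 * Real.exp 64) ≤ Real.exp 16 * (ε^2 * Real.exp 64) :=
        mul_le_mul_of_nonneg_right (by linarith) hQnn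
      calc (A y)^2 * (1+y) ≤ (9/8) * (40 * (ε^2 * Real.exp 64)) := le_trans h3 h4
        _ = 45 * (ε^2 * Real.exp 64) := by ring
        _ ≤ Real.exp 16 * (ε^2 * Real.exp 64) := h5
        _ = Real.exp 80 * ε^2 := by rw [he80]; ring
  have key2 : (deriv A y)^2 ≤ Real.exp 80 * ε^2 * (1+y) := by
    have h1y : (1:ℝ) ≤ 1 + y := by linarith
    have he1 : (1:ℝ) ≤ Real.exp 16 := by linarith
    rcases le_or_gt y 8 with hy8 | hy8
    · have hH := boot1 y hy hy8
      simp only [Hf] at hH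
      have h1 : (deriv A y)^2 ≤ ε^2 * Real.exp 64 := by nlinarith [sq_nonneg (A y)]
      have h2 : ε^2 * Real.exp 64 ≤ Real.exp 80 * ε^2 := by
        rw [he80]
        nlinarith [mul_le_mul_of_nonneg_left he1 hQnn]
      have h3 : Real.exp 80 * ε^2 ≤ Real.exp 80 * ε^2 * (1+y) :=
        le_mul_of_one_le_right (by positivity) h1y
      linarith
    · have hy0 : (0:ℝ) < y := by linarith
      have comp2 : 4*(deriv A y)^2/y ≤ Sf A y := by
        have hp : (0:ℝ) ≤ y*(A y)^2/4 := by positivity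
        simp only [Sf]; linarith
      have hS := boot2 y hy8.le
      have h1 : 4*(deriv A y)^2/y ≤ 10 * (ε^2 * Real.exp 64) := by linarith
      have h2 : 4*(deriv A y)^2 ≤ (10 * (ε^2 * Real.exp 64)) * y := by
        rw [div_le_iff₀ hy0] at h1; linarith
      have h3 : (deriv A y)^2 ≤ (10 * (ε^2 * Real.exp 64)) * (1+y) / 4 := by
        have : (10 * (ε^2 * Real.exp 64)) * y ≤ (10 * (ε^2 * Real.exp 64)) * (1+y) :=
          mul_le_mul_of_nonneg_left (by linarith) (by positivity)
        linarith
      have h4 : (10 * (ε^2 * Real.exp 64)) * (1+y) / 4 ≤ (Real.exp 16 * (ε^2 * Real.exp 64)) * (1+y) := by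
        have hx : (10:ℝ)/4 * (ε^2 * Real.exp 64) ≤ Real.exp 16 * (ε^2 * Real.exp 64) :=
          mul_le_mul_of_nonneg_right (by linarith) hQnn
        have := mul_le_mul_of_nonneg_right hx (by linarith : (0:ℝ) ≤ 1+y)
        linarith [this]
      have h5 : (Real.exp 16 * (ε^2 * Real.exp 64)) * (1+y) = Real.exp 80 * ε^2 * (1+y) := by
        rw [he80]; ring
      linarith
  constructor
  · apply rpow_goal1 _ _ _ hy hC0
    rw [hCsq]; exact key1
  · apply rpow_goal2 _ _ _ hy hC0
    rw [hCsq]; exact key2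
end

section
/- For every ω ∈ ℝ, the function F : [0,∞) → ℝ defined by F(η) = ∫₀^η sin(η − s) · sin(s + ω)³ ds is unbounded, i.e. sup_{η ≥ 0} |F(η)| = ∞. -/
/-! Expanding `sin (η - s) · sin (s + ω)³` into cosines of linear functions of `s`, one of the
terms, `-(3/8) cos ((η - s) + (s + ω)) = -(3/8) cos (η + ω)`, does not depend on `s`: the cube
contains the frequency of the kernel. Integrating it over `[0, η]` gives the secular term
`-(3/8) η cos (η + ω)`, while all the other terms integrate to a bounded function of `η`.
Along `η = 2πn - ω` the secular term is `-(3/8) η`, so the integral is unbounded. -/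

open Real Filter

theorem Real.sin_mul_sin_pow_three (u v : ℝ) :
    sin u * sin v ^ 3 =
      3 / 8 * (cos (u - v) - cos (u + v)) - 1 / 8 * (cos (u - 3 * v) - cos (u + 3 * v)) := by
  simp only [cos_sub, cos_add, cos_three_mul, sin_three_mul]
  ring

/-- The bounded part of a primitive, in `s`, of `sin (η - s) * sin (s + ω) ^ 3`. -/
noncomputable def oscillatoryPart (η ω s : ℝ) : ℝ :=
  3 / 16 * sin (2 * s + (ω - η)) - 1 / 32 * sin (4 * s + (3 * ω - η))
    + 1 / 16 * sin (2 * s + (3 * ω + η))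

theorem abs_oscillatoryPart_le (η ω s : ℝ) : |oscillatoryPart η ω s| ≤ 9 / 32 := by
  have h₁ := abs_le.mp (abs_sin_le_one (2 * s + (ω - η)))
  have h₂ := abs_le.mp (abs_sin_le_one (4 * s + (3 * ω - η)))
  have h₃ := abs_le.mp (abs_sin_le_one (2 * s + (3 * ω + η)))
  rw [oscillatoryPart, abs_le]
  constructor <;> linarith [h₁.1, h₁.2, h₂.1, h₂.2, h₃.1, h₃.2]

theorem hasDerivAt_oscillatoryPart_sub_mul (η ω s : ℝ) :
    HasDerivAt (fun s => oscillatoryPart η ω s - s * (3 / 8 * cos (η + ω)))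
      (sin (η - s) * sin (s + ω) ^ 3) s := by
  have hlin (a b : ℝ) : HasDerivAt (fun s => a * s + b) a s := by
    simpa using ((hasDerivAt_id s).const_mul a).add_const b
  have h := ((((hlin 2 (ω - η)).sin.const_mul (3 / 16)).sub
    ((hlin 4 (3 * ω - η)).sin.const_mul (1 / 32))).add
    ((hlin 2 (3 * ω + η)).sin.const_mul (1 / 16))).sub
    (hasDerivAt_mul_const (3 / 8 * cos (η + ω)))
  refine h.congr_deriv ?_
  rw [sin_mul_sin_pow_three, show η - s - (s + ω) = -(2 * s + (ω - η)) by ring,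
    show η - s + (s + ω) = η + ω by ring,
    show η - s - 3 * (s + ω) = -(4 * s + (3 * ω - η)) by ring,
    show η - s + 3 * (s + ω) = 2 * s + (3 * ω + η) by ring, cos_neg, cos_neg]
  ring

theorem integral_sin_sub_mul_sin_add_pow_three (η ω : ℝ) :
    ∫ s in (0 : ℝ)..η, sin (η - s) * sin (s + ω) ^ 3 =
      oscillatoryPart η ω η - oscillatoryPart η ω 0 - 3 / 8 * η * cos (η + ω) := by
  rw [intervalIntegral.integral_eq_sub_of_hasDerivAt
    (fun s _ => hasDerivAt_oscillatoryPart_sub_mul η ω s)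
    ((by fun_prop : Continuous fun s => sin (η - s) * sin (s + ω) ^ 3).intervalIntegrable _ _)]
  ring

theorem abs_integral_sin_sub_mul_sin_add_pow_three_add_le (η ω : ℝ) :
    |(∫ s in (0 : ℝ)..η, sin (η - s) * sin (s + ω) ^ 3) + 3 / 8 * η * cos (η + ω)|
      ≤ 9 / 16 := by
  rw [integral_sin_sub_mul_sin_add_pow_three, sub_add_cancel]
  calc |oscillatoryPart η ω η - oscillatoryPart η ω 0|
      ≤ |oscillatoryPart η ω η| + |oscillatoryPart η ω 0| := abs_sub _ _
    _ ≤ 9 / 32 + 9 / 32 :=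
      add_le_add (abs_oscillatoryPart_le _ _ _) (abs_oscillatoryPart_le _ _ _)
    _ = 9 / 16 := by norm_num

/-- For every `ω ∈ ℝ`, the Duhamel integral
`F(η) = ∫₀^η sin(η − s) sin(s + ω)³ ds` is unbounded on `[0,∞)`:
`sup_{η ≥ 0} |F(η)| = ∞`. -/
theorem stmt_17 (ω : ℝ) :
    ∀ M : ℝ, ∃ η : ℝ, 0 ≤ η ∧
      M < |∫ s in (0 : ℝ)..η, Real.sin (η - s) * Real.sin (s + ω) ^ 3| := by
  intro M
  have hη : Tendsto (fun n : ℕ => n * (2 * π) - ω) atTop atTop :=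
    tendsto_atTop_add_const_right _ _ (tendsto_natCast_atTop_atTop.atTop_mul_const two_pi_pos)
  obtain ⟨n, hη₀, hηM⟩ :=
    ((hη.eventually_ge_atTop 0).and (hη.eventually_gt_atTop (8 / 3 * (M + 1)))).exists
  set η : ℝ := n * (2 * π) - ω
  have hcos : cos (η + ω) = 1 := by rw [sub_add_cancel, cos_nat_mul_two_pi]
  refine ⟨η, hη₀, ?_⟩
  have hbound := abs_integral_sin_sub_mul_sin_add_pow_three_add_le η ω
  rw [hcos, mul_one] at hbound
  set F := ∫ s in (0 : ℝ)..η, sin (η - s) * sin (s + ω) ^ 3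
  linarith [(abs_le.mp hbound).2, neg_le_abs F]
end

section
/- Let M > 0 and let ω : [1,∞) → ℝ be twice continuously differentiable with ω'(ζ) ≤ −1/2, |ω'(ζ)| ≤ M, and |ω''(ζ)| ≤ M/ζ for all ζ ≥ 1. Then there exist a real constant c and a constant C > 0 such that for every η ≥ 1, |∫₁^η (cos(ω(ζ))/ζ) dζ − c| ≤ C/η. -/
open MeasureTheory Set intervalIntegral

/-!
Since `ω' ≠ 0`, write `cos ω / ζ = (sin ω)' / (ζ ω')` and integrate by parts: with
`φ = sin ω / (ζ ω')` one has `cos ω / ζ = φ' + sin ω · (ω' + ζ ω'') / (ζ ω')²`.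
The boundary term satisfies `|φ(η)| ≤ 2/η`, and the remainder is `O(ζ⁻²)`, hence integrable on
`(1, ∞)` with tail `O(1/η)`. The constant is `c = -φ(1) + ∫₁^∞ sin ω · (ω' + ζ ω'') / (ζ ω')²`.
-/

theorem integrableOn_Ioi_and_abs_integral_le_of_abs_le_div_sq {h : ℝ → ℝ} {a B : ℝ} (ha : 0 < a)
    (hc : ContinuousOn h (Ici a)) (hb : ∀ x, a ≤ x → |h x| ≤ B / x ^ 2) :
    IntegrableOn h (Ioi a) ∧ |∫ x in Ioi a, h x| ≤ B / a := by
  have hdom : IntegrableOn (fun x : ℝ => B * x ^ (-2 : ℝ)) (Ioi a) :=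
    (integrableOn_Ioi_rpow_of_lt (by norm_num) ha).const_mul B
  have hle : ∀ᵐ x ∂(volume.restrict (Ioi a)), ‖h x‖ ≤ B * x ^ (-2 : ℝ) := by
    filter_upwards [ae_restrict_mem measurableSet_Ioi] with x hx
    have hx0 : 0 < x := ha.trans hx
    rw [Real.norm_eq_abs, Real.rpow_neg hx0.le, Real.rpow_two, ← div_eq_mul_inv]
    exact hb x (le_of_lt hx)
  refine ⟨hdom.mono' ((hc.mono Ioi_subset_Ici_self).aestronglyMeasurable measurableSet_Ioi) hle,
    ?_⟩
  calc |∫ x in Ioi a, h x| ≤ ∫ x in Ioi a, B * x ^ (-2 : ℝ) := norm_integral_le_of_norm_le hdom hle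
    _ = B / a := by
      rw [MeasureTheory.integral_const_mul, integral_Ioi_rpow_of_lt (by norm_num) ha]
      norm_num [Real.rpow_neg_one, div_eq_mul_inv]

theorem exists_abs_integral_sub_le_of_hasDerivAt {φ ψ h : ℝ → ℝ} {a A B : ℝ} (ha : 0 < a)
    (hψ : ContinuousOn ψ (Ici a)) (hh : ContinuousOn h (Ici a))
    (hφ : ∀ x, a ≤ x → HasDerivAt φ (ψ x + h x) x)
    (hφb : ∀ x, a ≤ x → |φ x| ≤ A / x) (hhb : ∀ x, a ≤ x → |h x| ≤ B / x ^ 2) :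
    ∃ c, ∀ η, a ≤ η → |(∫ x in a..η, ψ x) - c| ≤ (A + B) / η := by
  refine ⟨-φ a - ∫ x in Ioi a, h x, fun η hη => ?_⟩
  have hsub : Icc a η ⊆ Ici a := Icc_subset_Ici_self
  have hψi : IntervalIntegrable ψ volume a η :=
    (hψ.mono hsub).intervalIntegrable_of_Icc hη
  have hhi : IntervalIntegrable h volume a η :=
    (hh.mono hsub).intervalIntegrable_of_Icc hη
  have hftc : ∫ x in a..η, (ψ x + h x) = φ η - φ a :=
    integral_eq_sub_of_hasDerivAt (fun x hx => hφ x (uIcc_of_le hη ▸ hx).1) (hψi.add hhi)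
  obtain ⟨hintη, htail⟩ := integrableOn_Ioi_and_abs_integral_le_of_abs_le_div_sq (ha.trans_le hη)
    (hh.mono (Ici_subset_Ici.mpr hη)) fun x hx => hhb x (hη.trans hx)
  have hsplit : (∫ x in a..η, h x) + ∫ x in Ioi η, h x = ∫ x in Ioi a, h x :=
    integral_interval_add_Ioi' hhi hintη
  have hrepr : (∫ x in a..η, ψ x) - (-φ a - ∫ x in Ioi a, h x) = φ η + ∫ x in Ioi η, h x := by
    rw [integral_add hψi hhi] at hftc
    linarith
  rw [hrepr, add_div]
  exact (abs_add_le _ _).trans (add_le_add (hφb η hη) htail)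

theorem hasDerivAt_sin_comp_div_mul_deriv {ω : ℝ → ℝ} {x : ℝ} (hx : x ≠ 0)
    (hω₀ : deriv ω x ≠ 0) (hω : DifferentiableAt ℝ ω x)
    (hω' : DifferentiableAt ℝ (deriv ω) x) :
    HasDerivAt (fun ζ => Real.sin (ω ζ) / (ζ * deriv ω ζ))
      (Real.cos (ω x) / x
        - Real.sin (ω x) * (deriv ω x + x * deriv (deriv ω) x) / (x * deriv ω x) ^ 2) x := by
  refine (hω.hasDerivAt.sin.fun_div ((hasDerivAt_id' x).fun_mul hω'.hasDerivAt)
    (mul_ne_zero hx hω₀)).congr_deriv ?_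
  field_simp

theorem abs_div_mul_le_two_div {s d x : ℝ} (hx : 0 < x) (hs : |s| ≤ 1) (hd : 1 / 2 ≤ |d|) :
    |s / (x * d)| ≤ 2 / x := by
  rw [abs_div, abs_mul, abs_of_pos hx, div_le_div_iff₀ (by positivity) hx]
  nlinarith [abs_nonneg s]

theorem abs_mul_add_div_sq_le {s d d' x M : ℝ} (hx : 0 < x) (hs : |s| ≤ 1) (hd : 1 / 2 ≤ |d|)
    (hdM : |d| ≤ M) (hd'M : |d'| ≤ M / x) :
    |s * (d + x * d') / (x * d) ^ 2| ≤ 8 * M / x ^ 2 := by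
  have hnum : |d + x * d'| ≤ 2 * M := by
    have : |x * d'| ≤ M := by
      rw [abs_mul, abs_of_pos hx]
      exact (mul_le_mul_of_nonneg_left hd'M hx.le).trans_eq (by field_simp)
    linarith [abs_add_le d (x * d')]
  have hden : x ^ 2 / 4 ≤ (x * d) ^ 2 := by
    have hd2 : 1 / 4 ≤ d ^ 2 := by nlinarith [sq_abs d, abs_nonneg d]
    nlinarith [sq_nonneg x]
  have hM : 0 ≤ M := (abs_nonneg d).trans hdM
  rw [abs_div, abs_mul, abs_of_nonneg (sq_nonneg (x * d))]
  calc |s| * |d + x * d'| / (x * d) ^ 2 ≤ 1 * (2 * M) / (x ^ 2 / 4) :=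
        div_le_div₀ (by positivity) (mul_le_mul hs hnum (abs_nonneg _) zero_le_one)
          (by positivity) hden
    _ = 8 * M / x ^ 2 := by field_simp; ring

theorem stmt_18_general (M : ℝ) (ω : ℝ → ℝ) (hω : ContDiff ℝ 2 ω)
    (h1 : ∀ ζ : ℝ, 1 ≤ ζ → deriv ω ζ ≤ -(1 / 2))
    (h2 : ∀ ζ : ℝ, 1 ≤ ζ → |deriv ω ζ| ≤ M)
    (h3 : ∀ ζ : ℝ, 1 ≤ ζ → |deriv (deriv ω) ζ| ≤ M / ζ) :
    ∃ c C : ℝ, 0 < C ∧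
      ∀ η : ℝ, 1 ≤ η →
        |(∫ ζ in (1 : ℝ)..η, Real.cos (ω ζ) / ζ) - c| ≤ C / η := by
  have hω' : ContDiff ℝ 1 (deriv ω) := hω.deriv' (n := 1)
  have hc : Continuous ω := hω.continuous
  have hc' : Continuous (deriv ω) := hω'.continuous
  have hc'' : Continuous (deriv (deriv ω)) := hω'.continuous_deriv le_rfl
  have hlow : ∀ ζ, 1 ≤ ζ → 1 / 2 ≤ |deriv ω ζ| := fun ζ hζ => by
    linarith [h1 ζ hζ, neg_le_abs (deriv ω ζ)]
  have hpos : ∀ ζ : ℝ, 1 ≤ ζ → 0 < ζ := fun ζ hζ => zero_lt_one.trans_le hζ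
  have hne : ∀ ζ, 1 ≤ ζ → ζ * deriv ω ζ ≠ 0 := fun ζ hζ =>
    mul_ne_zero (hpos ζ hζ).ne' (abs_pos.mp (one_half_pos.trans_le (hlow ζ hζ)))
  obtain ⟨c, hconv⟩ := exists_abs_integral_sub_le_of_hasDerivAt (a := 1) zero_lt_one
    (ψ := fun ζ => Real.cos (ω ζ) / ζ)
    (h := fun ζ => -(Real.sin (ω ζ) * (deriv ω ζ + ζ * deriv (deriv ω) ζ) / (ζ * deriv ω ζ) ^ 2))
    (ContinuousOn.div (by fun_prop) (by fun_prop) fun ζ hζ => (hpos ζ hζ).ne')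
    (ContinuousOn.div (by fun_prop) (by fun_prop) fun ζ hζ => pow_ne_zero 2 (hne ζ hζ)).neg
    (fun ζ hζ => by
      simpa only [← sub_eq_add_neg] using hasDerivAt_sin_comp_div_mul_deriv (hpos ζ hζ).ne'
        (right_ne_zero_of_mul (hne ζ hζ)) (hω.differentiable two_ne_zero ζ)
        (hω'.differentiable one_ne_zero ζ))
    (fun ζ hζ => abs_div_mul_le_two_div (hpos ζ hζ) (Real.abs_sin_le_one _) (hlow ζ hζ))
    (fun ζ hζ => (abs_neg _).trans_le <| abs_mul_add_div_sq_le (hpos ζ hζ)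
      (Real.abs_sin_le_one _) (hlow ζ hζ) (h2 ζ hζ) (h3 ζ hζ))
  have hM : 0 ≤ M := (abs_nonneg _).trans (h2 1 le_rfl)
  exact ⟨c, 2 + 8 * M, by positivity, hconv⟩

/-- Non-stationary phase lemma: if `ω` is C² on `[1,∞)` with
`ω'(ζ) ≤ −1/2`, `|ω'(ζ)| ≤ M` and `|ω''(ζ)| ≤ M/ζ` for all `ζ ≥ 1`, then the
oscillatory integral `∫₁^η cos(ω(ζ))/ζ dζ` converges to some constant `c` with rate
`O(1/η)`. -/
theorem stmt_18 (M : ℝ) (hM : 0 < M) (ω : ℝ → ℝ) (hω : ContDiff ℝ 2 ω)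
    (h1 : ∀ ζ : ℝ, 1 ≤ ζ → deriv ω ζ ≤ -(1 / 2))
    (h2 : ∀ ζ : ℝ, 1 ≤ ζ → |deriv ω ζ| ≤ M)
    (h3 : ∀ ζ : ℝ, 1 ≤ ζ → |deriv (deriv ω) ζ| ≤ M / ζ) :
    ∃ c C : ℝ, 0 < C ∧
      ∀ η : ℝ, 1 ≤ η →
        |(∫ ζ in (1 : ℝ)..η, Real.cos (ω ζ) / ζ) - c| ≤ C / η :=
  stmt_18_general M ω hω h1 h2 h3
end
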